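/- arXiv:0903.1999 — 10 statements merged into one kernel-verified Lean document; each statement's English description precedes it below -/
import Mathlib

section
/- Let k be a positive integer, let π be a permutation in I_k, and suppose an element x of π occurs as the i-th smallest element of the image of some embedding of the decreasing permutation δ_k into π. Then the rank of x equals i. Consequently, x occupies the same position (i-th smallest) in every copy of δ_k in π to which it belongs. -/
/-- `π` contains a decreasing subsequence of length `k`. Permutations avoiding
`δ_{k+1}` (i.e. members of `I_k`) are those with `¬ HasDecSeq π (k+1)`. -/
def HasDecSeq {n : ℕ} (π : Equiv.Perm (Fin n)) (k : ℕ) : Prop :=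
  ∃ q : Fin k → Fin n, StrictMono q ∧ StrictAnti fun i => π (q i)

/-- There is a decreasing subsequence of `π` of length `t` whose maximum
(first and topmost) element is the point at position `p`. -/
def DecSeqFrom {n : ℕ} (π : Equiv.Perm (Fin n)) (p : Fin n) (t : ℕ) : Prop :=
  ∃ q : Fin t → Fin n, StrictMono q ∧ (StrictAnti fun i => π (q i)) ∧
    (∀ i, p ≤ q i) ∧ ∃ i, q i = p

/-- The rank of the element of `π` at position `p`: the largest `t` such that this
element occurs as the maximum of a subset of `π` whose pattern is `δ_t`. -/
noncomputable def rankAt {n : ℕ} (π : Equiv.Perm (Fin n)) (p : Fin n) : ℕ :=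
  sSup {t | DecSeqFrom π p t}

/-!
Dropping the `j` points that precede `x` in a copy of `δ_k` leaves a decreasing sequence headed
by `x` of length `k - j`, so `rank x ≥ k - j`. Conversely, those `j` points lie above and to the
left of every point of a decreasing sequence headed by `x`; prepending them to one of length `t`
gives a copy of `δ_{j + t}`, and avoidance of `δ_{k+1}` forces `t ≤ k - j`.
-/

variable {n : ℕ} {π : Equiv.Perm (Fin n)}

lemma HasDecSeq.mono {a b : ℕ} (h : HasDecSeq π b) (hab : a ≤ b) : HasDecSeq π a := by
  obtain ⟨q, hq, hq'⟩ := h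
  exact ⟨q ∘ Fin.castLE hab, hq.comp (Fin.strictMono_castLE hab),
    hq'.comp_strictMono (Fin.strictMono_castLE hab)⟩

lemma hasDecSeq_add {a b : ℕ} {q : Fin a → Fin n} {r : Fin b → Fin n}
    (hq : StrictMono q) (hq' : StrictAnti fun i => π (q i))
    (hr : StrictMono r) (hr' : StrictAnti fun i => π (r i))
    (hqr : ∀ i l, q i < r l ∧ π (r l) < π (q i)) : HasDecSeq π (a + b) := by
  refine ⟨Fin.append q r, fun x y hxy => ?_, fun x y hxy => ?_⟩ <;>
  induction x using Fin.addCases <;> induction y using Fin.addCases <;>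
    simp only [Fin.append_left, Fin.append_right, (Fin.strictMono_castAdd _).lt_iff_lt,
      Fin.natAdd_lt_natAdd_iff] at hxy ⊢
  all_goals first
    | exact hq hxy | exact hr hxy | exact hq' hxy | exact hr' hxy
    | exact (hqr _ _).1 | exact (hqr _ _).2
    | exact absurd hxy <| not_lt.2 <| Fin.le_def.2 <| by
        simp only [Fin.val_natAdd, Fin.val_castAdd]; omega

lemma DecSeqFrom.exists_le {p : Fin n} {t : ℕ} (h : DecSeqFrom π p t) :
    ∃ r : Fin t → Fin n, StrictMono r ∧ (StrictAnti fun i => π (r i)) ∧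
      ∀ l, p ≤ r l ∧ π (r l) ≤ π p := by
  obtain ⟨r, hr, hr', hge, i₀, rfl⟩ := h
  exact ⟨r, hr, hr', fun l => ⟨hge l, hr'.antitone (hr.le_iff_le.mp (hge l))⟩⟩

lemma decSeqFrom_apply_sub {k : ℕ} {q : Fin k → Fin n} (hq : StrictMono q)
    (hq' : StrictAnti fun i => π (q i)) (j : Fin k) :
    DecSeqFrom π (q j) (k - j) := by
  refine ⟨fun m => q ⟨j + m, by omega⟩, fun a b h => hq ?_, fun a b h => hq' ?_,
    fun m => hq.monotone ?_, ⟨0, by omega⟩, congrArg q (Fin.ext (by simp))⟩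
  · exact Fin.mk_lt_mk.2 (Nat.add_lt_add_left h _)
  · exact Fin.mk_lt_mk.2 (Nat.add_lt_add_left h _)
  · exact Fin.le_def.2 (Nat.le_add_right _ _)

lemma hasDecSeq_add_of_decSeqFrom {k : ℕ} {q : Fin k → Fin n} (hq : StrictMono q)
    (hq' : StrictAnti fun i => π (q i)) (j : Fin k) {t : ℕ} (h : DecSeqFrom π (q j) t) :
    HasDecSeq π (j + t) := by
  obtain ⟨r, hr, hr', hle⟩ := h.exists_le
  have hlt (i : Fin j) : Fin.castLE j.isLt.le i < j := i.isLt
  refine hasDecSeq_add (q := fun i => q (Fin.castLE j.isLt.le i))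
    (hq.comp (Fin.strictMono_castLE _)) (hq'.comp_strictMono (Fin.strictMono_castLE _)) hr hr'
    fun i l => ⟨(hq (hlt i)).trans_le (hle l).1, (hle l).2.trans_lt (hq' (hlt i))⟩

lemma rankAt_apply_eq_sub {k : ℕ} {q : Fin k → Fin n} (hq : StrictMono q)
    (hq' : StrictAnti fun i => π (q i)) (hπ : ¬ HasDecSeq π (k + 1)) (j : Fin k) :
    rankAt π (q j) = k - j := by
  have hbdd (t : ℕ) (ht : DecSeqFrom π (q j) t) : t ≤ k - j := by
    by_contra! hlt
    exact hπ ((hasDecSeq_add_of_decSeqFrom hq hq' j ht).mono (by omega))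
  exact le_antisymm (csSup_le ⟨_, decSeqFrom_apply_sub hq hq' j⟩ hbdd)
    (le_csSup ⟨_, hbdd⟩ (decSeqFrom_apply_sub hq hq' j))

theorem rank_in_delta_k_general {n k : ℕ} (π : Equiv.Perm (Fin n))
    (hπ : ¬ HasDecSeq π (k + 1)) (p : Fin n) (i : ℕ)
    (q : Fin k → Fin n) (j : Fin k)
    (hq : StrictMono q) (hq' : StrictAnti fun t => π (q t)) (hqj : q j = p)
    (hi : k - (j : ℕ) = i) :
    rankAt π p = i ∧
      ∀ (q' : Fin k → Fin n) (j' : Fin k), StrictMono q' →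
        (StrictAnti fun t => π (q' t)) → q' j' = p → k - (j' : ℕ) = i := by
  subst hqj hi
  refine ⟨rankAt_apply_eq_sub hq hq' hπ j, fun q' j' hq₁ hq₁' hj' => ?_⟩
  rw [← rankAt_apply_eq_sub hq hq' hπ j, ← hj', rankAt_apply_eq_sub hq₁ hq₁' hπ j']

/-- If `π ∈ I_k` and the element at position `p` occurs as the `i`-th smallest
element of a copy of `δ_k` in `π` (i.e. it is the `j`-th point of the copy, so the
`(k - j)`-th smallest by value), then its rank is `i`; consequently it occupies the
same position in every copy of `δ_k` to which it belongs. -/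
theorem rank_in_delta_k {n k : ℕ} (hk : 0 < k) (π : Equiv.Perm (Fin n))
    (hπ : ¬ HasDecSeq π (k + 1)) (p : Fin n) (i : ℕ)
    (q : Fin k → Fin n) (j : Fin k)
    (hq : StrictMono q) (hq' : StrictAnti fun t => π (q t)) (hqj : q j = p)
    (hi : k - (j : ℕ) = i) :
    rankAt π p = i ∧
      ∀ (q' : Fin k → Fin n) (j' : Fin k), StrictMono q' →
        (StrictAnti fun t => π (q' t)) → q' j' = p → k - (j' : ℕ) = i :=
  rank_in_delta_k_general π hπ p i q j hq hq' hqj hi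
end

section
/- Let π ∈ I_k, let ρ be a k-rigid permutation, and let f, g : ρ → π be two embeddings of ρ in π. For each x ∈ ρ the points f(x) and g(x) have equal rank, hence coincide or form a 12 pattern, so their infimum (the earlier-and-smaller point) and supremum (the later-and-larger point) are defined. Then the maps I(x) = inf(f(x), g(x)) and S(x) = sup(f(x), g(x)) are also embeddings of ρ in π. In particular, the set of embeddings of ρ in π forms a distributive lattice under these pointwise operations. -/
/-- `f` is an embedding (involvement) of the permutation `α` into the permutation `π`:
it is strictly monotone on positions and preserves the relative order of values. -/
def IsEmbedding {m n : ℕ} (α : Equiv.Perm (Fin m)) (π : Equiv.Perm (Fin n))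
    (f : Fin m → Fin n) : Prop :=
  StrictMono f ∧ ∀ a b : Fin m, α a < α b ↔ π (f a) < π (f b)

/-- `π` is `k`-rigid: every element belongs to a subset whose pattern is `δ_k`. -/
def KRigid {n : ℕ} (k : ℕ) (π : Equiv.Perm (Fin n)) : Prop :=
  ∀ p : Fin n, ∃ q : Fin k → Fin n, StrictMono q ∧
    (StrictAnti fun i => π (q i)) ∧ ∃ i, q i = p

/-!
If `p < p'` and `π p' < π p`, prepending `p` to a longest decreasing sequence starting at `p'`
shows that `p` has strictly larger rank. Along a copy of `δ_k` in `π ∈ I_k` the ranks are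
therefore exactly `k, k - 1, …, 1`. Rigidity puts every `x ∈ ρ` in a copy of `δ_k`, which any
embedding carries to a copy of `δ_k` in `π`, so the rank of `f x` depends on `x` alone. Points of
equal rank never form a `21` pattern, so `f x` and `g x` are comparable in both coordinates; then
`π` commutes with the pointwise `min` and `max`, which preserve strict monotonicity.
-/

section Rank

variable {n k : ℕ} {π : Equiv.Perm (Fin n)}

lemma DecSeqFrom.hasDecSeq {p : Fin n} {t : ℕ} (h : DecSeqFrom π p t) : HasDecSeq π t :=
  let ⟨q, hq, hq', _⟩ := h
  ⟨q, hq, hq'⟩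

lemma HasDecSeq.mono_s1 {s t : ℕ} (h : HasDecSeq π t) (hst : s ≤ t) : HasDecSeq π s :=
  let ⟨q, hq, hq'⟩ := h
  ⟨q ∘ Fin.castLE hst, hq.comp (Fin.strictMono_castLE hst),
    hq'.comp_strictMono (Fin.strictMono_castLE hst)⟩

lemma DecSeqFrom.le (hπ : ¬ HasDecSeq π (k + 1)) {p : Fin n} {t : ℕ}
    (h : DecSeqFrom π p t) : t ≤ k := by
  by_contra! hkt
  exact hπ (h.hasDecSeq.mono_s1 hkt)

lemma decSeqFrom_one (p : Fin n) : DecSeqFrom π p 1 :=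
  ⟨fun _ => p, Subsingleton.strictMono _, Subsingleton.strictAnti _, fun _ => le_rfl, 0, rfl⟩

lemma DecSeqFrom.cons {p p' : Fin n} {t : ℕ} (hp : p < p') (hv : π p' < π p)
    (h : DecSeqFrom π p' t) : DecSeqFrom π p (t + 1) := by
  obtain ⟨q, hq, hq', hge, i, hi⟩ := h
  obtain ⟨s, rfl⟩ : ∃ s, t = s + 1 := Nat.exists_eq_add_one.2 (Fin.pos i)
  have hq0 : q 0 = p' := le_antisymm (hi ▸ hq.monotone (Fin.zero_le i)) (hge 0)
  rw [← hq0] at hp hv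
  refine ⟨Matrix.vecCons p q, hq.vecCons hp, ?_, ?_, 0, rfl⟩
  · intro a b hab
    induction a using Fin.cases <;> induction b using Fin.cases
    · exact absurd hab (lt_irrefl _)
    · simpa using (hq'.antitone (Fin.zero_le _)).trans_lt hv
    · exact absurd hab (Fin.not_lt_zero _)
    · simpa using hq' (Fin.succ_lt_succ_iff.1 hab)
  · intro a
    induction a using Fin.cases
    · exact le_rfl
    · exact (hp.trans_le (hq.monotone (Fin.zero_le _))).le

lemma bddAbove_decSeqFrom (hπ : ¬ HasDecSeq π (k + 1)) (p : Fin n) :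
    BddAbove {t | DecSeqFrom π p t} :=
  ⟨k, fun _ ht => ht.le hπ⟩

lemma decSeqFrom_rankAt (hπ : ¬ HasDecSeq π (k + 1)) (p : Fin n) :
    DecSeqFrom π p (rankAt π p) :=
  Nat.sSup_mem ⟨1, decSeqFrom_one p⟩ (bddAbove_decSeqFrom hπ p)

lemma DecSeqFrom.le_rankAt (hπ : ¬ HasDecSeq π (k + 1)) {p : Fin n} {t : ℕ}
    (h : DecSeqFrom π p t) : t ≤ rankAt π p :=
  le_csSup (bddAbove_decSeqFrom hπ p) h

lemma rankAt_lt_rankAt (hπ : ¬ HasDecSeq π (k + 1)) {p p' : Fin n} (hp : p < p')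
    (hv : π p' < π p) : rankAt π p' < rankAt π p :=
  ((decSeqFrom_rankAt hπ p').cons hp hv).le_rankAt hπ

lemma rankAt_eq_sub_of_strictAnti (hπ : ¬ HasDecSeq π (k + 1)) {q : Fin k → Fin n}
    (hq : StrictMono q) (hq' : StrictAnti fun i => π (q i)) (j : Fin k) :
    rankAt π (q j) = k - j := by
  have hpos : ∀ i, 1 ≤ rankAt π (q i) := fun i => (decSeqFrom_one _).le_rankAt hπ
  have hle : ∀ i, rankAt π (q i) ≤ k := fun i => (decSeqFrom_rankAt hπ _).le hπ
  -- `i ↦ k - rank (q i)` is a strictly monotone self-map of `Fin k`, hence the identity.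
  let φ : Fin k → Fin k := fun i => ⟨k - rankAt π (q i), by have := hpos i; have := i.pos; omega⟩
  have hφ : StrictMono φ := fun a b hab => by
    have := rankAt_lt_rankAt hπ (hq hab) (hq' hab)
    simp only [φ, Fin.mk_lt_mk]
    have := hle a
    omega
  have hj : k - rankAt π (q j) = j := congrArg Fin.val (hφ.apply_eq (x := j))
  have := hle j
  omega

theorem comparable_of_rankAt_eq (hπ : ¬ HasDecSeq π (k + 1)) {p p' : Fin n}
    (h : rankAt π p = rankAt π p') :
    (p ≤ p' ∧ π p ≤ π p') ∨ (p' ≤ p ∧ π p' ≤ π p) := by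
  rcases lt_trichotomy p p' with hp | rfl | hp
  · exact .inl ⟨hp.le, le_of_not_gt fun hv => (rankAt_lt_rankAt hπ hp hv).ne h.symm⟩
  · exact .inl ⟨le_rfl, le_rfl⟩
  · exact .inr ⟨hp.le, le_of_not_gt fun hv => (rankAt_lt_rankAt hπ hp hv).ne h⟩

end Rank

theorem StrictMono.min {α β : Type*} [Preorder α] [LinearOrder β] {f g : α → β}
    (hf : StrictMono f) (hg : StrictMono g) : StrictMono fun x => min (f x) (g x) :=
  fun _ _ h => lt_min ((min_le_left _ _).trans_lt (hf h)) ((min_le_right _ _).trans_lt (hg h))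

theorem StrictMono.max {α β : Type*} [Preorder α] [LinearOrder β] {f g : α → β}
    (hf : StrictMono f) (hg : StrictMono g) : StrictMono fun x => max (f x) (g x) :=
  fun _ _ h => max_lt ((hf h).trans_le (le_max_left _ _)) ((hg h).trans_le (le_max_right _ _))

section Embedding

variable {m n k : ℕ} {ρ : Equiv.Perm (Fin m)} {π : Equiv.Perm (Fin n)} {f g : Fin m → Fin n}

theorem isEmbedding_iff :
    IsEmbedding ρ π f ↔ StrictMono f ∧ StrictMono fun i => π (f (ρ.symm i)) := by
  refine and_congr_right fun _ => ⟨fun h a b hab => ?_, fun h a b => ?_⟩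
  · exact (h _ _).1 (by simpa using hab)
  · simpa using (h.lt_iff_lt (a := ρ a) (b := ρ b)).symm

theorem IsEmbedding.strictAnti_comp (hf : IsEmbedding ρ π f) {t : ℕ} {q : Fin t → Fin m}
    (hq' : StrictAnti fun i => ρ (q i)) : StrictAnti fun i => π (f (q i)) :=
  fun _ _ h => (hf.2 _ _).1 (hq' h)

/-- The rank of `f x` in `π` is `k - j`, where `x` sits at index `j` of a copy of `δ_k` in `ρ`;
in particular it does not depend on the embedding `f`. -/
theorem IsEmbedding.rankAt_apply_eq (hπ : ¬ HasDecSeq π (k + 1)) (hrig : KRigid k ρ)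
    (hf : IsEmbedding ρ π f) (hg : IsEmbedding ρ π g) (x : Fin m) :
    rankAt π (f x) = rankAt π (g x) := by
  obtain ⟨q, hq, hq', j, rfl⟩ := hrig x
  exact (rankAt_eq_sub_of_strictAnti hπ (hf.1.comp hq) (hf.strictAnti_comp hq') j).trans
    (rankAt_eq_sub_of_strictAnti hπ (hg.1.comp hq) (hg.strictAnti_comp hq') j).symm

theorem IsEmbedding.comparable (hπ : ¬ HasDecSeq π (k + 1)) (hrig : KRigid k ρ)
    (hf : IsEmbedding ρ π f) (hg : IsEmbedding ρ π g) (x : Fin m) :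
    (f x ≤ g x ∧ π (f x) ≤ π (g x)) ∨ (g x ≤ f x ∧ π (g x) ≤ π (f x)) :=
  comparable_of_rankAt_eq hπ (hf.rankAt_apply_eq hπ hrig hg x)

theorem IsEmbedding.min_of_comparable (hf : IsEmbedding ρ π f) (hg : IsEmbedding ρ π g)
    (hfg : ∀ x, (f x ≤ g x ∧ π (f x) ≤ π (g x)) ∨ (g x ≤ f x ∧ π (g x) ≤ π (f x))) :
    IsEmbedding ρ π fun x => min (f x) (g x) := by
  have hπmin : ∀ x, π (min (f x) (g x)) = min (π (f x)) (π (g x)) := fun x => by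
    rcases hfg x with ⟨h, hv⟩ | ⟨h, hv⟩
    · rw [min_eq_left h, min_eq_left hv]
    · rw [min_eq_right h, min_eq_right hv]
  rw [isEmbedding_iff] at hf hg ⊢
  simp only [hπmin]
  exact ⟨hf.1.min hg.1, hf.2.min hg.2⟩

theorem IsEmbedding.max_of_comparable (hf : IsEmbedding ρ π f) (hg : IsEmbedding ρ π g)
    (hfg : ∀ x, (f x ≤ g x ∧ π (f x) ≤ π (g x)) ∨ (g x ≤ f x ∧ π (g x) ≤ π (f x))) :
    IsEmbedding ρ π fun x => max (f x) (g x) := by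
  have hπmax : ∀ x, π (max (f x) (g x)) = max (π (f x)) (π (g x)) := fun x => by
    rcases hfg x with ⟨h, hv⟩ | ⟨h, hv⟩
    · rw [max_eq_right h, max_eq_right hv]
    · rw [max_eq_left h, max_eq_left hv]
  rw [isEmbedding_iff] at hf hg ⊢
  simp only [hπmax]
  exact ⟨hf.1.max hg.1, hf.2.max hg.2⟩

variable (ρ π) in
def embeddingSublattice (hπ : ¬ HasDecSeq π (k + 1)) (hrig : KRigid k ρ) :
    Sublattice (Fin m → Fin n) where
  carrier := {h | IsEmbedding ρ π h}
  supClosed' _ ha _ hb := ha.max_of_comparable hb (ha.comparable hπ hrig hb)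
  infClosed' _ ha _ hb := ha.min_of_comparable hb (ha.comparable hπ hrig hb)

end Embedding

theorem embeddings_form_distrib_lattice_general {m n k : ℕ}
    (ρ : Equiv.Perm (Fin m)) (π : Equiv.Perm (Fin n))
    (hπ : ¬ HasDecSeq π (k + 1)) (hrig : KRigid k ρ)
    (f g : Fin m → Fin n) (hf : IsEmbedding ρ π f) (hg : IsEmbedding ρ π g) :
    (∀ x, rankAt π (f x) = rankAt π (g x)) ∧
    (∀ x, (f x ≤ g x ∧ π (f x) ≤ π (g x)) ∨ (g x ≤ f x ∧ π (g x) ≤ π (f x))) ∧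
    IsEmbedding ρ π (fun x => min (f x) (g x)) ∧
    IsEmbedding ρ π (fun x => max (f x) (g x)) ∧
    ∃ L : Sublattice (Fin m → Fin n),
      (L : Set (Fin m → Fin n)) = {h | IsEmbedding ρ π h} :=
  have hfg := hf.comparable hπ hrig hg
  ⟨hf.rankAt_apply_eq hπ hrig hg, hfg, hf.min_of_comparable hg hfg,
    hf.max_of_comparable hg hfg, embeddingSublattice ρ π hπ hrig, rfl⟩

/-- Let `π ∈ I_k`, `ρ` be `k`-rigid, and `f, g` be two embeddings of `ρ` in `π`.
Then for each `x`, `f x` and `g x` have equal rank, hence coincide or form a `12`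
pattern (one is weakly earlier and weakly smaller); the pointwise infimum and
supremum maps are again embeddings of `ρ` in `π`; and in particular the set of
embeddings of `ρ` in `π` is (the carrier of) a sublattice of the distributive
lattice `Fin m → Fin n` under these pointwise operations. -/
theorem embeddings_form_distrib_lattice {m n k : ℕ}
    (ρ : Equiv.Perm (Fin m)) (π : Equiv.Perm (Fin n))
    (hπ : ¬ HasDecSeq π (k + 1)) (hρ : ¬ HasDecSeq ρ (k + 1)) (hrig : KRigid k ρ)
    (f g : Fin m → Fin n) (hf : IsEmbedding ρ π f) (hg : IsEmbedding ρ π g) :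
    (∀ x, rankAt π (f x) = rankAt π (g x)) ∧
    (∀ x, (f x ≤ g x ∧ π (f x) ≤ π (g x)) ∨ (g x ≤ f x ∧ π (g x) ≤ π (f x))) ∧
    IsEmbedding ρ π (fun x => min (f x) (g x)) ∧
    IsEmbedding ρ π (fun x => max (f x) (g x)) ∧
    ∃ L : Sublattice (Fin m → Fin n),
      (L : Set (Fin m → Fin n)) = {h | IsEmbedding ρ π h} :=
  embeddings_form_distrib_lattice_general ρ π hπ hrig f g hf hg
end

section
/- If α and β are arbitrary permutations and f, g are two embeddings of α in β such that for every point a of α the images f(a) and g(a) coincide or form a 12 pattern (i.e. their infimum and supremum are defined), then the maps I(a) = inf(f(a), g(a)) and S(a) = sup(f(a), g(a)) are also embeddings of α in β. -/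
/-- If `f, g` are embeddings of `α` in `β` such that for every point `a` the images
`f a` and `g a` coincide or form a `12` pattern (one is weakly earlier and weakly
smaller than the other), then the pointwise infimum map (sending `a` to the
earlier-and-smaller of `f a` and `g a`) and the pointwise supremum map (sending `a`
to the later-and-larger one) are also embeddings of `α` in `β`. -/
theorem inf_sup_of_embeddings {m n : ℕ}
    (α : Equiv.Perm (Fin m)) (β : Equiv.Perm (Fin n))
    (f g : Fin m → Fin n) (hf : IsEmbedding α β f) (hg : IsEmbedding α β g)
    (hcomp : ∀ a, (f a ≤ g a ∧ β (f a) ≤ β (g a)) ∨ (g a ≤ f a ∧ β (g a) ≤ β (f a))) :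
    IsEmbedding α β (fun a => min (f a) (g a)) ∧
    IsEmbedding α β (fun a => max (f a) (g a)) := by
  obtain ⟨hfm, hfv⟩ := hf
  obtain ⟨hgm, hgv⟩ := hg
  have keymin : ∀ a, β (min (f a) (g a)) = min (β (f a)) (β (g a)) := by
    intro a
    rcases hcomp a with ⟨h1, h2⟩ | ⟨h1, h2⟩
    · rw [min_eq_left h1, min_eq_left h2]
    · rw [min_eq_right h1, min_eq_right h2]
  have keymax : ∀ a, β (max (f a) (g a)) = max (β (f a)) (β (g a)) := by
    intro a
    rcases hcomp a with ⟨h1, h2⟩ | ⟨h1, h2⟩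
    · rw [max_eq_right h1, max_eq_right h2]
    · rw [max_eq_left h1, max_eq_left h2]
  constructor
  · constructor
    · intro a b hab
      exact lt_min ((min_le_left _ _).trans_lt (hfm hab))
        ((min_le_right _ _).trans_lt (hgm hab))
    · intro a b
      simp only [keymin]
      constructor
      · intro h
        exact lt_min ((min_le_left _ _).trans_lt ((hfv a b).1 h))
          ((min_le_right _ _).trans_lt ((hgv a b).1 h))
      · intro h
        by_contra hn
        push_neg at hn
        have h1 : β (f b) ≤ β (f a) := by
          by_contra h'
          push_neg at h'
          exact absurd ((hfv a b).2 h') (not_lt.2 hn)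
        have h2 : β (g b) ≤ β (g a) := by
          by_contra h'
          push_neg at h'
          exact absurd ((hgv a b).2 h') (not_lt.2 hn)
        exact absurd h (not_lt.2 (le_min ((min_le_left _ _).trans h1)
          ((min_le_right _ _).trans h2)))
  · constructor
    · intro a b hab
      exact max_lt ((hfm hab).trans_le (le_max_left _ _))
        ((hgm hab).trans_le (le_max_right _ _))
    · intro a b
      simp only [keymax]
      constructor
      · intro h
        exact max_lt (((hfv a b).1 h).trans_le (le_max_left _ _))
          (((hgv a b).1 h).trans_le (le_max_right _ _))
      · intro h
        by_contra hn
        push_neg at hn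
        have h1 : β (f b) ≤ β (f a) := by
          by_contra h'
          push_neg at h'
          exact absurd ((hfv a b).2 h') (not_lt.2 hn)
        have h2 : β (g b) ≤ β (g a) := by
          by_contra h'
          push_neg at h'
          exact absurd ((hgv a b).2 h') (not_lt.2 hn)
        exact absurd h (not_lt.2 (max_le (h1.trans (le_max_left _ _))
          (h2.trans (le_max_right _ _))))
end

section
/- Let π ∈ I_k and let ρ be a k-rigid permutation with ρ ≼ π. Then there exists an embedding of ρ in π (the 'leftmost-bottommost' embedding) which simultaneously minimizes, among all embeddings of ρ in π, both the position and the value of the image of every element of ρ. -/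
/-- Values: embeddings reverse-preserve ≤ along a decreasing pattern. -/
lemma emb_val_le {m n : ℕ} {ρ : Equiv.Perm (Fin m)} {π : Equiv.Perm (Fin n)}
    {f : Fin m → Fin n} (hf : IsEmbedding ρ π f) {a b : Fin m}
    (h : ρ b ≤ ρ a) : π (f b) ≤ π (f a) := by
  by_contra hc
  exact absurd ((hf.2 a b).2 (not_le.1 hc)) (not_lt.2 h)

lemma key_lemma {m n k : ℕ} {ρ : Equiv.Perm (Fin m)} {π : Equiv.Perm (Fin n)}
    (hπ : ¬ HasDecSeq π (k + 1)) (hrig : KRigid k ρ)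
    {f g : Fin m → Fin n} (hf : IsEmbedding ρ π f) (hg : IsEmbedding ρ π g)
    (x : Fin m) (hlt : f x < g x) : π (f x) < π (g x) := by
  by_contra hcon
  have hne : π (f x) ≠ π (g x) := fun h => absurd (π.injective h) (ne_of_lt hlt)
  have hgt : π (g x) < π (f x) := lt_of_le_of_ne (not_lt.1 hcon) hne.symm
  obtain ⟨q, hq, hv, i, hqi⟩ := hrig x
  have hik : (i : ℕ) < k := i.isLt
  apply hπ
  refine ⟨fun j => if hj : (j : ℕ) ≤ (i : ℕ)
      then f (q ⟨(j : ℕ), by omega⟩)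
      else g (q ⟨(j : ℕ) - 1, by have := j.isLt; omega⟩), ?_, ?_⟩
  · intro a b hab
    have hab' : (a : ℕ) < (b : ℕ) := hab
    dsimp only
    split_ifs with h1 h2 h2
    · exact hf.1 (hq (show ((⟨(a:ℕ),_⟩:Fin k)) < ⟨(b:ℕ),_⟩ from hab'))
    · calc f (q ⟨(a:ℕ),_⟩) ≤ f (q i) := by
            apply hf.1.monotone; apply hq.monotone
            exact (show ((⟨(a:ℕ),_⟩:Fin k)) ≤ i from h1)
        _ = f x := by rw [hqi]
        _ < g x := hlt
        _ = g (q i) := by rw [hqi]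
        _ ≤ g (q ⟨(b:ℕ)-1,_⟩) := by
            apply hg.1.monotone; apply hq.monotone
            exact (show i ≤ (⟨(b:ℕ)-1,_⟩:Fin k) from by
              simp only [Fin.le_def]; omega)
    · omega
    · exact hg.1 (hq (show ((⟨(a:ℕ)-1,_⟩:Fin k)) < ⟨(b:ℕ)-1,_⟩ from by
        simp only [Fin.lt_def]; omega))
  · intro a b hab
    have hab' : (a : ℕ) < (b : ℕ) := hab
    dsimp only
    split_ifs with h1 h2 h2
    · exact (hf.2 _ _).1 (hv (show ((⟨(a:ℕ),_⟩:Fin k)) < ⟨(b:ℕ),_⟩ from hab'))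
    · omega
    · calc π (g (q ⟨(b:ℕ)-1,_⟩)) ≤ π (g (q i)) := by
            apply emb_val_le hg
            exact hv.antitone (show i ≤ (⟨(b:ℕ)-1,_⟩:Fin k) from by
              simp only [Fin.le_def]; omega)
        _ = π (g x) := by rw [hqi]
        _ < π (f x) := hgt
        _ = π (f (q i)) := by rw [hqi]
        _ ≤ π (f (q ⟨(a:ℕ),_⟩)) := by
            apply emb_val_le hf
            exact hv.antitone (show ((⟨(a:ℕ),_⟩:Fin k)) ≤ i from h2)
    · exact (hg.2 _ _).1 (hv (show ((⟨(a:ℕ)-1,_⟩:Fin k)) < ⟨(b:ℕ)-1,_⟩ from by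
        simp only [Fin.lt_def]; omega))

lemma key_le {m n k : ℕ} {ρ : Equiv.Perm (Fin m)} {π : Equiv.Perm (Fin n)}
    (hπ : ¬ HasDecSeq π (k + 1)) (hrig : KRigid k ρ)
    {f g : Fin m → Fin n} (hf : IsEmbedding ρ π f) (hg : IsEmbedding ρ π g)
    (x : Fin m) (hle : f x ≤ g x) : π (f x) ≤ π (g x) := by
  rcases eq_or_lt_of_le hle with h | h
  · rw [h]
  · exact (key_lemma hπ hrig hf hg x h).le

lemma meet_emb {m n k : ℕ} {ρ : Equiv.Perm (Fin m)} {π : Equiv.Perm (Fin n)}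
    (hπ : ¬ HasDecSeq π (k + 1)) (hrig : KRigid k ρ)
    {f g : Fin m → Fin n} (hf : IsEmbedding ρ π f) (hg : IsEmbedding ρ π g) :
    IsEmbedding ρ π (fun x => min (f x) (g x)) := by
  have hval : ∀ x, π (min (f x) (g x)) = min (π (f x)) (π (g x)) := by
    intro x
    rcases le_total (f x) (g x) with h | h
    · rw [min_eq_left h, min_eq_left (key_le hπ hrig hf hg x h)]
    · rw [min_eq_right h, min_eq_right (key_le hπ hrig hg hf x h)]
  constructor
  · intro a b hab
    exact lt_min ((min_le_left _ _).trans_lt (hf.1 hab))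
      ((min_le_right _ _).trans_lt (hg.1 hab))
  · intro a b
    have fwd : ∀ a b : Fin m, ρ a < ρ b → π (min (f a) (g a)) < π (min (f b) (g b)) := by
      intro a b h
      rw [hval, hval]
      exact lt_min ((min_le_left _ _).trans_lt ((hf.2 a b).1 h))
        ((min_le_right _ _).trans_lt ((hg.2 a b).1 h))
    refine ⟨fwd a b, fun h => ?_⟩
    rcases lt_trichotomy (ρ a) (ρ b) with h' | h' | h'
    · exact h'
    · exact absurd h (by rw [ρ.injective h']; exact lt_irrefl _)
    · exact absurd h (not_lt.2 (fwd b a h').le)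

/-- If `π ∈ I_k`, `ρ` is `k`-rigid and `ρ ≼ π`, then there is a
"leftmost-bottommost" embedding of `ρ` in `π`, simultaneously minimizing the
position and the value of the image of every element among all embeddings. -/
theorem leftmost_bottommost_embedding {m n k : ℕ}
    (ρ : Equiv.Perm (Fin m)) (π : Equiv.Perm (Fin n))
    (hπ : ¬ HasDecSeq π (k + 1)) (hρ : ¬ HasDecSeq ρ (k + 1)) (hrig : KRigid k ρ)
    (hinv : ∃ f, IsEmbedding ρ π f) :
    ∃ f, IsEmbedding ρ π f ∧
      ∀ g, IsEmbedding ρ π g → ∀ x, f x ≤ g x ∧ π (f x) ≤ π (g x) := by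
  classical
  obtain ⟨f0, hf0⟩ := hinv
  obtain ⟨f, hfS, hmin⟩ := Finset.exists_min_image
    (Finset.univ.filter fun f => IsEmbedding ρ π f)
    (fun f => ∑ x, ((f x : ℕ))) ⟨f0, by simp [hf0]⟩
  have hf : IsEmbedding ρ π f := (Finset.mem_filter.1 hfS).2
  refine ⟨f, hf, fun g hg x => ?_⟩
  set h : Fin m → Fin n := fun y => min (f y) (g y) with hhdef
  have hh : IsEmbedding ρ π h := meet_emb hπ hrig hf hg
  have hsum : ∑ y, ((f y : ℕ)) ≤ ∑ y, ((h y : ℕ)) :=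
    hmin h (Finset.mem_filter.2 ⟨Finset.mem_univ _, hh⟩)
  have heq : ∀ y, h y = f y := by
    intro y
    by_contra hne
    have hlt : (h y : ℕ) < (f y : ℕ) :=
      lt_of_le_of_ne (min_le_left _ _) (fun e => hne (Fin.ext e))
    have : ∑ y, ((h y : ℕ)) < ∑ y, ((f y : ℕ)) :=
      Finset.sum_lt_sum (fun i _ => Fin.le_iff_val_le_val.1 (min_le_left _ _))
        ⟨y, Finset.mem_univ _, hlt⟩
    omega
  have hfx : f x ≤ g x := (heq x) ▸ min_le_right (f x) (g x)
  exact ⟨hfx, key_le hπ hrig hf hg x hfx⟩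
end

section
/- For any two permutation classes C and D, the growth rate of their merge satisfies s(M(C, D)) ≤ (√s(C) + √s(D))². -/
open Filter

/-- A permutation of arbitrary (finite) length. -/
abbrev PermSig := Σ n : ℕ, Equiv.Perm (Fin n)

/-- `α ≼ π`: the pattern `α` is involved in `π`. -/
def Involves (α π : PermSig) : Prop := ∃ f, IsEmbedding α.2 π.2 f

/-- The class of permutations avoiding every pattern in `X`. -/
def AvClass (X : Set PermSig) : Set PermSig := {π | ∀ α ∈ X, ¬ Involves α π}

/-- A pattern class: a set of permutations closed downward under involvement. -/
def IsPatternClass (C : Set PermSig) : Prop :=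
  ∀ α π : PermSig, Involves α π → π ∈ C → α ∈ C

/-- The number of permutations of length `n` in `C`. -/
noncomputable def classCount (C : Set PermSig) (n : ℕ) : ℕ :=
  Nat.card {π : Equiv.Perm (Fin n) // (⟨n, π⟩ : PermSig) ∈ C}

/-- The (upper) growth rate `s(C) = limsup |C ∩ S_n|^{1/n}`, valued in `ℝ≥0∞`. -/
noncomputable def growthRate (C : Set PermSig) : ENNReal :=
  Filter.atTop.limsup fun n : ℕ => (classCount C n : ENNReal) ^ (1 / (n : ℝ))

/-- The class `I_k = Av(δ_{k+1})` of permutations with no decreasing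
subsequence of length `k+1`. -/
def IkClass (k : ℕ) : Set PermSig := {π | ¬ HasDecSeq π.2 (k + 1)}

/-- `f` and `g` witness `π` as a merge of `α` and `β`: both are embeddings and
their ranges partition the points of `π`. -/
def IsMergeVia {a b n : ℕ} (α : Equiv.Perm (Fin a)) (β : Equiv.Perm (Fin b))
    (π : Equiv.Perm (Fin n)) (f : Fin a → Fin n) (g : Fin b → Fin n) : Prop :=
  IsEmbedding α π f ∧ IsEmbedding β π g ∧ ∀ x : Fin n, (∃ i, f i = x) ↔ ¬∃ j, g j = x

/-- The merge `M(C, D)` of two sets of permutations. -/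
def MergeClass (C D : Set PermSig) : Set PermSig :=
  {π | ∃ α ∈ C, ∃ β ∈ D, ∃ f g, IsMergeVia α.2 β.2 π.2 f g}

/-- Number of indices `c` with `c+1 < n` such that exactly one of the points
`c`, `c+1` lies in `S`. -/
noncomputable def posChanges {n : ℕ} (S : Set (Fin n)) : ℕ :=
  Set.ncard {c : Fin n | ∃ h : (c : ℕ) + 1 < n, ¬ (c ∈ S ↔ (⟨(c : ℕ) + 1, h⟩ : Fin n) ∈ S)}

/-- Total number of type changes, by position and by value, of the merge of `π`
whose first part occupies the set of positions `S`. -/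
noncomputable def typeChanges {n : ℕ} (π : Equiv.Perm (Fin n)) (S : Set (Fin n)) : ℕ :=
  posChanges S + posChanges ((fun x => π x) '' S)

/-- The `B`-bounded merge `M_B(C, D)`: merges of a member of `C` with a member of
`D` having at most `B` type changes in total, by position or by value. -/
def BMergeClass (B : ℕ) (C D : Set PermSig) : Set PermSig :=
  {π | ∃ α ∈ C, ∃ β ∈ D, ∃ f g, IsMergeVia α.2 β.2 π.2 f g ∧
    typeChanges π.2 (Set.range f) ≤ B}

/-- The direct sum of two permutations. -/
def dsum {a b : ℕ} (α : Equiv.Perm (Fin a)) (β : Equiv.Perm (Fin b)) :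
    Equiv.Perm (Fin (a + b)) :=
  finSumFinEquiv.symm.trans ((Equiv.sumCongr α β).trans finSumFinEquiv)

/-- The direct sum `α ⊕ β` of two permutations of arbitrary lengths. -/
def DSum (α β : PermSig) : PermSig := ⟨α.1 + β.1, dsum α.2 β.2⟩

/-- The increasing permutation `ι_m` of length `m`. -/
def iotaSig (m : ℕ) : PermSig := ⟨m, 1⟩

/-- The direct sum of a list of permutations. -/
def DSumList (l : List PermSig) : PermSig := l.foldr DSum (iotaSig 0)

/-- A (nonempty) permutation that is not the direct sum of two nonempty permutations. -/
def PlusIndec (ρ : PermSig) : Prop :=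
  ρ.1 ≠ 0 ∧ ∀ α β : PermSig, α.1 ≠ 0 → β.1 ≠ 0 → ρ ≠ DSum α β

/-- `ρ = red(π)`: writing `π = ι_{m₀} ⊕ ρ₁ ⊕ ι_{m₁} ⊕ ⋯ ⊕ ρ_c ⊕ ι_{m_c}` with each
`ρ_i` plus indecomposable of length at least 2, the rigid reduction of `π` is
`ρ = ρ₁ ⊕ ⋯ ⊕ ρ_c`. -/
def IsRigidReductionOf (ρ π : PermSig) : Prop :=
  ∃ (m₀ : ℕ) (pairs : List (PermSig × ℕ)),
    (∀ p ∈ pairs, PlusIndec p.1 ∧ 2 ≤ p.1.1) ∧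
    π = DSum (iotaSig m₀) (DSumList (pairs.map fun p => DSum p.1 (iotaSig p.2))) ∧
    ρ = DSumList (pairs.map Prod.fst)

/-! A merge of `α ∈ C` of length `k` and `β ∈ D` of length `n - k` is determined by `α`, `β`
and the sets of positions and of values occupied by `α`, so
`|M(C, D) ∩ S_n| ≤ ∑ₖ C(n, k)² |C ∩ S_k| |D ∩ S_{n-k}|`. For `x > s(C)` and `y > s(D)` there
are constants with `|C ∩ S_k| ≤ K xᵏ` and `|D ∩ S_k| ≤ L yᵏ`, so the sum is at most
`K L (∑ₖ C(n, k) √xᵏ √y^{n-k})² = K L (√x + √y)^{2n}`; letting `x ↓ s(C)` and `y ↓ s(D)`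
gives the bound. -/

open Finset ENNReal

lemma exists_le_mul_pow_of_limsup_rpow_lt {u : ℕ → ℝ≥0∞} (hu : ∀ n, u n ≠ ⊤) {x : ℝ≥0∞}
    (hx : x ≠ ⊤) (h : limsup (fun n : ℕ => u n ^ (1 / (n : ℝ))) atTop < x) :
    ∃ K : ℝ≥0∞, K ≠ ⊤ ∧ ∀ n, u n ≤ K * x ^ n := by
  have hx0 : x ≠ 0 := (h.trans_le' bot_le).ne'
  obtain ⟨N, hN⟩ :=
    eventually_atTop.1 ((eventually_lt_of_limsup_lt h).and (eventually_gt_atTop 0))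
  refine ⟨1 + ∑ k ∈ range N, u k / x ^ k, ?_, fun n => ?_⟩
  · exact add_ne_top.2 ⟨one_ne_top, sum_ne_top.2 fun k _ =>
      div_ne_top (hu k) (pow_ne_zero k hx0)⟩
  rcases lt_or_ge n N with hn | hn
  · calc u n = u n / x ^ n * x ^ n :=
          (ENNReal.div_mul_cancel (pow_ne_zero n hx0) (pow_ne_top hx)).symm
      _ ≤ _ := by
        gcongr
        exact (single_le_sum (f := fun k => u k / x ^ k) (fun _ _ => zero_le)
          (mem_range.2 hn)).trans le_add_self
  · obtain ⟨hlt, hpos⟩ := hN n hn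
    rw [one_div, rpow_inv_lt_iff (by positivity), rpow_natCast] at hlt
    exact hlt.le.trans (le_mul_of_one_le_left' le_self_add)

lemma limsup_rpow_le_of_le_mul_pow {u : ℕ → ℝ≥0∞} {K R : ℝ≥0∞} (hK : K ≠ ⊤)
    (hu : ∀ n, u n ≤ K * R ^ n) : limsup (fun n : ℕ => u n ^ (1 / (n : ℝ))) atTop ≤ R := by
  refine le_of_forall_lt_one_mul_le fun a ha => ?_
  rcases eq_or_ne a 0 with rfl | ha0
  · simp
  have hlimsup : limsup (fun n : ℕ => u n ^ (1 / (n : ℝ))) atTop ≤ a⁻¹ * R := by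
    refine limsup_le_of_le (by isBoundedDefault) ?_
    filter_upwards [eventually_pow_one_div_le hK (ENNReal.one_lt_inv.2 ha), eventually_gt_atTop 0]
      with n hKn hn
    calc u n ^ (1 / (n : ℝ)) ≤ (K * R ^ n) ^ (1 / (n : ℝ)) := by gcongr; exact hu n
      _ = K ^ (1 / (n : ℝ)) * R := by
        rw [mul_rpow_of_nonneg _ _ (by positivity), ← rpow_natCast, ← rpow_mul,
          mul_one_div_cancel (by positivity), rpow_one]
      _ ≤ a⁻¹ * R := by gcongr
  calc a * limsup (fun n : ℕ => u n ^ (1 / (n : ℝ))) atTop ≤ a * (a⁻¹ * R) := by gcongr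
    _ = R := by rw [← mul_assoc, ENNReal.mul_inv_cancel ha0 (ha.trans_le le_top).ne, one_mul]

namespace IsEmbedding

variable {m n : ℕ} {α : Equiv.Perm (Fin m)} {π π' : Equiv.Perm (Fin n)} {f f' : Fin m → Fin n}

lemma strictMono_values (h : IsEmbedding α π f) : StrictMono fun i => π (f (α.symm i)) :=
  fun i j hij => (h.2 _ _).1 (by simpa using hij)

lemma range_values : Set.range (fun i => π (f (α.symm i))) = π '' Set.range f := by
  rw [show (fun i => π (f (α.symm i))) = (π ∘ f) ∘ α.symm from rfl, EquivLike.range_comp,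
    Set.range_comp]

lemma eq_of_ranges_eq (h : IsEmbedding α π f) (h' : IsEmbedding α π' f')
    (hpos : Set.range f = Set.range f') (hval : π '' Set.range f = π' '' Set.range f') :
    f = f' ∧ ∀ i, π (f i) = π' (f' i) := by
  have hvalues := (h.strictMono_values.range_inj h'.strictMono_values).1
    (by rw [range_values, range_values, hval])
  exact ⟨(h.1.range_inj h'.1).1 hpos, fun i => by simpa using congrFun hvalues (α i)⟩

end IsEmbedding

namespace IsMergeVia

variable {a b n : ℕ} {α : Equiv.Perm (Fin a)} {β : Equiv.Perm (Fin b)}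
  {π π' : Equiv.Perm (Fin n)} {f f' : Fin a → Fin n} {g g' : Fin b → Fin n}

lemma range_snd (h : IsMergeVia α β π f g) : Set.range g = (Set.range f)ᶜ := by
  ext x
  exact iff_not_comm.1 (h.2.2 x)

lemma add_eq (h : IsMergeVia α β π f g) : a + b = n := by
  have hbij : Function.Bijective (Sum.elim f g) :=
    ⟨h.1.1.injective.sumElim h.2.1.1.injective fun i j hij => (h.2.2 _).1 ⟨i, hij⟩ ⟨j, rfl⟩,
      by rw [← Set.range_eq_univ, Set.Sum.elim_range, h.range_snd, Set.union_compl_self]⟩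
  simpa using Fintype.card_of_bijective hbij

lemma eq_of_ranges_eq (h : IsMergeVia α β π f g) (h' : IsMergeVia α β π' f' g')
    (hpos : Set.range f = Set.range f') (hval : π '' Set.range f = π' '' Set.range f') :
    π = π' := by
  obtain ⟨rfl, hfst⟩ := h.1.eq_of_ranges_eq h'.1 hpos hval
  obtain ⟨rfl, hsnd⟩ := h.2.1.eq_of_ranges_eq h'.2.1 (by rw [h.range_snd, h'.range_snd])
    (by rw [h.range_snd, h'.range_snd, Set.image_compl_eq π.bijective,
      Set.image_compl_eq π'.bijective, hval])
  refine Equiv.ext fun x => ?_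
  by_cases hx : x ∈ Set.range f
  · obtain ⟨i, rfl⟩ := hx
    exact hfst i
  · obtain ⟨j, rfl⟩ : x ∈ Set.range g := h.range_snd ▸ hx
    exact hsnd j

end IsMergeVia

abbrev MergeCode (C D : Set PermSig) (n : ℕ) : Type :=
  Σ p : antidiagonal n,
    ({S : Finset (Fin n) // S.card = p.1.1} × {T : Finset (Fin n) // T.card = p.1.1}) ×
      ({α : Equiv.Perm (Fin p.1.1) // ⟨_, α⟩ ∈ C} × {β : Equiv.Perm (Fin p.1.2) // ⟨_, β⟩ ∈ D})

def EncodesMerge {C D : Set PermSig} {n : ℕ} (π : Equiv.Perm (Fin n)) :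
    MergeCode C D n → Prop
  | ⟨_, (S, T), α, β⟩ => ∃ f g, IsMergeVia α.1 β.1 π f g ∧
      (S.1 : Set (Fin n)) = Set.range f ∧ (T.1 : Set (Fin n)) = π '' Set.range f

section MergeCount

variable {C D : Set PermSig} {n : ℕ}

lemma EncodesMerge.unique {π π' : Equiv.Perm (Fin n)} {t : MergeCode C D n}
    (h : EncodesMerge π t) (h' : EncodesMerge π' t) : π = π' := by
  obtain ⟨_, ⟨S, T⟩, α, β⟩ := t
  obtain ⟨f, g, hm, hS, hT⟩ := h
  obtain ⟨f', g', hm', hS', hT'⟩ := h'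
  exact hm.eq_of_ranges_eq hm' (hS.symm.trans hS') (hT.symm.trans hT')

lemma exists_encodesMerge {π : Equiv.Perm (Fin n)} (hπ : ⟨n, π⟩ ∈ MergeClass C D) :
    ∃ t : MergeCode C D n, EncodesMerge π t := by
  classical
  obtain ⟨⟨a, α⟩, hα, ⟨b, β⟩, hβ, f, g, hm⟩ := hπ
  have hinj : Function.Injective (π ∘ f) := π.injective.comp hm.1.1.injective
  refine ⟨⟨⟨(a, b), mem_antidiagonal.2 hm.add_eq⟩,
    (⟨univ.image f, ?_⟩, ⟨univ.image (π ∘ f), ?_⟩), ⟨α, hα⟩, ⟨β, hβ⟩⟩, f, g, hm, ?_, ?_⟩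
  · simp [card_image_of_injective _ hm.1.1.injective]
  · simp [card_image_of_injective _ hinj]
  · simp
  · rw [coe_image, coe_univ, Set.image_univ, Set.range_comp]

lemma card_mergeCode : Nat.card (MergeCode C D n) =
    ∑ p ∈ antidiagonal n, n.choose p.1 ^ 2 * classCount C p.1 * classCount D p.2 := by
  classical
  rw [Nat.card_sigma, ← sum_coe_sort (antidiagonal n)]
  refine sum_congr rfl fun p _ => ?_
  simp only [Nat.card_eq_fintype_card, Fintype.card_prod, Fintype.card_finset_len,
    Fintype.card_fin, classCount]
  ring

end MergeCount

lemma classCount_mergeClass_le (C D : Set PermSig) (n : ℕ) :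
    classCount (MergeClass C D) n ≤
      ∑ p ∈ antidiagonal n, n.choose p.1 ^ 2 * classCount C p.1 * classCount D p.2 := by
  choose code hcode using
    fun π : {π : Equiv.Perm (Fin n) // (⟨n, π⟩ : PermSig) ∈ MergeClass C D} =>
      exists_encodesMerge π.2
  rw [← card_mergeCode]
  exact Nat.card_le_card_of_injective code fun π π' hππ' =>
    Subtype.ext ((hcode π).unique (hππ' ▸ hcode π'))

lemma sum_choose_sq_mul_sq_pow_le (a b : ℝ≥0∞) (n : ℕ) :
    ∑ p ∈ antidiagonal n, (n.choose p.1 : ℝ≥0∞) ^ 2 * (a ^ 2) ^ p.1 * (b ^ 2) ^ p.2 ≤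
      ((a + b) ^ 2) ^ n :=
  calc _ = ∑ p ∈ antidiagonal n, ((n.choose p.1 : ℝ≥0∞) * a ^ p.1 * b ^ p.2) ^ 2 :=
        sum_congr rfl fun p _ => by ring
    _ ≤ (∑ p ∈ antidiagonal n, (n.choose p.1 : ℝ≥0∞) * a ^ p.1 * b ^ p.2) ^ 2 :=
        sum_sq_le_sq_sum_of_nonneg fun _ _ => zero_le
    _ = ((a + b) ^ 2) ^ n := by
        rw [← pow_mul, pow_mul', (Commute.all a b).add_pow']
        simp only [nsmul_eq_mul, mul_assoc]

theorem growthRate_mergeClass_le_of_lt {C D : Set PermSig} {x y : ℝ≥0∞} (hx : x ≠ ⊤)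
    (hy : y ≠ ⊤) (hCx : growthRate C < x) (hDy : growthRate D < y) :
    growthRate (MergeClass C D) ≤ (x ^ ((1 : ℝ) / 2) + y ^ ((1 : ℝ) / 2)) ^ 2 := by
  obtain ⟨K, hK, hCK⟩ :=
    exists_le_mul_pow_of_limsup_rpow_lt (fun n => natCast_ne_top (classCount C n)) hx hCx
  obtain ⟨L, hL, hDL⟩ :=
    exists_le_mul_pow_of_limsup_rpow_lt (fun n => natCast_ne_top (classCount D n)) hy hDy
  have hsq (z : ℝ≥0∞) : (z ^ ((1 : ℝ) / 2)) ^ 2 = z := by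
    simpa using rpow_inv_natCast_pow two_ne_zero z
  refine limsup_rpow_le_of_le_mul_pow (mul_ne_top hK hL) fun n => ?_
  calc (classCount (MergeClass C D) n : ℝ≥0∞)
      ≤ ∑ p ∈ antidiagonal n, (n.choose p.1 : ℝ≥0∞) ^ 2 * classCount C p.1 * classCount D p.2 :=
        mod_cast classCount_mergeClass_le C D n
    _ ≤ ∑ p ∈ antidiagonal n, (n.choose p.1 : ℝ≥0∞) ^ 2 * (K * x ^ p.1) * (L * y ^ p.2) := by
        gcongr with p
        exacts [hCK _, hDL _]
    _ = K * L * ∑ p ∈ antidiagonal n, (n.choose p.1 : ℝ≥0∞) ^ 2 *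
          ((x ^ ((1 : ℝ) / 2)) ^ 2) ^ p.1 * ((y ^ ((1 : ℝ) / 2)) ^ 2) ^ p.2 := by
        simp only [hsq, mul_sum]
        exact sum_congr rfl fun _ _ => by ring
    _ ≤ K * L * ((x ^ ((1 : ℝ) / 2) + y ^ ((1 : ℝ) / 2)) ^ 2) ^ n := by
        gcongr
        exact sum_choose_sq_mul_sq_pow_le _ _ n

theorem growthRate_merge_le_general (C D : Set PermSig) :
    growthRate (MergeClass C D) ≤
      (growthRate C ^ ((1 : ℝ) / 2) + growthRate D ^ ((1 : ℝ) / 2)) ^ (2 : ℕ) := by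
  rcases eq_or_ne (growthRate C) ⊤ with hC | hC
  · simp [hC]
  rcases eq_or_ne (growthRate D) ⊤ with hD | hD
  · simp [hD]
  have hcont : Continuous fun ε : ℝ≥0∞ =>
      ((growthRate C + ε) ^ ((1 : ℝ) / 2) + (growthRate D + ε) ^ ((1 : ℝ) / 2)) ^ 2 := by
    fun_prop
  have hlim := (hcont.tendsto 0).comp ENNReal.tendsto_inv_nat_nhds_zero
  rw [add_zero, add_zero] at hlim
  refine ge_of_tendsto hlim (eventually_atTop.2 ⟨1, fun m hm => ?_⟩)
  have hm0 : (m : ℝ≥0∞)⁻¹ ≠ 0 := by simp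
  have hmt : (m : ℝ≥0∞)⁻¹ ≠ ⊤ := by simpa using Nat.one_le_iff_ne_zero.1 hm
  exact growthRate_mergeClass_le_of_lt (add_ne_top.2 ⟨hC, hmt⟩) (add_ne_top.2 ⟨hD, hmt⟩)
    (lt_add_right hC hm0) (lt_add_right hD hm0)

/-- For any two permutation classes `C` and `D`,
`s(M(C,D)) ≤ (√s(C) + √s(D))²`. -/
theorem growthRate_merge_le (C D : Set PermSig)
    (hC : IsPatternClass C) (hD : IsPatternClass D) :
    growthRate (MergeClass C D) ≤
      (growthRate C ^ ((1 : ℝ) / 2) + growthRate D ^ ((1 : ℝ) / 2)) ^ (2 : ℕ) :=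
  growthRate_merge_le_general C D
end

section
/- Let C and D be sets of permutations with c_n = |C ∩ S_n| and d_n = |D ∩ S_n|, and let M_n = |M(C, D) ∩ S_n|. Then for all n, M_n ≤ Σ_{k=0}^{n} C(n,k)² · c_k · d_{n−k}, where C(n,k) is the binomial coefficient. -/
open Filter

section aux

variable {a b n : ℕ} {α : Equiv.Perm (Fin a)} {β : Equiv.Perm (Fin b)}
  {π π' : Equiv.Perm (Fin n)} {f f' : Fin a → Fin n} {g g' : Fin b → Fin n}

lemma merge_rangeg (h : IsMergeVia α β π f g) : Set.range g = (Set.range f)ᶜ := by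
  ext x
  have := h.2.2 x
  simp only [Set.mem_compl_iff, Set.mem_range]
  tauto

lemma merge_imagef (h : IsMergeVia α β π f g) : (Finset.univ.image f).card = a := by
  rw [Finset.card_image_of_injective _ h.1.1.injective, Finset.card_univ, Fintype.card_fin]

lemma merge_a_le (h : IsMergeVia α β π f g) : a ≤ n := by
  have h1 := Finset.card_le_univ (Finset.univ.image f)
  rwa [merge_imagef h, Fintype.card_fin] at h1

lemma merge_b_eq (h : IsMergeVia α β π f g) : b = n - a := by
  have hc : (Finset.univ.image g) = (Finset.univ.image f)ᶜ := by
    ext x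
    have := h.2.2 x
    simp only [Finset.mem_compl, Finset.mem_image, Finset.mem_univ, true_and]
    tauto
  have h1 : (Finset.univ.image g).card = b := by
    rw [Finset.card_image_of_injective _ h.2.1.1.injective, Finset.card_univ, Fintype.card_fin]
  rw [hc, Finset.card_compl, merge_imagef h, Fintype.card_fin] at h1
  exact h1.symm

lemma merge_det (h : IsMergeVia α β π f g) (h' : IsMergeVia α β π' f' g')
    (hS : Set.range f = Set.range f')
    (hT : π '' Set.range f = π' '' Set.range f') : π = π' := by
  haveI : WellFoundedLT (Fin a) := inferInstance
  haveI : WellFoundedLT (Fin b) := inferInstance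
  have hf : f = f' := (h.1.1.range_inj h'.1.1).1 hS
  have hu : StrictMono (fun i => π (f (α.symm i))) := by
    intro i j hij
    exact (h.1.2 (α.symm i) (α.symm j)).1 (by simpa using hij)
  have hu' : StrictMono (fun i => π' (f' (α.symm i))) := by
    intro i j hij
    exact (h'.1.2 (α.symm i) (α.symm j)).1 (by simpa using hij)
  have hru : Set.range (fun i => π (f (α.symm i))) = π '' Set.range f := by
    have : Set.range (f ∘ ⇑α.symm) = Set.range f := α.symm.surjective.range_comp f
    calc Set.range (fun i => π (f (α.symm i))) = π '' Set.range (f ∘ ⇑α.symm) :=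
          Set.range_comp π _
      _ = π '' Set.range f := by rw [this]
  have hru' : Set.range (fun i => π' (f' (α.symm i))) = π' '' Set.range f' := by
    have : Set.range (f' ∘ ⇑α.symm) = Set.range f' := α.symm.surjective.range_comp f'
    calc Set.range (fun i => π' (f' (α.symm i))) = π' '' Set.range (f' ∘ ⇑α.symm) :=
          Set.range_comp π' _
      _ = π' '' Set.range f' := by rw [this]
  have hueq : (fun i => π (f (α.symm i))) = fun i => π' (f' (α.symm i)) :=
    (hu.range_inj hu').1 (by rw [hru, hru', hT])
  have hπf : ∀ i, π (f i) = π' (f' i) := by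
    intro i
    have := congrFun hueq (α i)
    simpa using this
  have hg : g = g' := (h.2.1.1.range_inj h'.2.1.1).1
    (by rw [merge_rangeg h, merge_rangeg h', hS])
  have hv : StrictMono (fun j => π (g (β.symm j))) := by
    intro i j hij
    exact (h.2.1.2 (β.symm i) (β.symm j)).1 (by simpa using hij)
  have hv' : StrictMono (fun j => π' (g' (β.symm j))) := by
    intro i j hij
    exact (h'.2.1.2 (β.symm i) (β.symm j)).1 (by simp [hij])
  have hrv : Set.range (fun j => π (g (β.symm j))) = (π '' Set.range f)ᶜ := by
    have h2 : Set.range (g ∘ ⇑β.symm) = Set.range g := β.symm.surjective.range_comp g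
    calc Set.range (fun j => π (g (β.symm j))) = π '' Set.range (g ∘ ⇑β.symm) :=
          Set.range_comp π _
      _ = π '' Set.range g := by rw [h2]
      _ = π '' (Set.range f)ᶜ := by rw [merge_rangeg h]
      _ = (π '' Set.range f)ᶜ := Set.image_compl_eq π.bijective
  have hrv' : Set.range (fun j => π' (g' (β.symm j))) = (π' '' Set.range f')ᶜ := by
    have h2 : Set.range (g' ∘ ⇑β.symm) = Set.range g' := β.symm.surjective.range_comp g'
    calc Set.range (fun j => π' (g' (β.symm j))) = π' '' Set.range (g' ∘ ⇑β.symm) :=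
          Set.range_comp π' _
      _ = π' '' Set.range g' := by rw [h2]
      _ = π' '' (Set.range f')ᶜ := by rw [merge_rangeg h']
      _ = (π' '' Set.range f')ᶜ := Set.image_compl_eq π'.bijective
  have hveq : (fun j => π (g (β.symm j))) = fun j => π' (g' (β.symm j)) :=
    (hv.range_inj hv').1 (by rw [hrv, hrv', hT])
  have hπg : ∀ j, π (g j) = π' (g' j) := by
    intro j
    have := congrFun hveq (β j)
    simpa using this
  apply Equiv.ext
  intro x
  by_cases hx : ∃ i, f i = x
  · obtain ⟨i, rfl⟩ := hx
    rw [hπf i, hf]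
  · have hx' : ∃ j, g j = x := by
      have := h.2.2 x
      tauto
    obtain ⟨j, rfl⟩ := hx'
    rw [hπg j, hg]

lemma permCongr_rfl_eq (β : Equiv.Perm (Fin b)) :
    (finCongr (rfl : b = b)).permCongr β = β := by
  ext i
  simp

lemma cast_merge {m : ℕ} (hm : b = m) (h : IsMergeVia α β π f g) :
    IsMergeVia α ((finCongr hm).permCongr β) π f (g ∘ ⇑(finCongr hm).symm) := by
  subst hm
  rw [permCongr_rfl_eq]
  have : g ∘ ⇑(finCongr (rfl : b = b)).symm = g := by
    ext i
    simp
  rw [this]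
  exact h

lemma mem_cast {D : Set PermSig} {m : ℕ} (hm : b = m)
    (hB : (⟨b, β⟩ : PermSig) ∈ D) :
    (⟨m, (finCongr hm).permCongr β⟩ : PermSig) ∈ D := by
  subst hm
  rwa [permCongr_rfl_eq]

end aux

abbrev MComp (C D : Set PermSig) (n : ℕ) (k : Fin (n + 1)) : Type :=
  {S : Finset (Fin n) // S.card = (k : ℕ)} × {T : Finset (Fin n) // T.card = (k : ℕ)} ×
  {α : Equiv.Perm (Fin (k : ℕ)) // (⟨(k : ℕ), α⟩ : PermSig) ∈ C} ×
  {β : Equiv.Perm (Fin (n - (k : ℕ))) // (⟨n - (k : ℕ), β⟩ : PermSig) ∈ D}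

def MProp (C D : Set PermSig) (n : ℕ) (y : Σ k : Fin (n + 1), MComp C D n k)
    (π : Equiv.Perm (Fin n)) : Prop :=
  ∃ f g, IsMergeVia y.2.2.2.1.1 y.2.2.2.2.1 π f g ∧
    Finset.univ.image f = y.2.1.1 ∧
    Finset.univ.image (fun i => π (f i)) = y.2.2.1.1

lemma MProp_det {C D : Set PermSig} {n : ℕ} {y : Σ k : Fin (n + 1), MComp C D n k}
    {π π' : Equiv.Perm (Fin n)} (h : MProp C D n y π) (h' : MProp C D n y π') :
    π = π' := by
  obtain ⟨f, g, hm, hs, ht⟩ := h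
  obtain ⟨f', g', hm', hs', ht'⟩ := h'
  have hSf : Finset.univ.image f = Finset.univ.image f' := hs.trans hs'.symm
  have hS : Set.range f = Set.range f' := by
    ext x
    have := Finset.ext_iff.mp hSf x
    simpa using this
  have hTf : Finset.univ.image (fun i => π (f i)) = Finset.univ.image (fun i => π' (f' i)) :=
    ht.trans ht'.symm
  have hT : π '' Set.range f = π' '' Set.range f' := by
    rw [show π '' Set.range f = Set.range (fun i => π (f i)) from (Set.range_comp π f).symm,
        show π' '' Set.range f' = Set.range (fun i => π' (f' i)) from (Set.range_comp π' f').symm]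
    ext x
    have := Finset.ext_iff.mp hTf x
    simpa using this
  exact merge_det hm hm' hS hT

lemma merge_encode (C D : Set PermSig) (n : ℕ) (π : Equiv.Perm (Fin n))
    (hπ : (⟨n, π⟩ : PermSig) ∈ MergeClass C D) :
    ∃ y : Σ k : Fin (n + 1), MComp C D n k, MProp C D n y π := by
  obtain ⟨⟨a, α⟩, hA, ⟨b, β⟩, hB, f, g, hm⟩ := hπ
  have ha : a ≤ n := merge_a_le hm
  have hb : b = n - a := merge_b_eq hm
  exact ⟨⟨⟨a, Nat.lt_succ_of_le ha⟩,
    ⟨Finset.univ.image f, merge_imagef hm⟩,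
    ⟨Finset.univ.image (fun i => π (f i)), by
      rw [Finset.card_image_of_injective _ (fun i j hij => hm.1.1.injective (π.injective hij)),
        Finset.card_univ, Fintype.card_fin]⟩,
    ⟨α, hA⟩,
    ⟨(finCongr hb).permCongr β, mem_cast hb hB⟩⟩,
    f, g ∘ ⇑(finCongr hb).symm, cast_merge hb hm, rfl, rfl⟩

/-- If `c_n = |C ∩ S_n|`, `d_n = |D ∩ S_n|` and `M_n = |M(C,D) ∩ S_n|`, then
`M_n ≤ ∑_{k=0}^n (n choose k)² c_k d_{n-k}`. -/
theorem mergeClass_count_le (C D : Set PermSig) (n : ℕ) :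
    classCount (MergeClass C D) n ≤
      ∑ k ∈ Finset.range (n + 1),
        (n.choose k) ^ 2 * classCount C k * classCount D (n - k) := by
  classical
  have key : ∀ x : {π : Equiv.Perm (Fin n) // (⟨n, π⟩ : PermSig) ∈ MergeClass C D},
      ∃ y : Σ k : Fin (n + 1), MComp C D n k, MProp C D n y x.1 :=
    fun x => merge_encode C D n x.1 x.2
  set F : {π : Equiv.Perm (Fin n) // (⟨n, π⟩ : PermSig) ∈ MergeClass C D} →
      Σ k : Fin (n + 1), MComp C D n k := fun x => (key x).choose with hF
  have hinj : Function.Injective F := by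
    intro x x' hxx
    have h1 : MProp C D n (F x) x.1 := (key x).choose_spec
    have h2 : MProp C D n (F x) x'.1 := hxx ▸ (key x').choose_spec
    exact Subtype.ext (MProp_det h1 h2)
  have hle : classCount (MergeClass C D) n ≤ Nat.card (Σ k : Fin (n + 1), MComp C D n k) :=
    Nat.card_le_card_of_injective F hinj
  have hcard : Nat.card (Σ k : Fin (n + 1), MComp C D n k)
      = ∑ k : Fin (n + 1), Nat.card (MComp C D n k) := by
    letI : ∀ k : Fin (n + 1), Fintype (MComp C D n k) := fun k => Fintype.ofFinite _
    rw [Nat.card_eq_fintype_card, Fintype.card_sigma]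
    exact Finset.sum_congr rfl fun k _ => Nat.card_eq_fintype_card.symm
  have hcomp : ∀ k : Fin (n + 1), Nat.card (MComp C D n k)
      = (n.choose (k : ℕ)) ^ 2 * classCount C (k : ℕ) * classCount D (n - (k : ℕ)) := by
    intro k
    rw [Nat.card_prod, Nat.card_prod, Nat.card_prod]
    have h1 : Nat.card {S : Finset (Fin n) // S.card = (k : ℕ)} = n.choose (k : ℕ) := by
      rw [Nat.card_eq_fintype_card, Fintype.card_finset_len, Fintype.card_fin]
    have h2 : Nat.card {α : Equiv.Perm (Fin (k : ℕ)) // (⟨(k : ℕ), α⟩ : PermSig) ∈ C}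
        = classCount C (k : ℕ) := rfl
    have h3 : Nat.card {β : Equiv.Perm (Fin (n - (k : ℕ))) //
        (⟨n - (k : ℕ), β⟩ : PermSig) ∈ D} = classCount D (n - (k : ℕ)) := rfl
    rw [h1, h2, h3]
    ring
  calc classCount (MergeClass C D) n
      ≤ ∑ k : Fin (n + 1), Nat.card (MComp C D n k) := hcard ▸ hle
    _ = ∑ k : Fin (n + 1),
        (n.choose (k : ℕ)) ^ 2 * classCount C (k : ℕ) * classCount D (n - (k : ℕ)) :=
        Finset.sum_congr rfl fun k _ => hcomp k
    _ = ∑ k ∈ Finset.range (n + 1),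
        (n.choose k) ^ 2 * classCount C k * classCount D (n - k) :=
        Fin.sum_univ_eq_sum_range (fun m => (n.choose m) ^ 2 * classCount C m * classCount D (n - m)) (n + 1)
end

section
/- Every permutation π ∈ I₂ occurs as a pattern in some generic staircase: for every π ∈ I₂ there exist positive integers k and b such that π ≼ the (k,b)-generic staircase. -/
/-!
A 321-avoiding permutation splits into its upper points (first points of inversions) and its
right-to-left minima, and each of the two parts is increasing. Placing the points one value at a
time, at heights chosen between finitely many rational bounds, one draws the upper points on the
line `Y = X` and the lower points on `Y = X - 1` without changing the relative order of positions
or of values. Multiplying by a common denominator `b` turns the heights into integers `W` and the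
gap between the lines into `b`; in these coordinates the `(2K, b)`-generic staircase consists of
one upper and one lower point at every height `W < K b`, its blocks being the runs of `b`
consecutive heights on one line.
-/

open Filter

/-- `σ` is the `(k,b)`-generic staircase: it has a staircase decomposition into
blocks `P 0, …, P (k-1)`, each increasing of size `b` (listed in order of position
and of value), where each even-to-odd consecutive pair of blocks is arranged left
to right with interleaved values, each odd-to-even consecutive pair is arranged
bottom to top with interleaved positions, and non-consecutive blocks are totally
separated (later blocks entirely above and to the right). -/
def IsGenericStaircase (k b : ℕ) (σ : PermSig) : Prop :=
  ∃ P : Fin k → Fin b → Fin σ.1,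
    (Function.Bijective fun p : Fin k × Fin b => P p.1 p.2) ∧
    (∀ i, StrictMono (P i)) ∧
    (∀ i, StrictMono fun t => σ.2 (P i t)) ∧
    (∀ i j : Fin k, (j : ℕ) = (i : ℕ) + 1 → (i : ℕ) % 2 = 0 →
      (∀ s t, P i s < P j t) ∧
      (∀ t : Fin b, σ.2 (P j t) < σ.2 (P i t)) ∧
      (∀ s t : Fin b, (s : ℕ) + 1 = (t : ℕ) → σ.2 (P i s) < σ.2 (P j t))) ∧
    (∀ i j : Fin k, (j : ℕ) = (i : ℕ) + 1 → (i : ℕ) % 2 = 1 →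
      (∀ s t, σ.2 (P i s) < σ.2 (P j t)) ∧
      (∀ t : Fin b, P i t < P j t) ∧
      (∀ s t : Fin b, (t : ℕ) + 1 = (s : ℕ) → P j t < P i s)) ∧
    (∀ i j : Fin k, (i : ℕ) + 2 ≤ (j : ℕ) →
      ∀ s t, P i s < P j t ∧ σ.2 (P i s) < σ.2 (P j t))

theorem mul_add_lt_mul_add {b c c' s t : ℕ} (hs : s < b) (h : c < c') :
    c * b + s < c' * b + t :=
  calc c * b + s < (c + 1) * b := by rw [add_one_mul]; omega
    _ ≤ c' * b := Nat.mul_le_mul_right b h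
    _ ≤ c' * b + t := Nat.le_add_right _ _

section Staircase

variable (N b : ℕ)

/-- Position of the point of height `W < N` on the upper (`true`) or lower (`false`) line of
the staircase: in the order of `stairKey`, except that the first `b` upper points and the last `b`
lower points are pushed to the two ends. -/
def stairPos (u : Bool) (W : ℕ) : ℕ :=
  if u then (if W < b then W else 2 * W + 1 - b) else (if W + b < N then 2 * W + b else W + N)

def stairKey (u : Bool) (W : ℕ) : ℕ := if u then 2 * W + 1 else 2 * W + 2 * b

def stairVal (u : Bool) (W : ℕ) : ℕ := if u then 2 * W + 1 else 2 * W

variable {N b}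

theorem stairPos_lt_stairPos_iff {u u' : Bool} {W W' : ℕ} (hW : W < N) (hW' : W' < N) :
    stairPos N b u W < stairPos N b u' W' ↔ stairKey b u W < stairKey b u' W' := by
  cases u <;> cases u' <;> simp only [stairPos, stairKey, Bool.false_eq_true, if_true, if_false] <;>
    split_ifs <;> omega

theorem stairPos_lt (u : Bool) {W : ℕ} (hW : W < N) : stairPos N b u W < 2 * N := by
  cases u <;> simp only [stairPos, Bool.false_eq_true, if_true, if_false] <;> split_ifs <;> omega

theorem stairVal_lt (u : Bool) {W : ℕ} (hW : W < N) : stairVal u W < 2 * N := by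
  cases u <;> simp only [stairVal, Bool.false_eq_true, if_true, if_false] <;> omega

theorem stairPos_injective : Function.Injective fun p : Bool × Fin N => stairPos N b p.1 p.2 := by
  rintro ⟨u, W⟩ ⟨u', W'⟩ h
  have hkey : stairKey b u W = stairKey b u' W' := by
    have h₁ := (stairPos_lt_stairPos_iff (b := b) (u := u) (u' := u') W.2 W'.2).not
    have h₂ := (stairPos_lt_stairPos_iff (b := b) (u := u') (u' := u) W'.2 W.2).not
    simp only at h
    omega
  cases u <;> cases u' <;>
    simp only [stairKey, Bool.false_eq_true, if_true, if_false] at hkey <;>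
    simp only [Prod.mk.injEq, Fin.ext_iff, true_and, reduceCtorEq, false_and] <;> omega

theorem stairVal_injective : Function.Injective fun p : Bool × Fin N => stairVal p.1 p.2 := by
  rintro ⟨u, W⟩ ⟨u', W'⟩ h
  cases u <;> cases u' <;> simp only [stairVal, Bool.false_eq_true, if_true, if_false] at h <;>
    simp only [Prod.mk.injEq, Fin.ext_iff, true_and, reduceCtorEq, false_and] <;> omega

variable (N b)

noncomputable def stairPosEquiv : Bool × Fin N ≃ Fin (2 * N) :=
  Equiv.ofBijective (fun p => ⟨stairPos N b p.1 p.2, stairPos_lt p.1 p.2.2⟩)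
    ((Fintype.bijective_iff_injective_and_card _).2
      ⟨fun _ _ h => stairPos_injective (congrArg Fin.val h), by simp [two_mul]⟩)

noncomputable def stairValEquiv : Bool × Fin N ≃ Fin (2 * N) :=
  Equiv.ofBijective (fun p => ⟨stairVal p.1 p.2, stairVal_lt p.1 p.2.2⟩)
    ((Fintype.bijective_iff_injective_and_card _).2
      ⟨fun _ _ h => stairVal_injective (congrArg Fin.val h), by simp [two_mul]⟩)

noncomputable def stairPerm : Equiv.Perm (Fin (2 * N)) :=
  (stairPosEquiv N b).symm.trans (stairValEquiv N)

variable {N b}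

theorem stairPosEquiv_lt_iff (p q : Bool × Fin N) :
    stairPosEquiv N b p < stairPosEquiv N b q ↔ stairKey b p.1 p.2 < stairKey b q.1 q.2 :=
  stairPos_lt_stairPos_iff p.2.2 q.2.2

theorem stairPerm_lt_iff (p q : Bool × Fin N) :
    stairPerm N b (stairPosEquiv N b p) < stairPerm N b (stairPosEquiv N b q) ↔
      stairVal p.1 p.2 < stairVal q.1 q.2 := by
  simp only [stairPerm, Equiv.trans_apply, Equiv.symm_apply_apply]
  rfl

end Staircase

def stairBlock (K b : ℕ) (i : Fin (2 * K)) (t : Fin b) : Bool × Fin (K * b) :=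
  (decide ((i : ℕ) % 2 = 0),
    ⟨(i : ℕ) / 2 * b + t,
      by simpa using mul_add_lt_mul_add (t := 0) t.2 (by omega : (i : ℕ) / 2 < K)⟩)

theorem stairBlock_injective (K b : ℕ) :
    Function.Injective fun p : Fin (2 * K) × Fin b => stairBlock K b p.1 p.2 := by
  rintro ⟨i, s⟩ ⟨j, t⟩ h
  simp only [stairBlock, Prod.mk.injEq, Fin.mk.injEq, decide_eq_decide] at h
  obtain ⟨hpar, hW⟩ := h
  have hij : (i : ℕ) / 2 = (j : ℕ) / 2 := by
    rcases lt_trichotomy ((i : ℕ) / 2) ((j : ℕ) / 2) with hlt | heq | hgt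
    · exact absurd hW (mul_add_lt_mul_add (t := t) s.2 hlt).ne
    · exact heq
    · exact absurd hW (mul_add_lt_mul_add (t := s) t.2 hgt).ne'
  simp only [hij, Nat.add_left_cancel_iff] at hW
  simp only [Prod.mk.injEq, Fin.ext_iff]
  omega

theorem isGenericStaircase_stairPerm (K b : ℕ) :
    IsGenericStaircase (2 * K) b ⟨2 * (K * b), stairPerm (K * b) b⟩ := by
  have hbij : Function.Bijective fun p : Fin (2 * K) × Fin b => stairBlock K b p.1 p.2 := by
    rw [Fintype.bijective_iff_injective_and_card]
    exact ⟨stairBlock_injective K b, by simp [mul_assoc]⟩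
  refine ⟨fun i t => stairPosEquiv (K * b) b (stairBlock K b i t),
    (stairPosEquiv (K * b) b).bijective.comp hbij, ?_, ?_, ?_, ?_, ?_⟩ <;>
    simp only [StrictMono, stairPosEquiv_lt_iff, stairPerm_lt_iff, stairBlock, stairKey,
      stairVal, decide_eq_true_eq]
  · intro i s t hst
    split_ifs <;> omega
  · intro i s t hst
    split_ifs <;> omega
  · intro i j hj hi
    have hc : (j : ℕ) / 2 = (i : ℕ) / 2 := by omega
    refine ⟨fun s t => ?_, fun t => ?_, fun s t hst => ?_⟩ <;> rw [hc] <;> split_ifs <;> omega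
  · intro i j hj hi
    have hc : (j : ℕ) / 2 * b = (i : ℕ) / 2 * b + b := by rw [← add_one_mul]; congr 1; omega
    refine ⟨fun s t => ?_, fun t => ?_, fun s t hst => ?_⟩ <;> rw [hc] <;> split_ifs <;> omega
  · intro i j hij s t
    have h₁ := mul_add_lt_mul_add (t := t) s.2 (by omega : (i : ℕ) / 2 < (j : ℕ) / 2)
    have h₂ : (i : ℕ) % 2 = 1 → (j : ℕ) % 2 = 0 → (i : ℕ) / 2 * b + b + s < (j : ℕ) / 2 * b + t :=
      fun _ _ => by rw [← add_one_mul]; exact mul_add_lt_mul_add s.2 (by omega)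
    split_ifs <;> omega


theorem involves_stairPerm {n N b : ℕ} (π : Equiv.Perm (Fin n)) (u : Fin n → Bool)
    (h : Fin n → ℕ) (hN : ∀ z, h z < N) (hval : ∀ z z', π z < π z' → h z < h z')
    (hpos : ∀ z z', z < z' → stairKey b (u z) (h z) < stairKey b (u z') (h z')) :
    Involves ⟨n, π⟩ ⟨2 * N, stairPerm N b⟩ := by
  let p : Fin n → Bool × Fin N := fun z => (u z, ⟨h z, hN z⟩)
  have hmono : StrictMono fun v => stairVal (p (π.symm v)).1 (p (π.symm v)).2 := by
    intro v v' hv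
    have := hval (π.symm v) (π.symm v') (by simpa using hv)
    simp only [p, stairVal]
    split_ifs <;> omega
  refine ⟨fun z => stairPosEquiv N b (p z), fun z z' hz => ?_, fun z z' => ?_⟩
  · exact (stairPosEquiv_lt_iff _ _).2 (hpos z z' hz)
  · rw [stairPerm_lt_iff, ← hmono.lt_iff_lt]
    simp

theorem exists_nat_mul_eq_nat {ι : Type*} [Fintype ι] [DecidableEq ι] (w : ι → ℚ)
    (hw : ∀ i, 0 ≤ w i) : ∃ (D : ℕ) (h : ι → ℕ), 0 < D ∧ ∀ i, (h i : ℚ) = D * w i := by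
  refine ⟨∏ i, (w i).den, fun i => (∏ j ∈ Finset.univ.erase i, (w j).den) * (w i).num.toNat,
    Finset.prod_pos fun i _ => (w i).den_pos, fun i => ?_⟩
  have hnum : ((w i).num.toNat : ℚ) = (w i).den * w i := by
    rw [Rat.den_mul_eq_num]
    exact_mod_cast Int.toNat_of_nonneg (Rat.num_nonneg.2 (hw i))
  push_cast
  rw [hnum, ← mul_assoc, Finset.prod_erase_mul _ _ (Finset.mem_univ i)]

section TwoLineDrawing

variable {n : ℕ} (π : Equiv.Perm (Fin n))

def IsUpper (z : Fin n) : Prop := ∃ r, z < r ∧ π r < π z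

/-- A drawing of the points of value `< v` on two lines: the point `z` goes to `(w z, w z)` if it
is upper and to `(w z + 1, w z)` otherwise, respecting the order of positions and of values. The
field `lt_add_one` extends "an upper point `z` left of a lower point `y` has `w z < w y + 1`" to
every `z` lying below all upper points right of `y`; this is what leaves room for the next value. -/
structure IsPartialDrawing (v : ℕ) (w : Fin n → ℚ) : Prop where
  nonneg : ∀ z, (π z : ℕ) < v → 0 ≤ w z
  mono : ∀ z z', (π z' : ℕ) < v → π z < π z' → w z < w z'
  add_one_lt : ∀ x y, (π x : ℕ) < v → IsUpper π x → ¬IsUpper π y → y < x → w y + 1 < w x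
  lt_add_one : ∀ z y, (π z : ℕ) < v → (π y : ℕ) < v → ¬IsUpper π y →
    (∀ x, IsUpper π x → y < x → π z < π x) → w z < w y + 1

variable {π}

theorem hasDecSeq_three {p q r : Fin n} (hpq : p < q) (hqr : q < r) (hq : π q < π p)
    (hr : π r < π q) : HasDecSeq π 3 := by
  refine ⟨![p, q, r], Fin.strictMono_iff_lt_succ.2 ?_, Fin.strictAnti_iff_succ_lt.2 ?_⟩ <;>
    simp [Fin.forall_fin_two, *]

theorem lt_of_lt_of_not_isUpper {z z' : Fin n} (h : z < z') (hz : ¬IsUpper π z) : π z < π z' :=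
  lt_of_not_ge fun h' => hz ⟨z', h, h'.lt_of_ne (π.injective.ne h.ne')⟩

theorem lt_of_lt_of_isUpper (hπ : ¬HasDecSeq π 3) {z z' : Fin n} (h : z < z')
    (hz' : IsUpper π z') : π z < π z' := by
  obtain ⟨r, hr, hπr⟩ := hz'
  exact lt_of_not_ge fun h' => hπ (hasDecSeq_three h hr (h'.lt_of_ne (π.injective.ne h.ne')) hπr)

theorem IsPartialDrawing.zero (w : Fin n → ℚ) : IsPartialDrawing π 0 w :=
  ⟨by simp, by simp, by simp, by simp⟩

theorem IsPartialDrawing.exists_next_height {m : Fin n} {w : Fin n → ℚ}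
    (hw : IsPartialDrawing π (π m) w) :
    ∃ t : ℚ, 0 ≤ t ∧ (∀ z, π z < π m → w z < t) ∧
      (IsUpper π m → ∀ y, y < m → ¬IsUpper π y → w y + 1 < t) ∧
      (∀ y, π y < π m → ¬IsUpper π y → (∀ x, IsUpper π x → y < x → π m < π x) → t < w y + 1) := by
  let lower : Set ℚ := {0} ∪ w '' {z | π z < π m} ∪
    (fun y => w y + 1) '' {y | IsUpper π m ∧ y < m ∧ ¬IsUpper π y}
  let upper : Set ℚ := (fun y => w y + 1) '' {y | π y < π m ∧ ¬IsUpper π y ∧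
    ∀ x, IsUpper π x → y < x → π m < π x}
  have hsep : ∀ a ∈ lower, ∀ c ∈ upper, a < c := by
    rintro a ((rfl | ⟨z, hz, rfl⟩) | ⟨y', ⟨hm, hy'm, hy'⟩, rfl⟩) c ⟨y, ⟨hy, hyL, hwin⟩, rfl⟩
    · linarith [hw.nonneg y hy]
    · exact hw.lt_add_one z y hz hy hyL fun x hx hyx => hz.trans (hwin x hx hyx)
    · have hmy : m < y := lt_of_not_ge fun hym =>
        (hwin m hm (hym.lt_of_ne (ne_of_apply_ne π hy.ne))).false
      linarith [hw.mono y' y hy (lt_of_lt_of_not_isUpper (hy'm.trans hmy) hy')]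
  obtain ⟨t, hlower, hupper⟩ := (Set.toFinite lower).exists_between' (Set.toFinite upper) hsep
  refine ⟨t, (hlower 0 (by simp [lower])).le, fun z hz => hlower _ ?_,
    fun hm y hym hy => hlower _ ?_, fun y hy hyL hwin => hupper _ ⟨y, ⟨hy, hyL, hwin⟩, rfl⟩⟩
  · exact Or.inl (Or.inr ⟨z, hz, rfl⟩)
  · exact Or.inr ⟨y, ⟨hm, hym, hy⟩, rfl⟩

theorem IsPartialDrawing.update {m : Fin n} {w : Fin n → ℚ} (hw : IsPartialDrawing π (π m) w)
    {t : ℚ} (h₀ : 0 ≤ t) (h₁ : ∀ z, π z < π m → w z < t)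
    (h₂ : IsUpper π m → ∀ y, y < m → ¬IsUpper π y → w y + 1 < t)
    (h₃ : ∀ y, π y < π m → ¬IsUpper π y → (∀ x, IsUpper π x → y < x → π m < π x) →
      t < w y + 1) :
    IsPartialDrawing π (π m + 1) (Function.update w m t) := by
  have placed : ∀ z, (π z : ℕ) < π m + 1 → z = m ∨ π z < π m := fun z hz =>
    (Nat.lt_succ_iff_lt_or_eq.mp hz).elim Or.inr fun h => Or.inl (π.injective (Fin.ext h))
  have ne : ∀ {z}, π z < π m → z ≠ m := fun hz h => hz.ne (congrArg π h)
  constructor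
  · intro z hz
    rcases placed z hz with rfl | hz
    · simpa using h₀
    · simpa [ne hz] using hw.nonneg z hz
  · intro z z' hz' hlt
    rcases placed z' hz' with rfl | hz'
    · simpa [ne hlt] using h₁ z hlt
    · simpa [ne hz', ne (hlt.trans hz')] using hw.mono z z' hz' hlt
  · intro x y hx hxU hyL hyx
    have hy : π y < π x := lt_of_lt_of_not_isUpper hyx hyL
    rcases placed x hx with rfl | hx
    · simpa [hyx.ne] using h₂ hxU y hyx hyL
    · simpa [ne hx, ne (hy.trans hx)] using hw.add_one_lt x y hx hxU hyL hyx
  · intro z y hz hy hyL hwin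
    rcases placed y hy with rfl | hy <;> rcases placed z hz with rfl | hz
    · simp
    · simpa [ne hz] using (h₁ z hz).trans (_root_.lt_add_one t)
    · simpa [ne hy] using h₃ y hy hyL hwin
    · simpa [ne hz, ne hy] using hw.lt_add_one z y hz hy hyL hwin

theorem exists_isPartialDrawing (hπ : ¬HasDecSeq π 3) :
    ∀ v ≤ n, ∃ w : Fin n → ℚ, IsPartialDrawing π v w
  | 0, _ => ⟨0, .zero 0⟩
  | v + 1, hv => by
    obtain ⟨w, hw⟩ := exists_isPartialDrawing hπ v (by omega)
    set m := π.symm ⟨v, hv⟩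
    have hm : (π m : ℕ) = v := by simp [m]
    rw [← hm] at hw ⊢
    obtain ⟨t, h₀, h₁, h₂, h₃⟩ := hw.exists_next_height
    exact ⟨_, hw.update h₀ h₁ h₂ h₃⟩

theorem exists_stairKey_heights (hπ : ¬HasDecSeq π 3) [DecidablePred (IsUpper π)] :
    ∃ (b : ℕ) (h : Fin n → ℕ), 0 < b ∧ (∀ z z', π z < π z' → h z < h z') ∧
      ∀ z z', z < z' → stairKey b (IsUpper π z) (h z) < stairKey b (IsUpper π z') (h z') := by
  obtain ⟨w, hw⟩ := exists_isPartialDrawing hπ n le_rfl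
  obtain ⟨b, h, hb, hhw⟩ := exists_nat_mul_eq_nat w fun z => hw.nonneg z (π z).2
  have hscale : ∀ {a c : ℚ}, a < c → b * a < b * c := fun hac =>
    mul_lt_mul_of_pos_left hac (by exact_mod_cast hb)
  have hval : ∀ z z', π z < π z' → h z < h z' := fun z z' hlt => by
    qify; rw [hhw, hhw]; exact hscale (hw.mono z z' (π z').2 hlt)
  refine ⟨b, h, hb, hval, fun z z' hzz' => ?_⟩
  by_cases hz : IsUpper π z <;> by_cases hz' : IsUpper π z' <;>
    simp only [stairKey, hz, hz', decide_true, decide_false, if_true, if_false, Bool.false_eq_true]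
  · have := hval z z' (lt_of_lt_of_isUpper hπ hzz' hz')
    omega
  · have := hscale (hw.lt_add_one z z' (π z).2 (π z').2 hz' fun x hx hz'x =>
      lt_of_lt_of_isUpper hπ (hzz'.trans hz'x) hx)
    have : h z < h z' + b := by qify; rw [hhw, hhw]; linarith
    omega
  · have := hscale (hw.add_one_lt z' z (π z').2 hz' hz hzz')
    have : h z + b < h z' := by qify; rw [hhw, hhw]; linarith
    omega
  · have := hval z z' (lt_of_lt_of_not_isUpper hzz' hz)
    omega

end TwoLineDrawing

/-- Every permutation in `I₂` occurs as a pattern in some generic staircase. -/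
theorem embeds_in_generic_staircase (π : PermSig) (hπ : π ∈ IkClass 2) :
    ∃ k b : ℕ, 0 < k ∧ 0 < b ∧
      ∃ σ : PermSig, IsGenericStaircase k b σ ∧ Involves π σ := by
  classical
  obtain ⟨n, π⟩ := π
  obtain ⟨b, h, hb, hval, hpos⟩ := exists_stairKey_heights hπ
  let K := Finset.univ.sup h + 1
  have hK : ∀ z, h z < K * b := fun z =>
    (Nat.lt_succ_of_le (Finset.le_sup (Finset.mem_univ z))).trans_le (Nat.le_mul_of_pos_right K hb)
  exact ⟨2 * K, b, by omega, hb, _, isGenericStaircase_stairPerm K b,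
    involves_stairPerm π _ h hK hval hpos⟩
end

section
/- For all positive integers m and n, the 2-rigid permutations in I₂ having exactly m elements of rank 2 and exactly n elements of rank 1 are in one-to-one correspondence with the subdirect products of the chains [m] and [n]; the bijection sends π to the lattice L_π of occurrences of the pattern 21 in π. -/
/-- For `π ∈ I₂`, the element at position `p` has rank 2, i.e. it occurs as the
larger element of some `21` pattern. -/
def Rank2At {n : ℕ} (π : Equiv.Perm (Fin n)) (p : Fin n) : Prop :=
  ∃ q : Fin n, p < q ∧ π q < π p

/-- A sublattice of `Fin m × Fin n` is a subdirect product of the chains `[m]` and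
`[n]` if both coordinate projections are surjective. -/
def IsSubdirect {m n : ℕ} (K : Sublattice (Fin m × Fin n)) : Prop :=
  (∀ a : Fin m, ∃ p : Fin n, (a, p) ∈ K) ∧ (∀ p : Fin n, ∃ a : Fin m, (a, p) ∈ K)

/-- `π` is a 2-rigid `321`-avoiding permutation with exactly `m` elements of rank 2
and exactly `n` elements of rank 1. -/
def RigidWithRanks (m n : ℕ) (π : Σ N : ℕ, Equiv.Perm (Fin N)) : Prop :=
  (¬ HasDecSeq π.2 3) ∧ KRigid 2 π.2 ∧
    Nat.card {p : Fin π.1 // Rank2At π.2 p} = m ∧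
    Nat.card {p : Fin π.1 // ¬ Rank2At π.2 p} = n

/-- `K = L_π`: listing the rank-2 elements of `π` as `r2 0, …, r2 (m-1)` in
increasing order of value and the rank-1 elements as `r1 0, …, r1 (n-1)` in
increasing order of value, `(i, j) ∈ K` if and only if the `i`-th rank-2 element
and the `j`-th rank-1 element of `π` form a `21` pattern. -/
def IsOccurrenceLattice (m n : ℕ) (π : Σ N : ℕ, Equiv.Perm (Fin N))
    (K : Sublattice (Fin m × Fin n)) : Prop :=
  ∃ (r2 : Fin m → Fin π.1) (r1 : Fin n → Fin π.1),
    (StrictMono fun i => π.2 (r2 i)) ∧ (StrictMono fun j => π.2 (r1 j)) ∧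
    (∀ p, Rank2At π.2 p ↔ ∃ i, r2 i = p) ∧
    (∀ p, ¬ Rank2At π.2 p ↔ ∃ j, r1 j = p) ∧
    (∀ i j, (i, j) ∈ K ↔ (r2 i < r1 j ∧ π.2 (r1 j) < π.2 (r2 i)))

/-!
In a `321`-avoiding permutation the rank-2 elements increase from left to right, and so do the
rank-1 elements, so a 2-rigid such permutation is a shuffle of two increasing sequences and is
determined by how they interleave in position and in value. The rank-1 elements to the right of
the `i`-th rank-2 element form an up-set and those below it a down-set; their intersection is row
`i` of `L_π`, an interval `[a i, b i]`, so that element precedes exactly the rank-1 elements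
`j ≥ a i` and exceeds exactly those with `j ≤ b i`. Conversely the rows of a subdirect product of
two chains are intervals `[a i, b i]` with `a`, `b` monotone, and shuffling the two sequences by
these thresholds builds the only permutation with that occurrence lattice.
-/

open Equiv Function Sum

section Inversions

variable {N : ℕ} {π : Perm (Fin N)}

lemma hasDecSeq_three_of_lt {p q r : Fin N} (hpq : p < q) (hqr : q < r) (h₁ : π q < π p)
    (h₂ : π r < π q) : HasDecSeq π 3 :=
  ⟨![p, q, r], by simp [Fin.strictMono_iff_lt_succ, Fin.forall_fin_two, hpq, hqr],
    by simp [Fin.strictAnti_iff_succ_lt, Fin.forall_fin_two, h₁, h₂]⟩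

lemma not_rank2At_of_lt (hπ : ¬HasDecSeq π 3) {p q : Fin N} (hpq : p < q) (h : π q < π p) :
    ¬Rank2At π q := fun ⟨_, hqr, hr⟩ => hπ (hasDecSeq_three_of_lt hpq hqr h hr)

lemma strictMonoOn_rank2At (hπ : ¬HasDecSeq π 3) : StrictMonoOn π {p | Rank2At π p} := by
  intro p _ q hq hpq
  by_contra! h
  exact not_rank2At_of_lt hπ hpq (h.lt_of_ne (π.injective.ne hpq.ne')) hq

lemma strictMonoOn_not_rank2At : StrictMonoOn π {p | ¬Rank2At π p} := by
  intro p hp q _ hpq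
  by_contra! h
  exact hp ⟨q, hpq, h.lt_of_ne (π.injective.ne hpq.ne')⟩

lemma kRigid_two_iff : KRigid 2 π ↔ ∀ p, ∃ q, (p < q ∧ π q < π p) ∨ (q < p ∧ π p < π q) := by
  refine ⟨fun h p => ?_, fun h p => ?_⟩
  · obtain ⟨q, hq, hπq, i, rfl⟩ := h p
    have h01 : (0 : Fin 2) < 1 := Fin.zero_lt_one
    fin_cases i
    · exact ⟨q 1, .inl ⟨hq h01, hπq h01⟩⟩
    · exact ⟨q 0, .inr ⟨hq h01, hπq h01⟩⟩
  · obtain ⟨q, ⟨hpq, hπq⟩ | ⟨hqp, hπq⟩⟩ := h p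
    · exact ⟨![p, q], by simp [Fin.strictMono_iff_lt_succ, hpq],
        by simp [Fin.strictAnti_iff_succ_lt, hπq], 0, rfl⟩
    · exact ⟨![q, p], by simp [Fin.strictMono_iff_lt_succ, hqp],
        by simp [Fin.strictAnti_iff_succ_lt, hπq], 1, rfl⟩

end Inversions

lemma natCard_eq_iff_exists_strictMono {N k : ℕ} {P : Fin N → Prop} :
    Nat.card {p // P p} = k ↔ ∃ r : Fin k → Fin N, StrictMono r ∧ ∀ p, P p ↔ ∃ i, r i = p := by
  classical
  constructor
  · intro h
    have hk : (Finset.univ.filter P).card = k := by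
      rw [← h, Nat.card_eq_fintype_card, Fintype.card_subtype]
    refine ⟨_, (Finset.univ.filter P).orderEmbOfFin hk |>.strictMono, fun p => ?_⟩
    rw [← Set.mem_range, Finset.range_orderEmbOfFin]
    simp
  · rintro ⟨r, hr, hP⟩
    have hrange : {p | P p} = Set.range r := Set.ext hP
    change Nat.card ({p | P p} : Set (Fin N)) = k
    rw [hrange, Nat.card_range_of_injective hr.injective, Nat.card_fin]

lemma bijective_sumElim {α β γ : Type*} {P : γ → Prop} {u : α → γ} {v : β → γ}
    (hu : Injective u) (hv : Injective v) (hPu : ∀ p, P p ↔ ∃ i, u i = p)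
    (hPv : ∀ p, ¬P p ↔ ∃ j, v j = p) : Bijective (Sum.elim u v) := by
  refine ⟨hu.sumElim hv fun i j h => (hPv (v j)).2 ⟨j, rfl⟩ (h ▸ (hPu (u i)).2 ⟨i, rfl⟩),
    fun p => ?_⟩
  by_cases hp : P p
  · obtain ⟨i, rfl⟩ := (hPu p).1 hp
    exact ⟨inl i, rfl⟩
  · obtain ⟨j, rfl⟩ := (hPv p).1 hp
    exact ⟨inr j, rfl⟩

lemma Equiv.eq_of_lt_iff_lt {α β : Type*} [LinearOrder β] [Finite β] (e e' : α ≃ β)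
    (h : ∀ x y, e x < e y ↔ e' x < e' y) : e = e' := by
  have hmono : StrictMono (e ∘ e'.symm) := fun u v huv => (h _ _).2 (by simpa using huv)
  ext x
  simpa using congrFun hmono.eq_id (e' x)

lemma exists_equiv_fin_lt_iff {α L : Type*} [Fintype α] [LinearOrder L] {N : ℕ} (k : α → L)
    (hk : Injective k) (hα : Fintype.card α = N) :
    ∃ e : α ≃ Fin N, ∀ x y, e x < e y ↔ k x < k y := by
  let := LinearOrder.lift' k hk
  exact ⟨(Fintype.orderIsoFinOfCardEq α hα).symm.toEquiv,
    fun _ _ => (Fintype.orderIsoFinOfCardEq α hα).symm.lt_iff_lt⟩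

lemma eq_Ici_and_eq_Iic_of_inter_eq_Icc {α : Type*} [LinearOrder α] {U D : Set α} {a b : α}
    (hU : IsUpperSet U) (hD : IsLowerSet D) (h : U ∩ D = Set.Icc a b) (hab : a ≤ b) :
    U = Set.Ici a ∧ D = Set.Iic b := by
  have ha : a ∈ U ∩ D := h ▸ Set.left_mem_Icc.2 hab
  have hb : b ∈ U ∩ D := h ▸ Set.right_mem_Icc.2 hab
  refine ⟨Set.ext fun j => ⟨fun hj => ?_, fun hj => hU hj ha.1⟩,
    Set.ext fun j => ⟨fun hj => ?_, fun hj => hD hj hb.2⟩⟩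
  · refine not_lt.1 fun hja => hja.not_ge ?_
    exact (h ▸ ⟨hj, hD (hja.le.trans hab) hb.2⟩ : j ∈ Set.Icc a b).1
  · refine not_lt.1 fun hbj => hbj.not_ge ?_
    exact (h ▸ ⟨hU (hab.trans hbj.le) ha.1, hj⟩ : j ∈ Set.Icc a b).2

namespace LatticeHom

variable {α β δ : Type*}

def ltLocus [Lattice α] [LinearOrder δ] (f g : LatticeHom α δ) : Sublattice α where
  carrier := {x | f x < g x}
  supClosed' x hx y hy := by
    change f (x ⊔ y) < g (x ⊔ y)
    rw [map_sup, map_sup]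
    exact sup_lt_iff.2 ⟨lt_sup_of_lt_left hx, lt_sup_of_lt_right hy⟩
  infClosed' x hx y hy := by
    change f (x ⊓ y) < g (x ⊓ y)
    rw [map_inf, map_inf]
    exact lt_inf_iff.2 ⟨inf_lt_of_left_lt hx, inf_lt_of_right_lt hy⟩

variable [LinearOrder α] [LinearOrder β] [Lattice δ]

def ofFst (u : α →o δ) : LatticeHom (α × β) δ :=
  (OrderHomClass.toLatticeHom α δ u).comp (fst)

def ofSnd (v : β →o δ) : LatticeHom (α × β) δ :=
  (OrderHomClass.toLatticeHom β δ v).comp (snd)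

end LatticeHom

section OccurrenceLattice

variable {m n : ℕ}

lemma eq_of_strictMono_comp {ι α β : Type*} [LinearOrder ι] [WellFoundedLT ι] [Preorder β]
    {g : α → β} (hg : Injective g) {r r' : ι → α} (h : StrictMono (g ∘ r))
    (h' : StrictMono (g ∘ r')) (hr : Set.range r = Set.range r') : r = r' :=
  hg.comp_left <| (h.range_inj h').1 <| by rw [Set.range_comp, Set.range_comp, hr]

lemma IsOccurrenceLattice.eq {π : Σ N : ℕ, Perm (Fin N)} {K K' : Sublattice (Fin m × Fin n)}
    (h : IsOccurrenceLattice m n π K) (h' : IsOccurrenceLattice m n π K') : K = K' := by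
  obtain ⟨r2, r1, hv2, hv1, hr2, hr1, hK⟩ := h
  obtain ⟨r2', r1', hv2', hv1', hr2', hr1', hK'⟩ := h'
  obtain rfl : r2 = r2' := eq_of_strictMono_comp π.2.injective hv2 hv2' <|
    Set.ext fun p => (hr2 p).symm.trans (hr2' p)
  obtain rfl : r1 = r1' := eq_of_strictMono_comp π.2.injective hv1 hv1' <|
    Set.ext fun p => (hr1 p).symm.trans (hr1' p)
  exact Sublattice.ext fun x => (hK x.1 x.2).trans (hK' x.1 x.2).symm

lemma exists_isSubdirect_isOccurrenceLattice {π : Σ N : ℕ, Perm (Fin N)}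
    (hπ : RigidWithRanks m n π) : ∃ K, IsSubdirect K ∧ IsOccurrenceLattice m n π K := by
  obtain ⟨N, π⟩ := π
  obtain ⟨hav, hrig, hc2, hc1⟩ := hπ
  obtain ⟨r2, hr2, hrange2⟩ := natCard_eq_iff_exists_strictMono.1 hc2
  obtain ⟨r1, hr1, hrange1⟩ := natCard_eq_iff_exists_strictMono.1 hc1
  have h2 (i : Fin m) : Rank2At π (r2 i) := (hrange2 _).2 ⟨i, rfl⟩
  have h1 (j : Fin n) : ¬Rank2At π (r1 j) := (hrange1 _).2 ⟨j, rfl⟩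
  have hv2 : StrictMono (π ∘ r2) := fun i i' h => strictMonoOn_rank2At hav (h2 i) (h2 i') (hr2 h)
  have hv1 : StrictMono (π ∘ r1) := fun j j' h => strictMonoOn_not_rank2At (h1 j) (h1 j') (hr1 h)
  let K : Sublattice (Fin m × Fin n) :=
    (LatticeHom.ofFst ⟨r2, hr2.monotone⟩).ltLocus (LatticeHom.ofSnd ⟨r1, hr1.monotone⟩) ⊓
      (LatticeHom.ofSnd ⟨π ∘ r1, hv1.monotone⟩).ltLocus (LatticeHom.ofFst ⟨π ∘ r2, hv2.monotone⟩)
  refine ⟨K, ⟨fun i => ?_, fun j => ?_⟩, r2, r1, hv2, hv1, hrange2, hrange1, fun i j => Iff.rfl⟩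
  · obtain ⟨q, hq, hπq⟩ := h2 i
    obtain ⟨j, rfl⟩ := (hrange1 q).1 (not_rank2At_of_lt hav hq hπq)
    exact ⟨j, hq, hπq⟩
  · obtain ⟨q, ⟨hq, hπq⟩ | ⟨hq, hπq⟩⟩ := kRigid_two_iff.1 hrig (r1 j)
    · exact absurd ⟨q, hq, hπq⟩ (h1 j)
    obtain ⟨i, rfl⟩ := (hrange2 q).1 ⟨r1 j, hq, hπq⟩
    exact ⟨i, hq, hπq⟩

end OccurrenceLattice

section Subdirect

variable {m n : ℕ} {K : Sublattice (Fin m × Fin n)}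

lemma IsSubdirect.mem_of_le_of_le (hK : IsSubdirect K) {i : Fin m} {j₁ j j₂ : Fin n}
    (h₁ : (i, j₁) ∈ K) (h₂ : (i, j₂) ∈ K) (hj₁ : j₁ ≤ j) (hj₂ : j ≤ j₂) : (i, j) ∈ K := by
  obtain ⟨i', hi'⟩ := hK.2 j
  rcases le_total i' i with h | h
  · simpa [h, hj₁] using K.supClosed hi' h₁
  · simpa [h, hj₂] using K.infClosed hi' h₂

lemma IsSubdirect.exists_bounds (hK : IsSubdirect K) :
    ∃ a b : Fin m → Fin n, Monotone a ∧ Monotone b ∧ ∀ i j, (i, j) ∈ K ↔ a i ≤ j ∧ j ≤ b i := by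
  classical
  let row (i : Fin m) : Finset (Fin n) := Finset.univ.filter fun j => (i, j) ∈ K
  have hrow (i : Fin m) : (row i).Nonempty := let ⟨j, hj⟩ := hK.1 i; ⟨j, by simpa [row] using hj⟩
  let a i := (row i).min' (hrow i)
  let b i := (row i).max' (hrow i)
  have ha (i : Fin m) : (i, a i) ∈ K := by simpa [row] using (row i).min'_mem (hrow i)
  have hb (i : Fin m) : (i, b i) ∈ K := by simpa [row] using (row i).max'_mem (hrow i)
  have hbounds (i : Fin m) (j : Fin n) (hj : (i, j) ∈ K) : a i ≤ j ∧ j ≤ b i :=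
    ⟨(row i).min'_le j (by simpa [row]), (row i).le_max' j (by simpa [row])⟩
  refine ⟨a, b, fun i i' hi => ?_, fun i i' hi => ?_,
    fun i j => ⟨hbounds i j, fun ⟨h₁, h₂⟩ => hK.mem_of_le_of_le (ha i) (hb i) h₁ h₂⟩⟩
  · exact (hbounds i _ (by simpa [hi] using K.infClosed (ha i) (ha i'))).1.trans inf_le_right
  · exact le_sup_left.trans (hbounds i' _ (by simpa [hi] using K.supClosed (hb i) (hb i'))).2

end Subdirect

section Riffle

variable {m n : ℕ}

structure IsRiffle {α : Type*} [LT α] (c : Fin m → ℕ) (f : Fin m ⊕ Fin n → α) : Prop where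
  inl_lt_inl : ∀ i i', f (inl i) < f (inl i') ↔ i < i'
  inr_lt_inr : ∀ j j', f (inr j) < f (inr j') ↔ j < j'
  inl_lt_inr : ∀ i j, f (inl i) < f (inr j) ↔ c i ≤ j

namespace IsRiffle

variable {α β : Type*} [LinearOrder α] [LinearOrder β] {c : Fin m → ℕ}
  {f : Fin m ⊕ Fin n → α} {g : Fin m ⊕ Fin n → β}

lemma inr_lt_inl (hf : IsRiffle c f) (hinj : Injective f) (i : Fin m) (j : Fin n) :
    f (inr j) < f (inl i) ↔ j < c i := by
  rw [← not_le, (hinj.ne inl_ne_inr).le_iff_lt, hf.inl_lt_inr, not_le]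

lemma lt_iff_lt (hf : IsRiffle c f) (hg : IsRiffle c g) (hfi : Injective f) (hgi : Injective g)
    (x y : Fin m ⊕ Fin n) : f x < f y ↔ g x < g y := by
  rcases x with i | j <;> rcases y with i' | j'
  · rw [hf.inl_lt_inl, hg.inl_lt_inl]
  · rw [hf.inl_lt_inr, hg.inl_lt_inr]
  · rw [hf.inr_lt_inl hfi, hg.inr_lt_inl hgi]
  · rw [hf.inr_lt_inr, hg.inr_lt_inr]

lemma of_lt_iff_lt (hf : IsRiffle c f) (h : ∀ x y, g x < g y ↔ f x < f y) : IsRiffle c g :=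
  ⟨fun _ _ => (h _ _).trans (hf.inl_lt_inl _ _), fun _ _ => (h _ _).trans (hf.inr_lt_inr _ _),
    fun _ _ => (h _ _).trans (hf.inl_lt_inr _ _)⟩

lemma equiv_eq {N : ℕ} {e e' : Fin m ⊕ Fin n ≃ Fin N} (he : IsRiffle c e) (he' : IsRiffle c e') :
    e = e' :=
  e.eq_of_lt_iff_lt e' (he.lt_iff_lt he' e.injective e'.injective)

end IsRiffle

/-- Ties `c i = j` are broken by putting `inl i` first. -/
def riffleKey (c : Fin m → ℕ) (x : Fin m ⊕ Fin n) : ℕ ×ₗ (Fin m ⊕ₗ Fin n) :=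
  toLex (Sum.elim c (fun j : Fin n => (j : ℕ)) x, toLex x)

lemma riffleKey_injective (c : Fin m → ℕ) : Injective (riffleKey (n := n) c) :=
  fun x y h => by simpa [riffleKey] using congrArg (fun z => ofLex (ofLex z).2) h

lemma isRiffle_riffleKey {c : Fin m → ℕ} (hc : Monotone c) :
    IsRiffle c (riffleKey (n := n) c) := by
  refine ⟨fun i i' => ?_, fun j j' => ?_, fun i j => ?_⟩ <;>
    simp only [riffleKey, Prod.Lex.toLex_lt_toLex, Sum.elim_inl, Sum.elim_inr,
      Sum.Lex.inl_lt_inl_iff, Sum.Lex.inr_lt_inr_iff, Sum.Lex.inl_lt_inr, and_true]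
  · exact ⟨fun h => h.elim hc.reflect_lt And.right,
      fun h => (hc h.le).lt_or_eq.imp_right (⟨·, h⟩)⟩
  · exact ⟨fun h => h.elim id And.right, .inl⟩
  · exact le_iff_lt_or_eq.symm

lemma exists_isRiffle_equiv {c : Fin m → ℕ} (hc : Monotone c) :
    ∃ e : Fin m ⊕ Fin n ≃ Fin (m + n), IsRiffle c e := by
  obtain ⟨e, he⟩ :=
    exists_equiv_fin_lt_iff (N := m + n) (riffleKey (n := n) c) (riffleKey_injective c) (by simp)
  exact ⟨e, (isRiffle_riffleKey hc).of_lt_iff_lt he⟩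

end Riffle

section Realization

variable {m n N : ℕ} {a b : Fin m → Fin n}

/-- `pos (inl i)` is the position of the `i`-th rank-2 element of `σ` and `pos (inr j)` that of
its `j`-th rank-1 element; then `inl i` precedes `inr j` iff `a i ≤ j` and lies above it iff
`j ≤ b i`, so that row `i` of the occurrence lattice is `[a i, b i]`. -/
structure Realizes (a b : Fin m → Fin n) (σ : Perm (Fin N)) (pos : Fin m ⊕ Fin n ≃ Fin N) :
    Prop where
  isRiffle_pos : IsRiffle (fun i => (a i : ℕ)) pos
  isRiffle_val : IsRiffle (fun i => (b i : ℕ) + 1) (fun x => σ (pos x))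

lemma exists_realizes (ha : Monotone a) (hb : Monotone b) :
    ∃ (σ : Perm (Fin (m + n))) (pos : Fin m ⊕ Fin n ≃ Fin (m + n)), Realizes a b σ pos := by
  obtain ⟨pos, hpos⟩ := exists_isRiffle_equiv (n := n) fun _ _ h => Fin.le_def.1 (ha h)
  obtain ⟨val, hval⟩ :=
    exists_isRiffle_equiv (n := n) fun _ _ h => Nat.add_le_add_right (Fin.le_def.1 (hb h)) 1
  refine ⟨pos.symm.trans val, pos, hpos, ?_⟩
  simpa using hval

namespace Realizes

variable {σ : Perm (Fin N)} {pos : Fin m ⊕ Fin n ≃ Fin N}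

lemma sigma_eq {N' : ℕ} {σ' : Perm (Fin N')} {pos' : Fin m ⊕ Fin n ≃ Fin N'}
    (h : Realizes a b σ pos) (h' : Realizes a b σ' pos') :
    (⟨N, σ⟩ : Σ N : ℕ, Perm (Fin N)) = ⟨N', σ'⟩ := by
  obtain rfl : N = N' := by
    simpa using (Fintype.card_congr pos).symm.trans (Fintype.card_congr pos')
  obtain rfl : pos = pos' := h.isRiffle_pos.equiv_eq h'.isRiffle_pos
  have hval : pos.trans σ = pos.trans σ' := h.isRiffle_val.equiv_eq h'.isRiffle_val
  congr
  exact Equiv.ext fun p => by simpa using Equiv.congr_fun hval (pos.symm p)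

lemma lt_and_lt_iff (h : Realizes a b σ pos) (hab : ∀ i, a i ≤ b i) (p q : Fin N) :
    p < q ∧ σ q < σ p ↔ ∃ i j, pos (inl i) = p ∧ pos (inr j) = q ∧ a i ≤ j ∧ j ≤ b i := by
  have hv := h.isRiffle_val.inr_lt_inl (σ.injective.comp pos.injective)
  obtain ⟨x, rfl⟩ := pos.surjective p
  obtain ⟨y, rfl⟩ := pos.surjective q
  rcases x with i | j <;> rcases y with i' | j'
  · simpa [h.isRiffle_pos.inl_lt_inl, h.isRiffle_val.inl_lt_inl] using le_of_lt
  · simp [h.isRiffle_pos.inl_lt_inr, hv]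
  · simpa [h.isRiffle_pos.inr_lt_inl pos.injective, h.isRiffle_val.inl_lt_inr]
      using fun hj => (hj.trans_le (hab i')).le
  · simpa [h.isRiffle_pos.inr_lt_inr, h.isRiffle_val.inr_lt_inr] using le_of_lt

lemma rank2At_iff (h : Realizes a b σ pos) (hab : ∀ i, a i ≤ b i) (p : Fin N) :
    Rank2At σ p ↔ ∃ i, pos (inl i) = p := by
  simp only [Rank2At, h.lt_and_lt_iff hab]
  refine ⟨fun ⟨_, i, _, hi, _⟩ => ⟨i, hi⟩, fun ⟨i, hi⟩ => ?_⟩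
  exact ⟨_, i, a i, hi, rfl, le_rfl, hab i⟩

lemma not_rank2At_iff (h : Realizes a b σ pos) (hab : ∀ i, a i ≤ b i) (p : Fin N) :
    ¬Rank2At σ p ↔ ∃ j, pos (inr j) = p := by
  obtain ⟨x | j, rfl⟩ := pos.surjective p <;> simp [h.rank2At_iff hab]

lemma not_hasDecSeq (h : Realizes a b σ pos) (hab : ∀ i, a i ≤ b i) : ¬HasDecSeq σ 3 := by
  rintro ⟨q, hq, hσq⟩
  have h01 : (0 : Fin 3) < 1 := by decide
  have h12 : (1 : Fin 3) < 2 := by decide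
  obtain ⟨-, j, -, hj, -⟩ := (h.lt_and_lt_iff hab _ _).1 ⟨hq h01, hσq h01⟩
  obtain ⟨i, -, hi, -⟩ := (h.lt_and_lt_iff hab _ _).1 ⟨hq h12, hσq h12⟩
  exact inl_ne_inr (pos.injective (hi.trans hj.symm))

lemma rigidWithRanks (h : Realizes a b σ pos) (hab : ∀ i, a i ≤ b i)
    (hcover : ∀ j, ∃ i, a i ≤ j ∧ j ≤ b i) : RigidWithRanks m n ⟨N, σ⟩ := by
  refine ⟨h.not_hasDecSeq hab, kRigid_two_iff.2 fun p => ?_,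
    natCard_eq_iff_exists_strictMono.2
      ⟨_, fun i i' => (h.isRiffle_pos.inl_lt_inl i i').2, h.rank2At_iff hab⟩,
    natCard_eq_iff_exists_strictMono.2
      ⟨_, fun j j' => (h.isRiffle_pos.inr_lt_inr j j').2, h.not_rank2At_iff hab⟩⟩
  obtain ⟨i | j, rfl⟩ := pos.surjective p
  · exact ⟨pos (inr (a i)), .inl ((h.lt_and_lt_iff hab _ _).2 ⟨i, a i, rfl, rfl, le_rfl, hab i⟩)⟩
  · obtain ⟨i, hi⟩ := hcover j
    exact ⟨pos (inl i), .inr ((h.lt_and_lt_iff hab _ _).2 ⟨i, j, rfl, rfl, hi⟩)⟩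

lemma isOccurrenceLattice {K : Sublattice (Fin m × Fin n)} (h : Realizes a b σ pos)
    (hab : ∀ i, a i ≤ b i) (hmem : ∀ i j, (i, j) ∈ K ↔ a i ≤ j ∧ j ≤ b i) :
    IsOccurrenceLattice m n ⟨N, σ⟩ K :=
  ⟨fun i => pos (inl i), fun j => pos (inr j), fun i i' => (h.isRiffle_val.inl_lt_inl i i').2,
    fun j j' => (h.isRiffle_val.inr_lt_inr j j').2, h.rank2At_iff hab, h.not_rank2At_iff hab,
    fun i j => by rw [hmem, h.lt_and_lt_iff hab]; simp⟩

end Realizes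

lemma IsOccurrenceLattice.exists_realizes {m n N : ℕ} {σ : Perm (Fin N)}
    {K : Sublattice (Fin m × Fin n)} {a b : Fin m → Fin n} (hσ : ¬HasDecSeq σ 3)
    (hK : IsOccurrenceLattice m n ⟨N, σ⟩ K) (hmem : ∀ i j, (i, j) ∈ K ↔ a i ≤ j ∧ j ≤ b i)
    (hab : ∀ i, a i ≤ b i) : ∃ pos, Realizes a b σ pos := by
  obtain ⟨r2, r1, hv2, hv1, hr2, hr1, hL⟩ := hK
  have h2 (i : Fin m) : Rank2At σ (r2 i) := (hr2 _).2 ⟨i, rfl⟩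
  have h1 (j : Fin n) : ¬Rank2At σ (r1 j) := (hr1 _).2 ⟨j, rfl⟩
  have hp2 : StrictMono r2 := fun i i' h =>
    ((strictMonoOn_rank2At hσ).lt_iff_lt (h2 i) (h2 i')).1 (hv2 h)
  have hp1 : StrictMono r1 := fun j j' h =>
    (strictMonoOn_not_rank2At.lt_iff_lt (h1 j) (h1 j')).1 (hv1 h)
  have hrow (i : Fin m) := eq_Ici_and_eq_Iic_of_inter_eq_Icc (U := {j | r2 i < r1 j})
    (D := {j | σ (r1 j) < σ (r2 i)}) (fun _ _ hj hlt => hlt.trans_le (hp1.monotone hj))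
    (fun _ _ hj hlt => (hv1.monotone hj).trans_lt hlt)
    (Set.ext fun j => (hL i j).symm.trans (hmem i j)) (hab i)
  refine ⟨.ofBijective _ (bijective_sumElim hp2.injective hp1.injective hr2 hr1),
    ⟨fun _ _ => hp2.lt_iff_lt, fun _ _ => hp1.lt_iff_lt, fun i j => ?_⟩,
    ⟨fun _ _ => hv2.lt_iff_lt, fun _ _ => hv1.lt_iff_lt, fun i j => ?_⟩⟩
  · exact (Set.ext_iff.1 (hrow i).1 j).trans Fin.le_def
  · have hne : σ (r1 j) ≠ σ (r2 i) := σ.injective.ne fun h => h1 j (h ▸ h2 i)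
    change σ (r2 i) < σ (r1 j) ↔ _
    rw [← not_le, hne.le_iff_lt, Nat.add_one_le_iff, ← Fin.lt_def, ← not_le (a := j)]
    exact not_congr (Set.ext_iff.1 (hrow i).2 j)

end Realization

theorem twoRigid_equiv_subdirect_products_general (m n : ℕ) :
    (∀ π : Σ N : ℕ, Equiv.Perm (Fin N), RigidWithRanks m n π →
      ∃! K : Sublattice (Fin m × Fin n),
        IsSubdirect K ∧ IsOccurrenceLattice m n π K) ∧
    (∀ K : Sublattice (Fin m × Fin n), IsSubdirect K →
      ∃! π : Σ N : ℕ, Equiv.Perm (Fin N),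
        RigidWithRanks m n π ∧ IsOccurrenceLattice m n π K) := by
  refine ⟨fun π hπ => ?_, fun K hK => ?_⟩
  · obtain ⟨K, hK⟩ := exists_isSubdirect_isOccurrenceLattice hπ
    exact ⟨K, hK, fun K' hK' => hK'.2.eq hK.2⟩
  · obtain ⟨a, b, ha, hb, hmem⟩ := hK.exists_bounds
    have hab (i : Fin m) : a i ≤ b i :=
      let ⟨j, hj⟩ := hK.1 i; ((hmem i j).1 hj).1.trans ((hmem i j).1 hj).2
    have hcover (j : Fin n) : ∃ i, a i ≤ j ∧ j ≤ b i :=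
      let ⟨i, hi⟩ := hK.2 j; ⟨i, (hmem i j).1 hi⟩
    obtain ⟨σ, pos, hσ⟩ := exists_realizes ha hb
    refine ⟨⟨m + n, σ⟩, ⟨hσ.rigidWithRanks hab hcover, hσ.isOccurrenceLattice hab hmem⟩, ?_⟩
    rintro ⟨N, σ'⟩ ⟨hσ', hocc⟩
    obtain ⟨pos', h'⟩ := hocc.exists_realizes hσ'.1 hmem hab
    exact h'.sigma_eq hσ

/-- The 2-rigid permutations in `I₂` with `m` elements of rank 2 and `n` elements
of rank 1 are in one-to-one correspondence with the subdirect products of the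
chains `[m]` and `[n]`, via `π ↦ L_π`. -/
theorem twoRigid_equiv_subdirect_products (m n : ℕ) (hm : 0 < m) (hn : 0 < n) :
    (∀ π : Σ N : ℕ, Equiv.Perm (Fin N), RigidWithRanks m n π →
      ∃! K : Sublattice (Fin m × Fin n),
        IsSubdirect K ∧ IsOccurrenceLattice m n π K) ∧
    (∀ K : Sublattice (Fin m × Fin n), IsSubdirect K →
      ∃! π : Σ N : ℕ, Equiv.Perm (Fin N),
        RigidWithRanks m n π ∧ IsOccurrenceLattice m n π K) :=
  twoRigid_equiv_subdirect_products_general m n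
end

section
/- For positive integers k and ℓ with 0 ≤ ℓ ≤ k, the number of k-good permutations of length 2k + ℓ is the central binomial coefficient C(2ℓ, ℓ). -/
/-- `π` is `k`-good: every point of `π` lies in a subset of `π` whose pattern is
`ι_k ⊖ ι_k`, i.e. an increasing sequence of `k` points (the `u`s) lying entirely
above and to the left of another increasing sequence of `k` points (the `v`s). -/
def KGood (k : ℕ) {n : ℕ} (π : Equiv.Perm (Fin n)) : Prop :=
  ∀ p : Fin n, ∃ u v : Fin k → Fin n,
    StrictMono u ∧ StrictMono v ∧
    (StrictMono fun i => π (u i)) ∧ (StrictMono fun i => π (v i)) ∧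
    (∀ i j, u i < v j) ∧ (∀ i j, π (v j) < π (u i)) ∧
    ((∃ i, u i = p) ∨ (∃ j, v j = p))

/-!
A `321`-avoiding permutation is `k`-good exactly when every point moves by at least `k`. A point
of an occurrence of `ι_k ⊖ ι_k` in the upper block has the `k` points of the lower block below and
to its right, and `321`-avoidance puts every earlier point below it too, so it moves up by at
least `k`; the lower block is dual. Conversely, if every point moves by at least `k`, the first
`k` positions together with the first `k` values, or the last `k` values together with the last
`k` positions, form an occurrence through any given point.

Such a permutation is increasing on its excedance set `S` and on the complement, hence determined
by `S` and `T = π(S)`; on `2k + l` points, `S` contains `[0, k)` and lies in `[0, k + l)`, while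
`T` contains `[k + l, 2k + l)` and lies in `[k, 2k + l)`. Conversely, when `l ≤ k`, every such
pair with `#S = #T` comes from one, by counting points below each level. So these permutations
correspond to pairs of equal-size subsets of the `l` middle positions, and there are
`∑ C(l, i)² = C(2l, l)` of them.
-/

open Finset

section OrderIsoSubtype

variable {α : Type*} [LinearOrder α] {p q : α → Prop}

lemma strictMonoOn_of_orderIso {f : α → α} (e : {x // p x} ≃o {x // q x})
    (he : ∀ x : {x // p x}, f x = e x) : StrictMonoOn f {x | p x} := fun x hx y hy hxy => by
  rw [he ⟨x, hx⟩, he ⟨y, hy⟩]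
  exact e.strictMono (Subtype.mk_lt_mk.2 hxy)

lemma apply_eq_orderIso_of_strictMonoOn [Finite α] {σ : Equiv.Perm α}
    (hmem : ∀ x, q (σ x) ↔ p x) (hσ : StrictMonoOn σ {x | p x}) (e : {x // p x} ≃o {x // q x})
    (x : {x // p x}) : σ x = e x := by
  let e' : {x // p x} ≃o {x // q x} :=
    StrictMono.orderIsoOfSurjective (fun y => ⟨σ y, (hmem y).2 y.2⟩)
      (fun a b hab => hσ a.2 b.2 hab)
      (fun y => ⟨⟨σ.symm y, (hmem _).1 (by simpa using y.2)⟩, by ext; simp⟩)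
  exact congrArg (fun f : {x // p x} ≃o {x // q x} => (f x : α)) (Subsingleton.elim e' e)

end OrderIsoSubtype

lemma StrictMonoOn.strictMono_comp_iff {β γ ι : Type*} [LinearOrder β] [Preorder γ] [Preorder ι]
    {f : β → γ} {s : Set β} (hf : StrictMonoOn f s) {u : ι → β} (hu : ∀ i, u i ∈ s) :
    StrictMono (f ∘ u) ↔ StrictMono u :=
  ⟨fun h _ _ hab => (hf.lt_iff_lt (hu _) (hu _)).1 (h hab),
    fun h _ _ hab => hf (hu _) (hu _) (h hab)⟩

noncomputable def orderIsoOfCardEq {β γ : Type*} [Fintype β] [LinearOrder β] [Fintype γ]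
    [LinearOrder γ] (h : Fintype.card β = Fintype.card γ) : β ≃o γ :=
  (Fintype.orderIsoFinOfCardEq β rfl).symm.trans (Fintype.orderIsoFinOfCardEq γ h.symm)

section MergePerm

variable {α : Type*} [Fintype α] [LinearOrder α] {S T : Finset α}

lemma card_subtype_notMem_eq (h : #S = #T) :
    Fintype.card {x // x ∉ S} = Fintype.card {x // x ∉ T} := by
  simp [Fintype.card_subtype_compl, h]

noncomputable def mergePerm (S T : Finset α) (h : #S = #T) : Equiv.Perm α :=
  Equiv.subtypeCongr (orderIsoOfCardEq (by simpa using h)).toEquiv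
    (orderIsoOfCardEq (card_subtype_notMem_eq h)).toEquiv

lemma exists_orderIso_mergePerm_eq (h : #S = #T) :
    ∃ e : {x // x ∈ S} ≃o {x // x ∈ T}, ∀ x : {x // x ∈ S}, mergePerm S T h x = e x :=
  ⟨orderIsoOfCardEq (by simpa using h), fun x => by simp [mergePerm, Equiv.subtypeCongr, x.2]⟩

lemma exists_orderIso_mergePerm_eq_compl (h : #S = #T) :
    ∃ e : {x // x ∉ S} ≃o {x // x ∉ T}, ∀ x : {x // x ∉ S}, mergePerm S T h x = e x :=
  ⟨orderIsoOfCardEq (card_subtype_notMem_eq h), fun x => by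
    simp [mergePerm, Equiv.subtypeCongr, x.2]⟩

lemma mergePerm_mem_iff (h : #S = #T) (x : α) : mergePerm S T h x ∈ T ↔ x ∈ S := by
  by_cases hx : x ∈ S
  · obtain ⟨e, he⟩ := exists_orderIso_mergePerm_eq h
    exact iff_of_true (he ⟨x, hx⟩ ▸ (e ⟨x, hx⟩).2) hx
  · obtain ⟨e, he⟩ := exists_orderIso_mergePerm_eq_compl h
    exact iff_of_false (he ⟨x, hx⟩ ▸ (e ⟨x, hx⟩).2) hx

lemma strictMonoOn_mergePerm (h : #S = #T) : StrictMonoOn (mergePerm S T h) S :=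
  let ⟨e, he⟩ := exists_orderIso_mergePerm_eq h
  strictMonoOn_of_orderIso e he

lemma strictMonoOn_mergePerm_compl (h : #S = #T) : StrictMonoOn (mergePerm S T h) (↑S)ᶜ :=
  let ⟨e, he⟩ := exists_orderIso_mergePerm_eq_compl h
  strictMonoOn_of_orderIso e he

lemma eq_mergePerm (h : #S = #T) {σ : Equiv.Perm α} (hmem : ∀ x, σ x ∈ T ↔ x ∈ S)
    (hS : StrictMonoOn σ S) (hSc : StrictMonoOn σ (↑S)ᶜ) : σ = mergePerm S T h := by
  ext x
  by_cases hx : x ∈ S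
  · obtain ⟨e, he⟩ := exists_orderIso_mergePerm_eq h
    rw [he ⟨x, hx⟩]
    exact apply_eq_orderIso_of_strictMonoOn hmem hS e ⟨x, hx⟩
  · obtain ⟨e, he⟩ := exists_orderIso_mergePerm_eq_compl h
    rw [he ⟨x, hx⟩]
    exact apply_eq_orderIso_of_strictMonoOn (p := (· ∉ S)) (q := (· ∉ T))
      (fun y => not_congr (hmem y)) hSc e ⟨x, hx⟩

lemma map_mergePerm (h : #S = #T) : S.map (mergePerm S T h).toEmbedding = T := by
  ext y
  simpa using (mergePerm_mem_iff h ((mergePerm S T h).symm y)).symm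

end MergePerm

section FinPerm

variable {n k : ℕ} {π : Equiv.Perm (Fin n)}

def excedances (π : Equiv.Perm (Fin n)) : Finset (Fin n) := {x | x < π x}

@[simp]
lemma mem_excedances {x : Fin n} : x ∈ excedances π ↔ x < π x := by
  simp [excedances]

lemma hasDecSeq_three_of_lt_s17 {x y z : Fin n} (hxy : x < y) (hyz : y < z) (h₁ : π y < π x)
    (h₂ : π z < π y) : HasDecSeq π 3 :=
  ⟨![x, y, z], Fin.strictMono_iff_lt_succ.2 (by simp [Fin.forall_fin_two, hxy, hyz]),
    Fin.strictAnti_iff_succ_lt.2 (by simp [Fin.forall_fin_two, h₁, h₂])⟩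

lemma HasDecSeq.symm (h : HasDecSeq π k) : HasDecSeq π.symm k := by
  obtain ⟨q, hq, hπq⟩ := h
  exact ⟨fun i => π (q (Fin.rev i)), fun a b hab => hπq (Fin.rev_lt_rev.2 hab),
    fun a b hab => by simpa using hq (Fin.rev_lt_rev.2 hab)⟩

@[simp]
lemma hasDecSeq_symm_iff : HasDecSeq π.symm k ↔ HasDecSeq π k :=
  ⟨HasDecSeq.symm, HasDecSeq.symm⟩

lemma strictMonoOn_excedances (hπ : ¬HasDecSeq π 3) : StrictMonoOn π {x | x < π x} := by
  intro x _ y hy hxy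
  by_contra h
  have hyx : π y < π x := lt_of_le_of_ne (not_lt.1 h) (π.injective.ne hxy.ne')
  obtain ⟨z, hyz, hz⟩ : ∃ z, y < z ∧ π z < π y := by
    by_contra! hno
    -- the `π y > y` values below `π y` would sit at the `y - 1` positions below `y` other than `x`
    have hsub : (Iio (π y)).map π.symm.toEmbedding ⊆ (Iio y).erase x := by
      intro w hw
      obtain ⟨v, hv, rfl⟩ := mem_map.1 hw
      replace hv : π (π.symm v) < π y := by simpa using hv
      refine mem_erase.2 ⟨fun hwx => (hwx ▸ hv).not_gt hyx, mem_Iio.2 (lt_of_not_ge fun hle => ?_)⟩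
      rcases hle.eq_or_lt with he | hlt
      · exact (he ▸ hv).false
      · exact (hno _ hlt).not_gt hv
    have := card_le_card hsub
    rw [card_map, Fin.card_Iio, card_erase_of_mem (mem_Iio.2 hxy), Fin.card_Iio] at this
    have : (y : ℕ) < π y := hy
    omega
  exact hπ (hasDecSeq_three_of_lt_s17 hxy hyz hyx hz)

lemma strictMonoOn_deficiencies (hπ : ¬HasDecSeq π 3) : StrictMonoOn π {x | π x < x} := by
  intro x hx y hy hxy
  by_contra h
  have hyx : π y < π x := lt_of_le_of_ne (not_lt.1 h) (π.injective.ne hxy.ne')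
  have := strictMonoOn_excedances (π := π.symm) (by simpa using hπ) (a := π y) (b := π x)
    (by simpa using hy) (by simpa using hx) hyx
  simp only [Equiv.symm_apply_apply] at this
  exact this.not_gt hxy

lemma not_hasDecSeq_three_of_strictMonoOn {s : Set (Fin n)} (hs : StrictMonoOn π s)
    (hsc : StrictMonoOn π sᶜ) : ¬HasDecSeq π 3 := by
  rintro ⟨q, hq, hπq⟩
  have key : ∀ i j, i < j → (q i ∈ s ↔ q j ∉ s) := fun i j hij =>
    ⟨fun hi hj => (hs hi hj (hq hij)).not_gt (hπq hij),
      fun hj => by_contra fun hi => (hsc hi hj (hq hij)).not_gt (hπq hij)⟩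
  have := key 0 1 (by decide)
  have := key 1 2 (by decide)
  have := key 0 2 (by decide)
  tauto

def MovesAtLeast (k : ℕ) (π : Equiv.Perm (Fin n)) : Prop :=
  ∀ x : Fin n, (x : ℕ) + k ≤ π x ∨ (π x : ℕ) + k ≤ x

def IsInSkewPattern (k : ℕ) (π : Equiv.Perm (Fin n)) (p : Fin n) : Prop :=
  ∃ u v : Fin k → Fin n,
    StrictMono u ∧ StrictMono v ∧
    (StrictMono fun i => π (u i)) ∧ (StrictMono fun i => π (v i)) ∧
    (∀ i j, u i < v j) ∧ (∀ i j, π (v j) < π (u i)) ∧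
    ((∃ i, u i = p) ∨ (∃ j, v j = p))

lemma kGood_iff_forall_isInSkewPattern : KGood k π ↔ ∀ p, IsInSkewPattern k π p :=
  Iff.rfl

lemma add_le_apply_of_lowerRight (hπ : ¬HasDecSeq π 3) (hk : 0 < k) {p : Fin n}
    {v : Fin k → Fin n} (hv : StrictMono v) (hpv : ∀ j, p < v j) (hvp : ∀ j, π (v j) < π p) :
    (p : ℕ) + k ≤ π p := by
  -- everything left of `p` lies below `π p`, or it would form a `321` with `p` and `v 0`
  have hbelow : ∀ x ∈ Iio p ∪ univ.map ⟨v, hv.injective⟩, π x < π p := by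
    intro x hx
    rcases mem_union.1 hx with hx | hx
    · have hxp := mem_Iio.1 hx
      refine lt_of_not_ge fun hle => hπ (hasDecSeq_three_of_lt_s17 hxp (hpv ⟨0, hk⟩) ?_ (hvp _))
      exact lt_of_le_of_ne hle (π.injective.ne hxp.ne')
    · obtain ⟨j, -, rfl⟩ := mem_map.1 hx
      exact hvp j
  have hdisj : Disjoint (Iio p) (univ.map ⟨v, hv.injective⟩) := disjoint_left.2 fun x hx hx' => by
    obtain ⟨j, -, rfl⟩ := mem_map.1 hx'
    exact (mem_Iio.1 hx).not_gt (hpv j)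
  have := card_le_card_of_injOn π (fun x hx => mem_Iio.2 (hbelow x hx)) π.injective.injOn
  rwa [card_union_of_disjoint hdisj, Fin.card_Iio, card_map, card_univ, Fintype.card_fin,
    Fin.card_Iio] at this

lemma movesAtLeast_of_kGood (hk : 0 < k) (hπ : ¬HasDecSeq π 3) (h : KGood k π) :
    MovesAtLeast k π := by
  intro (p : Fin n)
  obtain ⟨u, v, -, hv, hπu, -, huv, hvu, ⟨i, rfl⟩ | ⟨j, rfl⟩⟩ := h p
  · exact Or.inl (add_le_apply_of_lowerRight hπ hk hv (huv i) (hvu i))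
  · right
    simpa using add_le_apply_of_lowerRight (π := π.symm) (by simpa using hπ) hk hπu
      (p := π (v j)) (fun i => hvu i j) (fun i => by simpa using huv i j)

def IsBetweenIio (a b : ℕ) (S : Finset (Fin n)) : Prop :=
  (∀ x : Fin n, (x : ℕ) < a → x ∈ S) ∧ ∀ x ∈ S, (x : ℕ) < b

lemma add_le_apply_of_card_filter_le {S T : Finset (Fin n)} {f : Fin n → Fin n}
    (hf : StrictMonoOn f S) (hST : ∀ x ∈ S, f x ∈ T)
    (hcard : ∀ m : ℕ, #{t ∈ T | t.val < m + k} ≤ #{s ∈ S | s.val < m})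
    {x : Fin n} (hx : x ∈ S) : (x : ℕ) + k ≤ f x := by
  by_contra! hlt
  have hle : #{s ∈ S | s ≤ x} ≤ #{t ∈ T | t.val < x.val + k} := by
    refine card_le_card_of_injOn f (fun s hs => ?_) (hf.injOn.mono (filter_subset _ _))
    simp only [coe_filter, Set.mem_ofPred_eq] at hs ⊢
    exact ⟨hST s hs.1, lt_of_le_of_lt (hf.monotoneOn hs.1 hx hs.2) hlt⟩
  have hlt' : #{s ∈ S | s.val < x.val} < #{s ∈ S | s ≤ x} := by
    refine card_lt_card
      ⟨monotone_filter_right _ fun _ _ h => le_of_lt (Fin.lt_def.2 h), fun hsub => ?_⟩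
    simpa using (mem_filter.1 (hsub (mem_filter.2 ⟨hx, le_rfl⟩))).2
  have := hcard x
  omega

lemma apply_add_le_of_card_filter_le {S T : Finset (Fin n)} {σ : Equiv.Perm (Fin n)}
    (hσ : StrictMonoOn σ S) (hmem : ∀ x, σ x ∈ T ↔ x ∈ S)
    (hcard : ∀ m : ℕ, #{s ∈ S | s.val < m + k} ≤ #{t ∈ T | t.val < m})
    {x : Fin n} (hx : x ∈ S) : (σ x : ℕ) + k ≤ x := by
  have hσT : StrictMonoOn σ.symm T := fun a ha b hb hab =>
    (hσ.lt_iff_lt ((hmem _).1 (by simpa)) ((hmem _).1 (by simpa))).1 (by simpa)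
  simpa using add_le_apply_of_card_filter_le hσT (fun y hy => (hmem _).1 (by simpa)) hcard
    ((hmem x).2 hx)

lemma excedances_eq_of_add_le (hk : 0 < k) {S : Finset (Fin n)}
    (hS : ∀ x ∈ S, (x : ℕ) + k ≤ π x) (hSc : ∀ x ∉ S, (π x : ℕ) + k ≤ x) :
    excedances π = S := by
  ext x
  rw [mem_excedances, Fin.lt_def]
  by_cases hx : x ∈ S
  · exact iff_of_true (by have := hS x hx; omega) hx
  · exact iff_of_false (by have := hSc x hx; omega) hx

end FinPerm

section

variable {k l : ℕ} {S T : Finset (Fin (2 * k + l))} {π : Equiv.Perm (Fin (2 * k + l))}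

namespace MovesAtLeast

variable (hm : MovesAtLeast k π) {x : Fin (2 * k + l)}
include hm

lemma add_le_apply_of_lt (hx : (x : ℕ) < k) : (x : ℕ) + k ≤ π x :=
  (hm x).resolve_right (by omega)

lemma apply_add_le_of_apply_lt (hx : (π x : ℕ) < k) : (π x : ℕ) + k ≤ x :=
  (hm x).resolve_left (by omega)

lemma apply_add_le_of_le (hx : k + l ≤ (x : ℕ)) : (π x : ℕ) + k ≤ x :=
  (hm x).resolve_left (by have := (π x).isLt; omega)

lemma add_le_apply_of_le_apply (hx : k + l ≤ (π x : ℕ)) : (x : ℕ) + k ≤ π x :=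
  (hm x).resolve_right (by have := x.isLt; omega)

end MovesAtLeast

lemma isInSkewPattern_of_lt (hπ : ¬HasDecSeq π 3) (hm : MovesAtLeast k π) {p : Fin (2 * k + l)}
    (hp : (p : ℕ) < k ∨ (π p : ℕ) < k) : IsInSkewPattern k π p := by
  have hkn : k ≤ 2 * k + l := by omega
  set u : Fin k → Fin (2 * k + l) := Fin.castLE hkn
  set v : Fin k → Fin (2 * k + l) := fun j => π.symm (Fin.castLE hkn j)
  have hu : ∀ i, (u i : ℕ) + k ≤ π (u i) := fun i => hm.add_le_apply_of_lt i.isLt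
  have hv : ∀ j, (π (v j) : ℕ) + k ≤ v j := fun j =>
    hm.apply_add_le_of_apply_lt (by simp [v])
  have hπv : StrictMono fun j => π (v j) := by simpa [v] using Fin.strictMono_castLE hkn
  refine ⟨u, v, Fin.strictMono_castLE hkn, ?_, ?_, hπv, fun i j => ?_, fun i j => ?_, ?_⟩
  · refine ((strictMonoOn_deficiencies hπ).strictMono_comp_iff fun j => ?_).1 hπv
    exact Fin.lt_def.2 (by have := hv j; omega)
  · refine ((strictMonoOn_excedances hπ).strictMono_comp_iff fun i => ?_).2
      (Fin.strictMono_castLE hkn)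
    exact Fin.lt_def.2 (by have := hu i; omega)
  · have := hv j
    simp only [Fin.lt_def, u, Fin.val_castLE]
    omega
  · have := hu i
    simp only [v, Equiv.apply_symm_apply, Fin.lt_def, Fin.val_castLE] at this ⊢
    omega
  · rcases hp with hp | hp
    · exact Or.inl ⟨⟨p, hp⟩, rfl⟩
    · exact Or.inr ⟨⟨π p, hp⟩, by simp [v]⟩

lemma isInSkewPattern_of_le (hπ : ¬HasDecSeq π 3) (hm : MovesAtLeast k π) {p : Fin (2 * k + l)}
    (hp : k + l ≤ (p : ℕ) ∨ k + l ≤ (π p : ℕ)) : IsInSkewPattern k π p := by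
  set u : Fin k → Fin (2 * k + l) := fun i => π.symm ⟨k + l + i, by omega⟩
  set v : Fin k → Fin (2 * k + l) := fun j => ⟨k + l + j, by omega⟩
  have hu : ∀ i, (u i : ℕ) + k ≤ π (u i) := fun i =>
    hm.add_le_apply_of_le_apply (by simp [u])
  have hv : ∀ j, (π (v j) : ℕ) + k ≤ v j := fun j => hm.apply_add_le_of_le (by simp [v])
  have hvmono : StrictMono v := fun a b hab => Fin.mk_lt_mk.2 (by have := Fin.lt_def.1 hab; omega)
  have hπu : StrictMono fun i => π (u i) := fun a b hab => by
    simp only [u, Equiv.apply_symm_apply]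
    exact Fin.mk_lt_mk.2 (by have := Fin.lt_def.1 hab; omega)
  refine ⟨u, v, ?_, hvmono, hπu, ?_, fun i j => ?_, fun i j => ?_, ?_⟩
  · refine ((strictMonoOn_excedances hπ).strictMono_comp_iff fun i => ?_).1 hπu
    exact Fin.lt_def.2 (by have := hu i; omega)
  · refine ((strictMonoOn_deficiencies hπ).strictMono_comp_iff fun j => ?_).2 hvmono
    exact Fin.lt_def.2 (by have := hv j; omega)
  · have := hu i
    have := (π (u i)).isLt
    simp only [Fin.lt_def, v]
    omega
  · have := hv j
    have := (v j).isLt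
    simp only [Fin.lt_def, u, Equiv.apply_symm_apply] at this ⊢
    omega
  · rcases hp with hp | hp
    · exact Or.inr ⟨⟨p - (k + l), by omega⟩, Fin.ext (by simp [v]; omega)⟩
    · exact Or.inl ⟨⟨π p - (k + l), by omega⟩, by
        rw [Equiv.symm_apply_eq]; exact Fin.ext (by simp; omega)⟩

lemma kGood_of_movesAtLeast (hl : l ≤ k) (hπ : ¬HasDecSeq π 3) (hm : MovesAtLeast k π) :
    KGood k π := by
  refine kGood_iff_forall_isInSkewPattern.2 fun p => ?_
  have := p.isLt
  have := (π p).isLt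
  rcases hm p with h | h
  · by_cases hp : (p : ℕ) < k
    · exact isInSkewPattern_of_lt hπ hm (Or.inl hp)
    · exact isInSkewPattern_of_le hπ hm (Or.inr (by omega))
  · by_cases hp : (π p : ℕ) < k
    · exact isInSkewPattern_of_lt hπ hm (Or.inr hp)
    · exact isInSkewPattern_of_le hπ hm (Or.inl (by omega))

lemma card_filter_lt_add_le_card_filter_lt (hl : l ≤ k)
    (hS : IsBetweenIio k (k + l) S) (hT : IsBetweenIio k (k + l) Tᶜ) (hST : #S = #T) (m : ℕ) :
    #{t ∈ T | t.val < m + k} ≤ #{s ∈ S | s.val < m} := by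
  obtain ⟨hS₁, hS₂⟩ := hS
  obtain ⟨hT₁, hT₂⟩ := hT
  rcases le_or_gt m k with hm | hm
  · calc #{t ∈ T | t.val < m + k}
        ≤ #(Ico k (m + k)) := by
          refine card_le_card_of_injOn Fin.val (fun t ht => ?_) Fin.val_injective.injOn
          simp only [coe_filter, Set.mem_ofPred_eq, coe_Ico, Set.mem_Ico] at ht ⊢
          exact ⟨not_lt.1 fun h => mem_compl.1 (hT₁ t h) ht.1, ht.2⟩
      _ = #{x : Fin (2 * k + l) | x.val < m} := by simp [Fin.card_filter_val_lt]; omega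
      _ ≤ #{s ∈ S | s.val < m} :=
          card_le_card fun x hx => by
            simp only [mem_filter, mem_univ, true_and] at hx ⊢
            exact ⟨hS₁ x (by omega), hx⟩
  · -- as `#S = #T`, it suffices that `S` has at most as many points `≥ m` as `T` has `≥ m + k`
    have hSge : #{s ∈ S | ¬ s.val < m} ≤ k + l - m := by
      refine (card_le_card_of_injOn Fin.val (t := Ico m (k + l)) (fun s hs => ?_)
        Fin.val_injective.injOn).trans (by simp)
      simp only [coe_filter, Set.mem_ofPred_eq, coe_Ico, Set.mem_Ico] at hs ⊢
      exact ⟨not_lt.1 hs.2, hS₂ s hs.1⟩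
    have hTge : k + l - m ≤ #{t ∈ T | ¬ t.val < m + k} := by
      have h := card_filter_add_card_filter_not (s := (univ : Finset (Fin (2 * k + l))))
        (fun x => x.val < m + k)
      rw [Fin.card_filter_val_lt, card_univ, Fintype.card_fin] at h
      calc k + l - m ≤ #{x : Fin (2 * k + l) | ¬ x.val < m + k} := by omega
        _ ≤ #{t ∈ T | ¬ t.val < m + k} := card_le_card fun x hx => by
          simp only [mem_filter, mem_univ, true_and] at hx ⊢
          exact ⟨not_not.1 fun h => by have := hT₂ x (mem_compl.2 h); omega, hx⟩
    have hS' := card_filter_add_card_filter_not (s := S) (fun s => s.val < m)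
    have hT' := card_filter_add_card_filter_not (s := T) (fun t => t.val < m + k)
    omega

lemma add_le_mergePerm (hl : l ≤ k) (hS : IsBetweenIio k (k + l) S)
    (hT : IsBetweenIio k (k + l) Tᶜ) (hST : #S = #T) {x : Fin (2 * k + l)} (hx : x ∈ S) :
    (x : ℕ) + k ≤ mergePerm S T hST x :=
  add_le_apply_of_card_filter_le (strictMonoOn_mergePerm hST)
    (fun y hy => (mergePerm_mem_iff hST y).2 hy)
    (card_filter_lt_add_le_card_filter_lt hl hS hT hST) hx

lemma mergePerm_add_le (hl : l ≤ k) (hS : IsBetweenIio k (k + l) S)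
    (hT : IsBetweenIio k (k + l) Tᶜ) (hST : #S = #T) {x : Fin (2 * k + l)} (hx : x ∉ S) :
    (mergePerm S T hST x : ℕ) + k ≤ x := by
  refine apply_add_le_of_card_filter_le (S := Sᶜ) (T := Tᶜ)
    (by simpa using strictMonoOn_mergePerm_compl hST) (fun y => by simp [mergePerm_mem_iff])
    (card_filter_lt_add_le_card_filter_lt hl hT (by simpa using hS) ?_) (mem_compl.2 hx)
  simp [card_compl, hST]

lemma isBetweenIio_excedances (hm : MovesAtLeast k π) :
    IsBetweenIio k (k + l) (excedances π) := by
  refine ⟨fun x hx => ?_, fun x hx => ?_⟩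
  · have := hm.add_le_apply_of_lt hx
    exact mem_excedances.2 (Fin.lt_def.2 (by omega))
  · replace hx := Fin.lt_def.1 (mem_excedances.1 hx)
    by_contra hle
    have := hm.apply_add_le_of_le (not_lt.1 hle)
    omega

lemma isBetweenIio_compl_map_excedances (hm : MovesAtLeast k π) :
    IsBetweenIio k (k + l) ((excedances π).map π.toEmbedding)ᶜ := by
  refine ⟨fun y hy => ?_, fun y hy => ?_⟩
  · have := hm.apply_add_le_of_apply_lt (x := π.symm y) (by simpa using hy)
    rw [mem_compl, mem_map_equiv, mem_excedances, Fin.lt_def]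
    omega
  · rw [mem_compl, mem_map_equiv, mem_excedances, Fin.lt_def, Equiv.apply_symm_apply] at hy
    have := (π.symm y).isLt
    rcases hm (π.symm y) with h | h <;> simp only [Equiv.apply_symm_apply] at h <;> omega

lemma eq_mergePerm_excedances (hk : 0 < k) (hπ : ¬HasDecSeq π 3) (hm : MovesAtLeast k π) :
    π = mergePerm (excedances π) ((excedances π).map π.toEmbedding) (card_map _).symm := by
  refine eq_mergePerm _ (fun x => by simp) ?_ ?_
  · simpa [excedances] using strictMonoOn_excedances hπ
  · refine (strictMonoOn_deficiencies hπ).mono fun x hx => ?_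
    replace hx : ¬ (x : ℕ) < π x := fun h => hx (mem_excedances.2 (Fin.lt_def.2 h))
    show (π x : ℕ) < x
    rcases hm x with h | h <;> omega

abbrev ExcedancePairs (k l : ℕ) : Type :=
  {p : Finset (Fin (2 * k + l)) × Finset (Fin (2 * k + l)) //
    IsBetweenIio k (k + l) p.1 ∧ IsBetweenIio k (k + l) p.2ᶜ ∧ #p.1 = #p.2}

noncomputable def movesAtLeastEquivExcedancePairs (hk : 0 < k) (hl : l ≤ k) :
    {π : Equiv.Perm (Fin (2 * k + l)) // ¬HasDecSeq π 3 ∧ MovesAtLeast k π} ≃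
      ExcedancePairs k l where
  toFun π := ⟨(excedances π.1, (excedances π.1).map π.1.toEmbedding),
    isBetweenIio_excedances π.2.2, isBetweenIio_compl_map_excedances π.2.2, (card_map _).symm⟩
  invFun p := ⟨mergePerm p.1.1 p.1.2 p.2.2.2,
    not_hasDecSeq_three_of_strictMonoOn (strictMonoOn_mergePerm _)
      (strictMonoOn_mergePerm_compl _),
    fun x => (em (x ∈ p.1.1)).imp (add_le_mergePerm hl p.2.1 p.2.2.1 p.2.2.2)
      (mergePerm_add_le hl p.2.1 p.2.2.1 p.2.2.2)⟩
  left_inv π := Subtype.ext (eq_mergePerm_excedances hk π.2.1 π.2.2).symm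
  right_inv p := by
    have hexc : excedances (mergePerm p.1.1 p.1.2 p.2.2.2) = p.1.1 :=
      excedances_eq_of_add_le hk (fun x => add_le_mergePerm hl p.2.1 p.2.2.1 p.2.2.2)
        (fun x => mergePerm_add_le hl p.2.1 p.2.2.1 p.2.2.2)
    ext1
    simp only [hexc, map_mergePerm]

def midEmb (k l : ℕ) : Fin l ↪ Fin (2 * k + l) :=
  ⟨fun a => ⟨k + a, by omega⟩, fun a b h => Fin.ext (by simpa using h)⟩

@[simp]
lemma val_midEmb (a : Fin l) : (midEmb k l a : ℕ) = k + a := rfl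

noncomputable def midPart (k : ℕ) (S : Finset (Fin (2 * k + l))) : Finset (Fin l) :=
  S.preimage (midEmb k l) (midEmb k l).injective.injOn

def iioUnionMid (k : ℕ) (A : Finset (Fin l)) : Finset (Fin (2 * k + l)) :=
  ({x | x.val < k} : Finset (Fin (2 * k + l))) ∪ A.map (midEmb k l)

lemma isBetweenIio_iioUnionMid (A : Finset (Fin l)) : IsBetweenIio k (k + l) (iioUnionMid k A) := by
  refine ⟨fun x hx => mem_union_left _ (by simpa using hx), fun x hx => ?_⟩
  rcases mem_union.1 hx with hx | hx
  · have := (mem_filter.1 hx).2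
    omega
  · obtain ⟨a, -, rfl⟩ := mem_map.1 hx
    simp

lemma card_iioUnionMid (A : Finset (Fin l)) : #(iioUnionMid k A) = k + #A := by
  rw [iioUnionMid, card_union_of_disjoint, Fin.card_filter_val_lt, card_map]
  · omega
  · refine disjoint_left.2 fun x hx hx' => ?_
    obtain ⟨a, -, rfl⟩ := mem_map.1 hx'
    simp at hx

lemma midPart_iioUnionMid (A : Finset (Fin l)) : midPart k (iioUnionMid k A) = A := by
  ext a
  rw [midPart, mem_preimage]
  simp [iioUnionMid]

lemma iioUnionMid_midPart (hS : IsBetweenIio k (k + l) S) :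
    iioUnionMid k (midPart k S) = S := by
  ext x
  simp only [iioUnionMid, midPart, mem_union, mem_filter, mem_univ, true_and, mem_map,
    mem_preimage]
  refine ⟨?_, fun hx => ?_⟩
  · rintro (hx | ⟨a, ha, rfl⟩)
    · exact hS.1 x hx
    · exact ha
  · by_cases hxk : x.val < k
    · exact Or.inl hxk
    · have := hS.2 x hx
      have hmid : midEmb k l ⟨x - k, by omega⟩ = x := Fin.ext (by simp; omega)
      exact Or.inr ⟨_, by rwa [hmid], hmid⟩

lemma card_eq_add_card_midPart (hS : IsBetweenIio k (k + l) S) :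
    #S = k + #(midPart k S) := by
  rw [← card_iioUnionMid, iioUnionMid_midPart hS]

lemma midPart_compl (S : Finset (Fin (2 * k + l))) : midPart k Sᶜ = (midPart k S)ᶜ :=
  preimage_compl _ (midEmb k l).injective

noncomputable def finsetPairsEquivExcedancePairs :
    {q : Finset (Fin l) × Finset (Fin l) // #q.1 = #q.2} ≃
      ExcedancePairs k l where
  toFun q := ⟨(iioUnionMid k q.1.1, (iioUnionMid k q.1.2ᶜ)ᶜ), isBetweenIio_iioUnionMid _,
    by simpa using isBetweenIio_iioUnionMid q.1.2ᶜ, by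
      have := card_le_univ q.1.2
      simp only [card_compl, card_iioUnionMid, Fintype.card_fin] at this ⊢
      omega⟩
  invFun p := ⟨(midPart k p.1.1, midPart k p.1.2), by
    have h₁ := card_eq_add_card_midPart p.2.1
    have h₂ := card_eq_add_card_midPart p.2.2.1
    have hl : #(midPart k p.1.2) ≤ l := by simpa using card_le_univ (midPart k p.1.2)
    have hn : #p.1.2 ≤ 2 * k + l := by simpa using card_le_univ p.1.2
    simp only [card_compl, midPart_compl, Fintype.card_fin] at h₂
    have := p.2.2.2
    show #(midPart k p.1.1) = #(midPart k p.1.2)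
    omega⟩
  left_inv q := by
    ext1
    simp [midPart_iioUnionMid, midPart_compl]
  right_inv p := by
    ext1
    simp [iioUnionMid_midPart p.2.1, ← midPart_compl, iioUnionMid_midPart p.2.2.1]

end

lemma card_finsetPairs_card_eq (ι : Type*) [Fintype ι] :
    Nat.card {q : Finset ι × Finset ι // #q.1 = #q.2} =
      (2 * Fintype.card ι).choose (Fintype.card ι) := by
  classical
  rw [Nat.card_eq_fintype_card, Fintype.card_subtype, ← Nat.sum_range_choose_sq,
    card_eq_sum_card_fiberwise (f := fun q => #q.1) (t := range (Fintype.card ι + 1))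
      fun q _ => mem_range.2 (Nat.lt_succ_of_le (card_le_univ _))]
  refine sum_congr rfl fun i _ => ?_
  have : {q ∈ ({q | #q.1 = #q.2} : Finset (Finset ι × Finset ι)) | #q.1 = i} =
      powersetCard i univ ×ˢ powersetCard i univ := by
    ext q
    simp only [mem_filter, mem_univ, true_and, mem_product, mem_powersetCard, subset_univ]
    omega
  rw [this, card_product, card_powersetCard, card_univ, sq]

/-- For `0 ≤ ℓ ≤ k`, the number of `k`-good permutations of length `2k + ℓ` is the
central binomial coefficient `C(2ℓ, ℓ)`. -/
theorem count_kGood (k l : ℕ) (hk : 0 < k) (hl : l ≤ k) :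
    Nat.card {π : Equiv.Perm (Fin (2 * k + l)) // ¬ HasDecSeq π 3 ∧ KGood k π} =
      Nat.choose (2 * l) l := by
  have hgood : ∀ π : Equiv.Perm (Fin (2 * k + l)),
      ¬HasDecSeq π 3 ∧ KGood k π ↔ ¬HasDecSeq π 3 ∧ MovesAtLeast k π := fun π =>
    and_congr_right fun hπ => ⟨movesAtLeast_of_kGood hk hπ, kGood_of_movesAtLeast hl hπ⟩
  rw [Nat.card_congr ((Equiv.subtypeEquivRight hgood).trans
      ((movesAtLeastEquivExcedancePairs hk hl).trans finsetPairsEquivExcedancePairs.symm)),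
    card_finsetPairs_card_eq, Fintype.card_fin]
end

section
/- For every positive integer k, the number of k-good permutations of length 2k + ℓ with ℓ = k + 1 is also C(2ℓ, ℓ) = C(2k+2, k+1). -/
/-!
Write `n = 3k + 1`. A point of a `k`-good permutation has `k` points below and to its right or
`k` points above and to its left, so no point lies in the lower-left or the upper-right `k × k`
corner. For a `321`-avoiding permutation `π` with these two corners empty, let `P` be the set of
positions in `[k, 2k]` carrying a value `≥ 2k` and `p = #P`. Comparing with the points that
witness `321`-avoidance (the values `0` and `3k`, the positions `0` and `3k`) and counting, one
finds that `π` is a staircase: it maps increasingly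
* the positions `[0, k)` onto the values in `[k, 3k - p]` outside a set `C ⊆ [k, 2k]`,
* the positions in `P` onto the top `p` values,
* the other positions in `[k, 2k + p)` onto `[0, k)`,
* the positions `[2k + p, 3k]` onto `C`.
Conversely, for all `P, C ⊆ [k, 2k]` with `#P + #C = k + 1` there is exactly one such
permutation, it avoids `321`, and it is `k`-good: the first and third blocks form one copy of
`ι_k ⊖ ι_k`, and the points with a large value or a large position contain another one through
every remaining point. So the count is `∑ₚ C(k+1, p) C(k+1, k+1-p) = C(2k+2, k+1)`.
-/

open Finset

namespace Fin

theorem card_filter_val_Ico {n a b : ℕ} (hb : b ≤ n) :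
    #{i : Fin n | a ≤ (i : ℕ) ∧ (i : ℕ) < b} = b - a := by
  rw [← Nat.card_Ico, ← card_map Fin.valEmbedding]
  congr 1
  ext m
  simp only [mem_map, mem_filter, mem_univ, true_and, Fin.valEmbedding_apply, mem_Ico]
  exact ⟨fun ⟨i, hi, him⟩ => him ▸ hi, fun hm => ⟨⟨m, by omega⟩, hm, rfl⟩⟩

theorem card_filter_le_val {n m : ℕ} : #{i : Fin n | m ≤ (i : ℕ)} = n - m := by
  rw [← card_filter_val_Ico le_rfl]
  congr 1; ext i; simp

theorem card_filter_lt_val {n m : ℕ} : #{i : Fin n | m < (i : ℕ)} = n - (m + 1) := by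
  rw [← card_filter_le_val]; rfl

theorem card_filter_lt_val_add {n p : ℕ} (hp : p ≤ n + 1) :
    #{i : Fin (n + 1) | n < (i : ℕ) + p} = p := by
  have : ({i | n < (i : ℕ) + p} : Finset (Fin (n + 1))) =
      ({i | n + 1 - p ≤ (i : ℕ)} : Finset (Fin (n + 1))) := by
    ext i; simp only [mem_filter, mem_univ, true_and]; omega
  rw [this, card_filter_le_val]
  omega

theorem le_of_injective_of_forall_lt {k n : ℕ} {f : Fin k → Fin n} (hf : Function.Injective f)
    {a : Fin n} (h : ∀ j, f j < a) : k ≤ a := by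
  simpa using card_le_card_of_injOn f (s := univ) (t := Iio a) (fun j _ => by simpa using h j)
    hf.injOn

theorem add_lt_of_injective_of_forall_gt {k n : ℕ} {f : Fin k → Fin n}
    (hf : Function.Injective f) {a : Fin n} (h : ∀ j, a < f j) : a + k < n := by
  have := card_le_card_of_injOn f (s := univ) (t := Ioi a) (fun j _ => by simpa using h j)
    hf.injOn
  simp only [card_univ, Fintype.card_fin, Fin.card_Ioi] at this
  omega

end Fin

theorem Finset.card_filter_powerset_product_card_add {α : Type*} (s : Finset α) (r : ℕ) :
    #{PC ∈ s.powerset ×ˢ s.powerset | #PC.1 + #PC.2 = r} = (2 * #s).choose r := by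
  rw [two_mul, Nat.add_choose_eq, card_eq_sum_card_fiberwise (f := fun PC => (#PC.1, #PC.2))
    (t := antidiagonal r) (fun PC hPC => by simpa using (mem_filter.1 hPC).2)]
  refine sum_congr rfl fun ⟨i, j⟩ hij => ?_
  rw [← card_powersetCard, ← card_powersetCard, ← card_product]
  congr 1
  ext ⟨P, C⟩
  simp only [mem_filter, mem_product, mem_powerset, mem_powersetCard, Prod.ext_iff]
  have := mem_antidiagonal.1 hij
  constructor
  · rintro ⟨⟨⟨hP, hC⟩, -⟩, hi, hj⟩; exact ⟨⟨hP, hi⟩, hC, hj⟩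
  · rintro ⟨⟨hP, rfl⟩, hC, rfl⟩; exact ⟨⟨⟨hP, hC⟩, this⟩, rfl, rfl⟩

namespace Equiv.Perm

variable {n : ℕ}

theorem card_filter_apply (π : Equiv.Perm (Fin n)) (q : Fin n → Prop) [DecidablePred q] :
    #{i | q (π i)} = #{v | q v} :=
  card_nbij' π π.symm (fun i => by simp) (fun v => by simp) (fun i _ => by simp) fun v _ => by simp

section BlockPerm

variable {ι : Type*} (α β : Fin n → ι)

structure IsBlockPerm (π : Equiv.Perm (Fin n)) : Prop where
  label_apply : ∀ i, β (π i) = α i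
  lt_of_lt : ∀ ⦃i j⦄, α i = α j → i < j → π i < π j

variable {α β}

noncomputable def IsBlockPerm.fiberIso {π : Equiv.Perm (Fin n)} (hπ : IsBlockPerm α β π)
    (c : ι) : {i // α i = c} ≃o {v // β v = c} :=
  StrictMono.orderIsoOfSurjective (fun i => ⟨π i, (hπ.label_apply i).trans i.2⟩)
    (fun i j hij => hπ.lt_of_lt (i.2.trans j.2.symm) hij)
    fun v => ⟨⟨π.symm v, by rw [← hπ.label_apply, π.apply_symm_apply]; exact v.2⟩,
      Subtype.ext (π.apply_symm_apply v)⟩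

theorem IsBlockPerm.eq {π ρ : Equiv.Perm (Fin n)} (hπ : IsBlockPerm α β π)
    (hρ : IsBlockPerm α β ρ) : π = ρ := by
  refine Equiv.ext fun i => ?_
  exact congrArg (fun e : {j // α j = α i} ≃o {v // β v = α i} => (e ⟨i, rfl⟩ : Fin n))
    (Subsingleton.elim (hπ.fiberIso (α i)) (hρ.fiberIso (α i)))

theorem exists_isBlockPerm [DecidableEq ι]
    (h : ∀ c, Fintype.card {i // α i = c} = Fintype.card {v // β v = c}) :
    ∃ π, IsBlockPerm α β π := by
  let e c : {i // α i = c} ≃o {v // β v = c} :=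
    (monoEquivOfFin _ rfl).symm.trans (monoEquivOfFin _ (h c).symm)
  -- two labels `c = d`, so that the fibres of `i` and `j` can be identified by `rfl`
  have he : ∀ {i j : Fin n} {c d : ι} (hi : α i = c) (hj : α j = d), c = d → i < j →
      (e c ⟨i, hi⟩ : Fin n) < e d ⟨j, hj⟩ := by
    rintro i j c _ hi hj rfl hij
    exact (e c).strictMono (show (⟨i, hi⟩ : {i // α i = c}) < ⟨j, hj⟩ from hij)
  refine ⟨Equiv.ofFiberEquiv fun c => (e c).toEquiv, Equiv.ofFiberEquiv_map _, fun i j hij h => ?_⟩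
  exact he rfl rfl hij h

end BlockPerm

end Equiv.Perm

namespace HasDecSeq

variable {n : ℕ} {π : Equiv.Perm (Fin n)} {i j z : Fin n}

theorem three_of_lt {l : Fin n} (hij : i < j) (hjl : j < l) (hji : π j < π i)
    (hlj : π l < π j) : HasDecSeq π 3 :=
  ⟨![i, j, l], Fin.strictMono_iff_lt_succ.2 fun m => by fin_cases m <;> simpa,
    Fin.strictAnti_iff_succ_lt.2 fun m => by fin_cases m <;> simpa⟩

theorem apply_lt_of_lowerRight (hπ : ¬ HasDecSeq π 3) (hij : i < j) (hjz : j < z)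
    (hz : π z < π j) : π i < π j :=
  lt_of_le_of_ne (not_lt.1 fun h => hπ (three_of_lt hij hjz h hz))
    fun h => hij.ne (π.injective h)

theorem apply_lt_of_upperLeft (hπ : ¬ HasDecSeq π 3) (hzi : z < i) (hij : i < j)
    (hz : π i < π z) : π i < π j :=
  lt_of_le_of_ne (not_lt.1 fun h => hπ (three_of_lt hzi hij hz h))
    fun h => hij.ne (π.injective h)

end HasDecSeq

namespace KGood

section Patterns

variable {n k : ℕ} {π : Equiv.Perm (Fin n)}

/-- `KGood k π` unfolds to `∀ x, InPattern k π x`. -/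
def InPattern (k : ℕ) (π : Equiv.Perm (Fin n)) (x : Fin n) : Prop :=
  ∃ u v : Fin k → Fin n,
    StrictMono u ∧ StrictMono v ∧
    (StrictMono fun i => π (u i)) ∧ (StrictMono fun i => π (v i)) ∧
    (∀ i j, u i < v j) ∧ (∀ i j, π (v j) < π (u i)) ∧
    ((∃ i, u i = x) ∨ (∃ j, v j = x))

theorem lowerRight_or_upperLeft (hg : KGood k π) (p : Fin n) :
    (k ≤ (π p : ℕ) ∧ (p : ℕ) + k < n) ∨ (k ≤ (p : ℕ) ∧ (π p : ℕ) + k < n) := by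
  obtain ⟨u, v, hu, hv, hπu, hπv, huv, hvu, ⟨i, rfl⟩ | ⟨j, rfl⟩⟩ := hg p
  · exact .inl ⟨Fin.le_of_injective_of_forall_lt hπv.injective (hvu i),
      Fin.add_lt_of_injective_of_forall_gt hv.injective (huv i)⟩
  · exact .inr ⟨Fin.le_of_injective_of_forall_lt hu.injective (huv · j),
      Fin.add_lt_of_injective_of_forall_gt hπu.injective (hvu · j)⟩

theorem exists_chain (hk : 0 < k) {A : Finset (Fin n)} (hA : k ≤ #A)
    (hAπ : ∀ i ∈ A, ∀ j ∈ A, i < j → π i < π j) (x : Fin n) :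
    ∃ u : Fin k → Fin n, StrictMono u ∧ (StrictMono fun i => π (u i)) ∧ (∀ i, u i ∈ A) ∧
      (x ∈ A → ∃ i, u i = x) := by
  obtain ⟨B, hxB, hBA, hB⟩ := exists_subsuperset_card_eq (filter_subset (· = x) A)
    ((card_le_one.2 fun a ha b hb => by simp_all).trans hk) hA
  have hmem (i : Fin k) : B.orderEmbOfFin hB i ∈ A := hBA (orderEmbOfFin_mem B hB i)
  refine ⟨B.orderEmbOfFin hB, (B.orderEmbOfFin hB).strictMono,
    fun i j hij => hAπ _ (hmem i) _ (hmem j) ((B.orderEmbOfFin hB).strictMono hij), hmem,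
    fun hx => ?_⟩
  rw [← Set.mem_range, range_orderEmbOfFin]
  exact hxB (by simpa using hx)

theorem inPattern_of_chains (hk : 0 < k) {A B : Finset (Fin n)} (m : ℕ) (hA : k ≤ #A)
    (hB : k ≤ #B) (hAπ : ∀ i ∈ A, ∀ j ∈ A, i < j → π i < π j)
    (hBπ : ∀ i ∈ B, ∀ j ∈ B, i < j → π i < π j)
    (hAm : ∀ i ∈ A, (i : ℕ) ≤ m ∧ m ≤ (π i : ℕ)) (hBm : ∀ j ∈ B, m ≤ (j : ℕ) ∧ (π j : ℕ) ≤ m)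
    (hAB : Disjoint A B) {x : Fin n} (hx : x ∈ A ∨ x ∈ B) : InPattern k π x := by
  obtain ⟨u, hu, hπu, huA, hxu⟩ := exists_chain hk hA hAπ x
  obtain ⟨v, hv, hπv, hvB, hxv⟩ := exists_chain hk hB hBπ x
  have hne (i j) : u i ≠ v j := fun h => disjoint_left.1 hAB (huA i) (h ▸ hvB j)
  refine ⟨u, v, hu, hv, hπu, hπv, fun i j => ?_, fun i j => ?_, hx.imp hxu hxv⟩
  · have := hAm _ (huA i); have := hBm _ (hvB j); have := hne i j; omega
  · have := hAm _ (huA i); have := hBm _ (hvB j); have := π.injective.ne (hne i j); omega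

end Patterns

section Staircase

variable {k : ℕ}

def window (k : ℕ) : Finset (Fin (3 * k + 1)) := {i | k ≤ (i : ℕ) ∧ (i : ℕ) ≤ 2 * k}

theorem card_window (k : ℕ) : #(window k) = k + 1 := by
  have : window k = ({i | k ≤ (i : ℕ) ∧ (i : ℕ) < 2 * k + 1} : Finset (Fin (3 * k + 1))) := by
    ext i; simp only [window, mem_filter, mem_univ, true_and]; omega
  rw [this, Fin.card_filter_val_Ico (by omega)]
  omega

def codes (k : ℕ) : Finset (Finset (Fin (3 * k + 1)) × Finset (Fin (3 * k + 1))) :=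
  {PC ∈ (window k).powerset ×ˢ (window k).powerset | #PC.1 + #PC.2 = k + 1}

theorem mem_codes {P C : Finset (Fin (3 * k + 1))} :
    (P, C) ∈ codes k ↔ P ⊆ window k ∧ C ⊆ window k ∧ #P + #C = k + 1 := by
  simp [codes, and_assoc]

theorem card_codes (k : ℕ) : #(codes k) = (2 * (k + 1)).choose (k + 1) := by
  rw [codes, card_filter_powerset_product_card_add, card_window]

-- The blocks of a staircase with code `(P, C)`: `0` the first `k` positions, `1` the positions
-- in `P`, `2` the other positions before `2k + #P`, `3` the final positions; `valLabel` gives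
-- the values each block is mapped onto.
def posLabel (k : ℕ) (P : Finset (Fin (3 * k + 1))) (i : Fin (3 * k + 1)) : Fin 4 :=
  if (i : ℕ) < k then 0 else if i ∈ P then 1 else if (i : ℕ) < 2 * k + #P then 2 else 3

def valLabel (k : ℕ) (P C : Finset (Fin (3 * k + 1))) (v : Fin (3 * k + 1)) : Fin 4 :=
  if 3 * k < (v : ℕ) + #P then 1 else if (v : ℕ) < k then 2 else if v ∈ C then 3 else 0

abbrev IsStaircase (k : ℕ) (P C : Finset (Fin (3 * k + 1))) (π : Equiv.Perm (Fin (3 * k + 1))) :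
    Prop :=
  π.IsBlockPerm (posLabel k P) (valLabel k P C)

variable {P C : Finset (Fin (3 * k + 1))} {i v : Fin (3 * k + 1)}

theorem le_of_mem_window (hi : i ∈ window k) : k ≤ (i : ℕ) ∧ (i : ℕ) ≤ 2 * k := by
  simpa [window] using hi

theorem card_le_of_subset_window (hP : P ⊆ window k) : #P ≤ k + 1 :=
  card_window k ▸ card_le_card hP

theorem posLabel_eq_zero_iff : posLabel k P i = 0 ↔ (i : ℕ) < k := by
  unfold posLabel; split_ifs <;> simp_all

theorem posLabel_eq_one_iff (hP : P ⊆ window k) : posLabel k P i = 1 ↔ i ∈ P := by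
  have := fun hi : i ∈ P => (le_of_mem_window (hP hi)).1
  unfold posLabel; split_ifs <;> grind

theorem posLabel_eq_two_iff :
    posLabel k P i = 2 ↔ k ≤ (i : ℕ) ∧ i ∉ P ∧ (i : ℕ) < 2 * k + #P := by
  unfold posLabel; split_ifs <;> grind

theorem posLabel_eq_three_iff (hP : P ⊆ window k) :
    posLabel k P i = 3 ↔ 2 * k + #P ≤ (i : ℕ) := by
  have h1 := fun hi : i ∈ P => (le_of_mem_window (hP hi)).2
  have h2 : i ∈ P → 0 < #P := fun hi => card_pos.2 ⟨i, hi⟩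
  unfold posLabel; split_ifs <;> grind

theorem valLabel_eq_one_iff : valLabel k P C v = 1 ↔ 3 * k < (v : ℕ) + #P := by
  unfold valLabel; split_ifs <;> grind

theorem valLabel_eq_two_iff (hP : P ⊆ window k) : valLabel k P C v = 2 ↔ (v : ℕ) < k := by
  have := card_le_of_subset_window hP
  unfold valLabel; split_ifs <;> grind

theorem valLabel_eq_three_iff (hPC : (P, C) ∈ codes k) : valLabel k P C v = 3 ↔ v ∈ C := by
  obtain ⟨-, hC, hcard⟩ := mem_codes.1 hPC
  have h1 := fun hv : v ∈ C => le_of_mem_window (hC hv)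
  have h2 : v ∈ C → 0 < #C := fun hv => card_pos.2 ⟨v, hv⟩
  unfold valLabel; split_ifs <;> grind

theorem card_posLabel_eq (hPC : (P, C) ∈ codes k) (c : Fin 4) :
    Fintype.card {i // posLabel k P i = c} = Fintype.card {v // valLabel k P C v = c} := by
  obtain ⟨hP, hC, hcard⟩ := mem_codes.1 hPC
  have hp := card_le_of_subset_window hP
  have h1 : #{i | posLabel k P i = 1} = #{v | valLabel k P C v = 1} := by
    simp only [posLabel_eq_one_iff hP, valLabel_eq_one_iff, filter_mem_eq_inter, univ_inter,
      Fin.card_filter_lt_val_add (show #P ≤ 3 * k + 1 by omega)]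
  have h2 : #{i | posLabel k P i = 2} = #{v | valLabel k P C v = 2} := by
    set I : Finset (Fin (3 * k + 1)) := {i | k ≤ (i : ℕ) ∧ (i : ℕ) < 2 * k + #P}
    have hsub : P ⊆ I := fun i hi => by
      have := le_of_mem_window (hP hi)
      have : 0 < #P := card_pos.2 ⟨i, hi⟩
      simp only [I, mem_filter, mem_univ, true_and]; omega
    have : ({i | k ≤ (i : ℕ) ∧ i ∉ P ∧ (i : ℕ) < 2 * k + #P} : Finset (Fin (3 * k + 1))) =
        I \ P := by
      ext i; simp only [I, mem_filter, mem_sdiff, mem_univ, true_and]; tauto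
    simp only [posLabel_eq_two_iff, valLabel_eq_two_iff hP, Fin.card_filter_val_lt, this,
      card_sdiff_of_subset hsub, I,
      Fin.card_filter_val_Ico (show 2 * k + #P ≤ 3 * k + 1 by omega)]
    omega
  have h3 : #{i | posLabel k P i = 3} = #{v | valLabel k P C v = 3} := by
    simp only [posLabel_eq_three_iff hP, valLabel_eq_three_iff hPC, filter_mem_eq_inter,
      univ_inter, Fin.card_filter_le_val]
    omega
  -- the sizes of the blocks labelled `0` agree because all blocks together have `3k + 1` elements
  have hsum (f : Fin (3 * k + 1) → Fin 4) : ∑ c, #{i | f i = c} = 3 * k + 1 := by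
    simpa using (card_eq_sum_card_fiberwise (f := f) (s := univ) (t := univ) (by simp)).symm
  have hα := hsum (posLabel k P)
  have hβ := hsum (valLabel k P C)
  simp only [Fin.sum_univ_four] at hα hβ
  simp only [Fintype.card_subtype]
  fin_cases c <;> simp <;> omega

theorem exists_isStaircase (hPC : (P, C) ∈ codes k) : ∃ π, IsStaircase k P C π :=
  Equiv.Perm.exists_isBlockPerm (card_posLabel_eq hPC)

end Staircase

section StaircaseSound

variable {k : ℕ} {P C : Finset (Fin (3 * k + 1))} {π : Equiv.Perm (Fin (3 * k + 1))}
  {i j : Fin (3 * k + 1)}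

theorem IsStaircase.mem_iff (h : IsStaircase k P C π) (hP : P ⊆ window k) :
    i ∈ P ↔ 3 * k < (π i : ℕ) + #P := by
  rw [← posLabel_eq_one_iff hP, ← h.label_apply, valLabel_eq_one_iff]

theorem IsStaircase.apply_lt_iff (h : IsStaircase k P C π) (hP : P ⊆ window k) :
    (π i : ℕ) < k ↔ k ≤ (i : ℕ) ∧ i ∉ P ∧ (i : ℕ) < 2 * k + #P := by
  rw [← posLabel_eq_two_iff, ← h.label_apply, valLabel_eq_two_iff hP]

theorem IsStaircase.apply_mem_iff (h : IsStaircase k P C π) (hPC : (P, C) ∈ codes k) :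
    π i ∈ C ↔ 2 * k + #P ≤ (i : ℕ) := by
  rw [← posLabel_eq_three_iff (mem_codes.1 hPC).1, ← h.label_apply, valLabel_eq_three_iff hPC]

theorem IsStaircase.le_apply_of_mem (h : IsStaircase k P C π) (hP : P ⊆ window k) (hi : i ∈ P) :
    2 * k ≤ (π i : ℕ) := by
  have := (h.mem_iff hP).1 hi
  have := card_le_of_subset_window hP
  omega

theorem IsStaircase.apply_le_of_notMem (h : IsStaircase k P C π) (hPC : (P, C) ∈ codes k)
    (hi : k ≤ (i : ℕ)) (hiP : i ∉ P) : (π i : ℕ) ≤ 2 * k := by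
  obtain ⟨hP, hC, -⟩ := mem_codes.1 hPC
  by_cases hlow : (i : ℕ) < 2 * k + #P
  · have := (h.apply_lt_iff hP).2 ⟨hi, hiP, hlow⟩; omega
  · exact (le_of_mem_window (hC ((h.apply_mem_iff hPC).2 (by omega)))).2

theorem IsStaircase.apply_lt_apply_of_lt_or_mem (h : IsStaircase k P C π) (hP : P ⊆ window k)
    (hi : (i : ℕ) < k ∨ i ∈ P) (hj : (j : ℕ) < k ∨ j ∈ P) (hij : i < j) : π i < π j := by
  have hPk : ∀ {i}, i ∈ P → k ≤ (i : ℕ) := fun hi => (le_of_mem_window (hP hi)).1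
  rcases hj with hj | hj
  · exact h.lt_of_lt (by rw [posLabel_eq_zero_iff.2 hj, posLabel_eq_zero_iff.2 (by omega)]) hij
  rcases hi with hi | hi
  · have h1 := (h.mem_iff hP).1 hj
    have h2 := (h.mem_iff (i := i) hP).not.1 fun hi' => by have := hPk hi'; omega
    rw [Fin.lt_def]; omega
  · exact h.lt_of_lt (by rw [(posLabel_eq_one_iff hP).2 hi, (posLabel_eq_one_iff hP).2 hj]) hij

theorem IsStaircase.apply_lt_apply_of_notMem (h : IsStaircase k P C π) (hPC : (P, C) ∈ codes k)
    (hi : k ≤ (i : ℕ) ∧ i ∉ P) (hj : k ≤ (j : ℕ) ∧ j ∉ P) (hij : i < j) : π i < π j := by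
  obtain ⟨hP, hC, -⟩ := mem_codes.1 hPC
  by_cases hj2 : (j : ℕ) < 2 * k + #P
  · exact h.lt_of_lt (by rw [posLabel_eq_two_iff.2 ⟨hi.1, hi.2, by omega⟩,
      posLabel_eq_two_iff.2 ⟨hj.1, hj.2, hj2⟩]) hij
  by_cases hi2 : (i : ℕ) < 2 * k + #P
  · have := (h.apply_lt_iff hP).2 ⟨hi.1, hi.2, hi2⟩
    have := (le_of_mem_window (hC ((h.apply_mem_iff (i := j) hPC).2 (not_lt.1 hj2)))).1
    rw [Fin.lt_def]; omega
  · exact h.lt_of_lt (by rw [(posLabel_eq_three_iff hP).2 (not_lt.1 hi2),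
      (posLabel_eq_three_iff hP).2 (not_lt.1 hj2)]) hij

theorem IsStaircase.not_hasDecSeq (h : IsStaircase k P C π) (hPC : (P, C) ∈ codes k) :
    ¬ HasDecSeq π 3 := by
  obtain ⟨hP, -, -⟩ := mem_codes.1 hPC
  rintro ⟨q, hq, hπq⟩
  have hij : q 0 < q 1 := hq (by decide)
  have hjl : q 1 < q 2 := hq (by decide)
  have hji : π (q 1) < π (q 0) := hπq (by decide)
  have hlj : π (q 2) < π (q 1) := hπq (by decide)
  -- the middle point of a `321` would lie in the same increasing block as one of the others
  by_cases hj : (q 1 : ℕ) < k ∨ q 1 ∈ P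
  · have hi : (q 0 : ℕ) < k ∨ q 0 ∈ P := by
      rcases hj with hj | hj
      · exact .inl (by omega)
      · have := (h.mem_iff hP).1 hj
        exact .inr ((h.mem_iff hP).2 (by rw [Fin.lt_def] at hji; omega))
    exact (h.apply_lt_apply_of_lt_or_mem hP hi hj hij).asymm hji
  · simp only [not_or, not_lt] at hj
    have hl : q 2 ∉ P := fun hl => by
      have := (le_of_mem_window (hP hl)).2
      have : 0 < #P := card_pos.2 ⟨_, hl⟩
      have := (h.apply_lt_iff hP).2 ⟨hj.1, hj.2, by omega⟩
      exact ((h.apply_lt_iff hP).1 (by rw [Fin.lt_def] at hlj; omega)).2.1 hl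
    exact (h.apply_lt_apply_of_notMem hPC hj ⟨by omega, hl⟩ hjl).asymm hlj

theorem IsStaircase.inPattern_of_lt (h : IsStaircase k P C π) (hPC : (P, C) ∈ codes k)
    (hk : 0 < k) {x : Fin (3 * k + 1)} (hx : (x : ℕ) < k ∨ (π x : ℕ) < k) : InPattern k π x := by
  obtain ⟨hP, -, -⟩ := mem_codes.1 hPC
  have hlow : ∀ {i}, (π i : ℕ) < k → k ≤ (i : ℕ) ∧ i ∉ P := fun hi =>
    ((h.apply_lt_iff hP).1 hi).imp_right And.left
  refine inPattern_of_chains hk (A := {i | (i : ℕ) < k}) (B := {j | (π j : ℕ) < k}) k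
    (by simp only [Fin.card_filter_val_lt]; omega)
    (by rw [π.card_filter_apply fun v => (v : ℕ) < k, Fin.card_filter_val_lt]; omega)
    (fun i hi j hj hij => h.apply_lt_apply_of_lt_or_mem hP (.inl (by simpa using hi))
      (.inl (by simpa using hj)) hij)
    (fun i hi j hj hij => h.apply_lt_apply_of_notMem hPC (hlow (by simpa using hi))
      (hlow (by simpa using hj)) hij)
    (fun i hi => ?_) (fun j hj => ?_) (disjoint_filter.2 fun i _ hi hi' => ?_) (by simpa using hx)
  · simp only [mem_filter, mem_univ, true_and] at hi
    exact ⟨hi.le, not_lt.1 fun hi' => by have := (hlow hi').1; omega⟩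
  · simp only [mem_filter, mem_univ, true_and] at hj
    exact ⟨(hlow hj).1, hj.le⟩
  · have := (hlow hi').1; omega

theorem IsStaircase.inPattern_of_mem_or_le (h : IsStaircase k P C π) (hPC : (P, C) ∈ codes k)
    (hk : 0 < k) {x : Fin (3 * k + 1)} (hx : x ∈ P ∨ 2 * k + #P ≤ (x : ℕ)) : InPattern k π x := by
  obtain ⟨hP, -, -⟩ := mem_codes.1 hPC
  have hPw : ∀ {i}, i ∈ P → k ≤ (i : ℕ) ∧ (i : ℕ) ≤ 2 * k := fun hi => le_of_mem_window (hP hi)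
  have hlate : ∀ {j : Fin (3 * k + 1)}, 2 * k < (j : ℕ) → j ∉ P := fun hj hjP => by
    have := (hPw hjP).2; omega
  refine inPattern_of_chains hk (A := {i | ((i : ℕ) < k ∨ i ∈ P) ∧ 2 * k ≤ (π i : ℕ)})
    (B := {j | 2 * k ≤ (j : ℕ) ∧ j ∉ P}) (2 * k) ?_ ?_
    (fun i hi j hj hij => h.apply_lt_apply_of_lt_or_mem hP (mem_filter.1 hi).2.1
      (mem_filter.1 hj).2.1 hij)
    (fun i hi j hj hij => h.apply_lt_apply_of_notMem hPC
      ⟨by have := (mem_filter.1 hi).2; omega, (mem_filter.1 hi).2.2⟩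
      ⟨by have := (mem_filter.1 hj).2; omega, (mem_filter.1 hj).2.2⟩ hij)
    (fun i hi => ?_) (fun j hj => ?_) (disjoint_filter.2 fun i _ hi hi' => ?_) ?_
  · calc k = #{i | 2 * k < (π i : ℕ)} := by
          rw [π.card_filter_apply fun v => 2 * k < (v : ℕ), Fin.card_filter_lt_val]; omega
      _ ≤ _ := card_le_card fun i hi => by
          simp only [mem_filter, mem_univ, true_and] at hi ⊢
          refine ⟨or_iff_not_imp_right.2 fun hiP => not_le.1 fun hik => ?_, hi.le⟩
          have := h.apply_le_of_notMem hPC hik hiP; omega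
  · calc k = #{j : Fin (3 * k + 1) | 2 * k < (j : ℕ)} := by rw [Fin.card_filter_lt_val]; omega
      _ ≤ _ := card_le_card fun j hj => by
          simp only [mem_filter, mem_univ, true_and] at hj ⊢
          exact ⟨hj.le, hlate hj⟩
  · simp only [mem_filter, mem_univ, true_and] at hi
    exact ⟨by rcases hi.1 with hi | hi <;> [omega; exact (hPw hi).2], hi.2⟩
  · simp only [mem_filter, mem_univ, true_and] at hj
    exact ⟨hj.1, h.apply_le_of_notMem hPC (by omega) hj.2⟩
  · rcases hi.1 with hi | hi <;> [omega; exact hi'.2 hi]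
  · simp only [mem_filter, mem_univ, true_and]
    rcases hx with hx | hx
    · exact .inl ⟨.inr hx, h.le_apply_of_mem hP hx⟩
    · have : x ∉ P := fun hxP => by
        have := (hPw hxP).2; have : 0 < #P := card_pos.2 ⟨x, hxP⟩; omega
      exact .inr ⟨by omega, this⟩

theorem IsStaircase.kGood (h : IsStaircase k P C π) (hPC : (P, C) ∈ codes k) (hk : 0 < k) :
    KGood k π := fun x => by
  by_cases hx : (x : ℕ) < k ∨ (π x : ℕ) < k
  · exact h.inPattern_of_lt hPC hk hx
  · simp only [not_or, not_lt] at hx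
    refine h.inPattern_of_mem_or_le hPC hk (or_iff_not_imp_left.2 fun hxP => not_lt.1 fun hx' => ?_)
    have := (h.apply_lt_iff (i := x) (mem_codes.1 hPC).1).2 ⟨hx.1, hxP, hx'⟩
    omega

end StaircaseSound

section Completeness

variable {k : ℕ} {π : Equiv.Perm (Fin (3 * k + 1))} {i j : Fin (3 * k + 1)}

def topPos (π : Equiv.Perm (Fin (3 * k + 1))) : Finset (Fin (3 * k + 1)) :=
  {i | k ≤ (i : ℕ) ∧ (i : ℕ) ≤ 2 * k ∧ 2 * k ≤ (π i : ℕ)}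

def finalVals (π : Equiv.Perm (Fin (3 * k + 1))) : Finset (Fin (3 * k + 1)) :=
  {v | 2 * k + #(topPos π) ≤ (π.symm v : ℕ)}

theorem mem_topPos : i ∈ topPos π ↔ k ≤ (i : ℕ) ∧ (i : ℕ) ≤ 2 * k ∧ 2 * k ≤ (π i : ℕ) := by
  simp [topPos]

theorem apply_mem_finalVals : π i ∈ finalVals π ↔ 2 * k + #(topPos π) ≤ (i : ℕ) := by
  simp [finalVals]

theorem topPos_subset_window : topPos π ⊆ window k := fun i hi => by
  simp only [window, mem_filter, mem_univ, true_and]; have := mem_topPos.1 hi; omega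

/-- `π` avoids `321` and has no point in the lower-left or in the upper-right `k × k` corner. -/
structure IsCornerFree (k : ℕ) (π : Equiv.Perm (Fin (3 * k + 1))) : Prop where
  not_hasDecSeq : ¬ HasDecSeq π 3
  le_apply_of_lt : ∀ i : Fin (3 * k + 1), (i : ℕ) < k → k ≤ (π i : ℕ)
  apply_le_of_lt : ∀ i : Fin (3 * k + 1), 2 * k < (i : ℕ) → (π i : ℕ) ≤ 2 * k

theorem isCornerFree (hg : KGood k π) (hπ : ¬ HasDecSeq π 3) : IsCornerFree k π :=
  ⟨hπ, fun i _ => by have := hg.lowerRight_or_upperLeft i; omega, fun i _ => by have := hg.lowerRight_or_upperLeft i; omega⟩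

namespace IsCornerFree

theorem apply_lt_apply_of_lt_of_lt (h : IsCornerFree k π) (hij : i < j) (hj : (j : ℕ) < k) :
    π i < π j := by
  set z := π.symm ⟨0, by omega⟩
  have hz : (π z : ℕ) = 0 := by simp [z]
  have hzk : k ≤ (z : ℕ) := not_lt.1 fun hz' => by have := h.le_apply_of_lt z hz'; omega
  have hjz : π j ≠ π z := π.injective.ne (by omega)
  exact HasDecSeq.apply_lt_of_lowerRight h.not_hasDecSeq (z := z) hij (by omega)
    (by rw [Fin.lt_def]; omega)

theorem apply_lt_apply_of_apply_lt (h : IsCornerFree k π) (hi : (π i : ℕ) < k) (hij : i < j) :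
    π i < π j := by
  have hik : k ≤ (i : ℕ) := not_lt.1 fun hi' => by have := h.le_apply_of_lt i hi'; omega
  have := h.le_apply_of_lt ⟨0, by omega⟩ (show 0 < k by omega)
  exact HasDecSeq.apply_lt_of_upperLeft h.not_hasDecSeq (z := ⟨0, by omega⟩)
    (Fin.lt_def.2 (show 0 < (i : ℕ) by omega)) hij (by rw [Fin.lt_def]; omega)

theorem apply_lt_apply_of_two_mul_lt (h : IsCornerFree k π) (hi : 2 * k < (i : ℕ)) (hij : i < j) :
    π i < π j := by
  set t := π.symm ⟨3 * k, by omega⟩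
  have ht : (π t : ℕ) = 3 * k := by simp [t]
  have ht2 : (t : ℕ) ≤ 2 * k := not_lt.1 fun ht' => by have := h.apply_le_of_lt t ht'; omega
  have := h.apply_le_of_lt i hi
  exact HasDecSeq.apply_lt_of_upperLeft h.not_hasDecSeq (z := t) (by omega) hij
    (by rw [Fin.lt_def]; omega)

theorem apply_lt_apply_of_mem_topPos (h : IsCornerFree k π) (hj : j ∈ topPos π) (hij : i < j) :
    π i < π j := by
  have hj' := mem_topPos.1 hj
  have := h.apply_le_of_lt (Fin.last _) (by rw [Fin.val_last]; omega)
  have : π (Fin.last _) ≠ π j := π.injective.ne (by rw [Fin.ne_iff_vne, Fin.val_last]; omega)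
  exact HasDecSeq.apply_lt_of_lowerRight h.not_hasDecSeq (z := Fin.last _) hij
    (by rw [Fin.lt_def, Fin.val_last]; omega) (by rw [Fin.lt_def]; omega)

theorem mem_topPos_iff (h : IsCornerFree k π) :
    i ∈ topPos π ↔ 3 * k < (π i : ℕ) + #(topPos π) := by
  have hmp : ∀ {i}, i ∈ topPos π → 3 * k < (π i : ℕ) + #(topPos π) := fun {i} hi => by
    have hi' := mem_topPos.1 hi
    have := card_le_card (s := {x : Fin (3 * k + 1) | (π i : ℕ) ≤ (π x : ℕ)}) (t := topPos π)
      fun x hx => by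
      simp only [mem_filter, mem_univ, true_and] at hx
      rcases lt_trichotomy x i with hxi | rfl | hxi
      · exact absurd (h.apply_lt_apply_of_mem_topPos hi hxi) (by rw [Fin.lt_def]; omega)
      · exact hi
      · have : (x : ℕ) ≤ 2 * k := not_lt.1 fun hx' => by
          have := h.apply_le_of_lt x hx'
          have : π i ≠ π x := π.injective.ne hxi.ne
          omega
        exact mem_topPos.2 ⟨by omega, this, by omega⟩
    rw [π.card_filter_apply fun v => (π i : ℕ) ≤ (v : ℕ), Fin.card_filter_le_val] at this
    omega
  refine ⟨hmp, fun hi => ?_⟩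
  have hsub : topPos π ⊆ ({x | 3 * k < (π x : ℕ) + #(topPos π)} : Finset (Fin (3 * k + 1))) :=
    fun x hx => by simpa using hmp hx
  rw [eq_of_subset_of_card_le hsub (by
    rw [π.card_filter_apply fun v => 3 * k < (v : ℕ) + #(topPos π),
      Fin.card_filter_lt_val_add ((card_le_univ _).trans (by simp))])]
  simpa using hi

theorem card_filter_lt_or_apply_lt (h : IsCornerFree k π) :
    #{x : Fin (3 * k + 1) | (x : ℕ) < k ∨ (π x : ℕ) < k} = 2 * k := by
  rw [filter_or, card_union_of_disjoint (disjoint_filter.2 fun x _ hx hπx => by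
    have := h.le_apply_of_lt x hx; omega), π.card_filter_apply fun v => (v : ℕ) < k,
    Fin.card_filter_val_lt]
  omega

theorem lt_of_apply_lt_of_notMem_topPos (h : IsCornerFree k π) {l y : Fin (3 * k + 1)}
    (hy : k ≤ (y : ℕ)) (hπy : k ≤ (π y : ℕ)) (hyP : y ∉ topPos π) (hl : (π l : ℕ) < k) :
    l < y := by
  by_contra! hyl
  replace hyl : y < l := lt_of_le_of_ne hyl fun h => by subst h; omega
  by_cases hy2 : 2 * k < (y : ℕ)
  · have := h.apply_lt_apply_of_two_mul_lt hy2 hyl; rw [Fin.lt_def] at this; omega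
  have hπy2 : (π y : ℕ) < 2 * k := not_le.1 fun h' => hyP (mem_topPos.2 ⟨hy, by omega, h'⟩)
  -- as `l` lies below and to the right of `y`, all points before `y` are below `y`; so are the
  -- `k` smallest values, which leaves fewer than `k` values for the first `k` positions
  have := card_le_card (s := {x : Fin (3 * k + 1) | (x : ℕ) < k ∨ (π x : ℕ) < k})
    (t := {x : Fin (3 * k + 1) | (π x : ℕ) < (π y : ℕ)}) fun x hx => by
    simp only [mem_filter, mem_univ, true_and] at hx ⊢
    rcases hx with hx | hx
    · exact Fin.lt_def.1 (HasDecSeq.apply_lt_of_lowerRight h.not_hasDecSeq (show x < y by omega)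
        hyl (by rw [Fin.lt_def]; omega))
    · omega
  rw [h.card_filter_lt_or_apply_lt, π.card_filter_apply fun v => (v : ℕ) < (π y : ℕ),
    Fin.card_filter_val_lt] at this
  omega

theorem lt_of_notMem_topPos (h : IsCornerFree k π) {x y : Fin (3 * k + 1)} (hy : k ≤ (y : ℕ))
    (hπy : k ≤ (π y : ℕ)) (hyP : y ∉ topPos π)
    (hx : ((x : ℕ) < k ∨ (π x : ℕ) < k) ∨ x ∈ topPos π) : x < y := by
  have h2k : 2 * k ≤ (y : ℕ) := by
    have := card_le_card (s := {x : Fin (3 * k + 1) | (x : ℕ) < k ∨ (π x : ℕ) < k})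
      (t := {x : Fin (3 * k + 1) | (x : ℕ) < (y : ℕ)}) fun x hx => by
      simp only [mem_filter, mem_univ, true_and] at hx ⊢
      rcases hx with hx | hx
      · omega
      · exact Fin.lt_def.1 (h.lt_of_apply_lt_of_notMem_topPos hy hπy hyP hx)
    rw [h.card_filter_lt_or_apply_lt, Fin.card_filter_val_lt] at this
    omega
  rcases hx with (hx | hx) | hx
  · omega
  · exact h.lt_of_apply_lt_of_notMem_topPos hy hπy hyP hx
  · have := mem_topPos.1 hx
    exact lt_of_le_of_ne (by rw [Fin.le_def]; omega) fun h => hyP (h ▸ hx)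

theorem two_mul_add_card_topPos_le_iff (h : IsCornerFree k π) :
    2 * k + #(topPos π) ≤ (i : ℕ) ↔ k ≤ (i : ℕ) ∧ k ≤ (π i : ℕ) ∧ i ∉ topPos π := by
  have hS : #{x : Fin (3 * k + 1) | ((x : ℕ) < k ∨ (π x : ℕ) < k) ∨ x ∈ topPos π} =
      2 * k + #(topPos π) := by
    rw [filter_or, card_union_of_disjoint (disjoint_filter.2 fun x _ hx hxP => by
      have := mem_topPos.1 hxP; omega), h.card_filter_lt_or_apply_lt, filter_mem_eq_inter,
      univ_inter]
  constructor
  · intro hi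
    by_contra hmid
    have := card_le_card (s := {x : Fin (3 * k + 1) | (x : ℕ) < (i : ℕ) + 1})
      (t := {x : Fin (3 * k + 1) | ((x : ℕ) < k ∨ (π x : ℕ) < k) ∨ x ∈ topPos π}) fun x hx => by
      by_contra hxS
      simp only [mem_filter, mem_univ, true_and, not_or, not_lt] at hx hxS
      have := h.lt_of_notMem_topPos (x := i) hxS.1.1 hxS.1.2 hxS.2 (by
        by_contra hc
        simp only [not_or, not_lt] at hc
        exact hmid ⟨by omega, hc.1.2, hc.2⟩)
      rw [Fin.lt_def] at this; omega
    rw [hS, Fin.card_filter_val_lt] at this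
    omega
  · rintro ⟨hi, hπi, hiP⟩
    have := card_le_card
      (s := {x : Fin (3 * k + 1) | ((x : ℕ) < k ∨ (π x : ℕ) < k) ∨ x ∈ topPos π})
      (t := {x : Fin (3 * k + 1) | (x : ℕ) < (i : ℕ)}) fun x hx => by
      simpa using Fin.lt_def.1 (h.lt_of_notMem_topPos hi hπi hiP (by simpa using hx))
    rw [hS, Fin.card_filter_val_lt] at this
    omega

theorem apply_mem_window_of_le (h : IsCornerFree k π) (hi : 2 * k + #(topPos π) ≤ (i : ℕ)) :
    k ≤ (π i : ℕ) ∧ (π i : ℕ) ≤ 2 * k := by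
  obtain ⟨hik, hπi, hiP⟩ := h.two_mul_add_card_topPos_le_iff.1 hi
  refine ⟨hπi, ?_⟩
  by_cases hi2 : 2 * k < (i : ℕ)
  · exact h.apply_le_of_lt i hi2
  · exact not_lt.1 fun h' => hiP (mem_topPos.2 ⟨hik, by omega, by omega⟩)

theorem apply_lt_apply_of_le (h : IsCornerFree k π) (hi : 2 * k + #(topPos π) ≤ (i : ℕ))
    (hij : i < j) : π i < π j := by
  set t := π.symm ⟨3 * k, by omega⟩
  have ht : (π t : ℕ) = 3 * k := by simp [t]
  have := h.apply_mem_window_of_le hi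
  have hti : t < i := by
    by_contra! hit
    have ht2 : (t : ℕ) ≤ 2 * k := not_lt.1 fun ht' => by have := h.apply_le_of_lt t ht'; omega
    have htP : t ∈ topPos π := mem_topPos.2 ⟨by rw [Fin.le_def] at hit; omega, ht2, by omega⟩
    have : 0 < #(topPos π) := card_pos.2 ⟨t, htP⟩
    rw [Fin.le_def] at hit; omega
  exact HasDecSeq.apply_lt_of_upperLeft h.not_hasDecSeq hti hij (by rw [Fin.lt_def]; omega)

theorem isStaircase (h : IsCornerFree k π) : IsStaircase k (topPos π) (finalVals π) π := by
  refine ⟨fun i => ?_, fun i j hl hij => ?_⟩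
  · have h1 := h.mem_topPos_iff (i := i)
    have h2 := h.two_mul_add_card_topPos_le_iff (i := i)
    have h3 := apply_mem_finalVals (π := π) (i := i)
    have h4 := h.le_apply_of_lt i
    have h5 := fun hi : i ∈ topPos π => (mem_topPos.1 hi).1
    unfold posLabel valLabel
    split_ifs <;> grind
  · have hP := topPos_subset_window (π := π)
    generalize hc : posLabel k (topPos π) j = c at hl
    fin_cases c
    · exact h.apply_lt_apply_of_lt_of_lt hij (posLabel_eq_zero_iff.1 hc)
    · exact h.apply_lt_apply_of_mem_topPos ((posLabel_eq_one_iff hP).1 hc) hij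
    · obtain ⟨hik, hiP, hi⟩ := posLabel_eq_two_iff.1 hl
      refine h.apply_lt_apply_of_apply_lt (not_le.1 fun h' => ?_) hij
      have := h.two_mul_add_card_topPos_le_iff.2 ⟨hik, h', hiP⟩
      omega
    · exact h.apply_lt_apply_of_le ((posLabel_eq_three_iff hP).1 hl) hij

theorem mem_codes (h : IsCornerFree k π) : (topPos π, finalVals π) ∈ codes k := by
  refine KGood.mem_codes.2 ⟨topPos_subset_window, fun v hv => ?_, ?_⟩
  · have := h.apply_mem_window_of_le (i := π.symm v) (by simpa [finalVals] using hv)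
    simp only [Equiv.apply_symm_apply] at this
    simpa [window] using this
  · have := card_le_of_subset_window (topPos_subset_window (π := π))
    rw [finalVals, Equiv.Perm.card_filter_apply π.symm fun i => 2 * k + #(topPos π) ≤ (i : ℕ),
      Fin.card_filter_le_val]
    omega

end IsCornerFree

end Completeness

section Recovery

variable {k : ℕ} {P C : Finset (Fin (3 * k + 1))} {π : Equiv.Perm (Fin (3 * k + 1))}

theorem IsStaircase.topPos_eq (h : IsStaircase k P C π) (hPC : (P, C) ∈ codes k) (hk : 0 < k) :
    topPos π = P := by
  obtain ⟨hP, -, -⟩ := mem_codes.1 hPC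
  ext i
  refine ⟨fun hi => by_contra fun hiP => ?_, fun hi => mem_topPos.2
    ⟨(le_of_mem_window (hP hi)).1, (le_of_mem_window (hP hi)).2, h.le_apply_of_mem hP hi⟩⟩
  obtain ⟨hik, hi2k, hπi⟩ := mem_topPos.1 hi
  have := h.apply_le_of_notMem hPC hik hiP
  have hfin : 2 * k + #P ≤ (i : ℕ) := not_lt.1 fun hi' => by
    have := (h.apply_lt_iff hP).2 ⟨hik, hiP, hi'⟩; omega
  -- so `P = ∅` and `i = 2k`, but the next position is final too and carries a larger value
  have hj : k ≤ 2 * k + 1 ∧ (⟨2 * k + 1, by omega⟩ : Fin (3 * k + 1)) ∉ P :=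
    ⟨by omega, fun hj => by have := (le_of_mem_window (hP hj)).2; simp at this⟩
  have := Fin.lt_def.1 (h.apply_lt_apply_of_notMem hPC ⟨hik, hiP⟩ hj
    (j := ⟨2 * k + 1, by omega⟩) (Fin.lt_def.2 (show (i : ℕ) < 2 * k + 1 by omega)))
  have := h.apply_le_of_notMem hPC hj.1 hj.2
  omega

theorem IsStaircase.finalVals_eq (h : IsStaircase k P C π) (hPC : (P, C) ∈ codes k)
    (hk : 0 < k) : finalVals π = C := by
  ext v
  rw [← π.apply_symm_apply v, apply_mem_finalVals, h.topPos_eq hPC hk, h.apply_mem_iff hPC]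

end Recovery

end KGood

open KGood in
/-- For `ℓ = k + 1` as well, the number of `k`-good permutations of length
`2k + ℓ` is `C(2ℓ, ℓ) = C(2k+2, k+1)`. -/
theorem count_kGood_succ (k : ℕ) (hk : 0 < k) :
    Nat.card {π : Equiv.Perm (Fin (2 * k + (k + 1))) // ¬ HasDecSeq π 3 ∧ KGood k π} =
      Nat.choose (2 * (k + 1)) (k + 1) := by
  classical
  rw [show 2 * k + (k + 1) = 3 * k + 1 by ring, Nat.card_eq_fintype_card, Fintype.card_subtype,
    ← card_codes k]
  refine card_bij (fun π _ => (topPos π, finalVals π)) (fun π hπ => ?_) (fun π hπ ρ hρ hπρ => ?_)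
    fun PC hPC => ?_
  · obtain ⟨h321, hg⟩ := (mem_filter.1 hπ).2
    exact (hg.isCornerFree h321).mem_codes
  · obtain ⟨hπ321, hπg⟩ := (mem_filter.1 hπ).2
    obtain ⟨hρ321, hρg⟩ := (mem_filter.1 hρ).2
    have hρs := (hρg.isCornerFree hρ321).isStaircase
    obtain ⟨hP, hC⟩ := Prod.mk.inj hπρ
    rw [← hP, ← hC] at hρs
    exact (hπg.isCornerFree hπ321).isStaircase.eq hρs
  · obtain ⟨π, hπ⟩ := exists_isStaircase hPC
    exact ⟨π, mem_filter.2 ⟨mem_univ _, hπ.not_hasDecSeq hPC, hπ.kGood hPC hk⟩,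
      by rw [hπ.topPos_eq hPC hk, hπ.finalVals_eq hPC hk]⟩
end
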